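/- arXiv:2109.13467 — 8 statements merged into one kernel-verified Lean document; each statement's English description precedes it below -/
import Mathlib

section
/- Let μ_f, μ_g ≥ 0 and let f : ℝ^m → ℝ, g : ℝ^n → ℝ be differentiable convex functions satisfying f(x₁) − f(x₂) − ⟪∇f(x₂), x₁ − x₂⟫ ≥ (μ_f/2)‖x₁ − x₂‖² and g(y₁) − g(y₂) − ⟪∇g(y₂), y₁ − y₂⟫ ≥ (μ_g/2)‖y₁ − y₂‖² for all points. Let (x*, y*, λ*) satisfy ∇f(x*) + Aᵀλ* = 0, ∇g(y*) + Bᵀλ* = 0 and Ax* + By* = b. Suppose θ, γ, β : [0,∞) → ℝ solve θ' = −θ, γ' = μ_f − γ, β' = μ_g − β with θ(0) = 1, γ(0) = γ₀ > 0, β(0) = β₀ > 0, and x, v : [0,∞) → ℝ^m, y, w : [0,∞) → ℝ^n, λ : [0,∞) → ℝ^r are continuously differentiable with x' = v − x, γ v' = μ_f(x − v) − (∇f(x) + Aᵀλ), θ λ' = Av + Bw − b, β w' = μ_g(y − w) − (∇g(y) + Bᵀλ), y' = w − y. Define E(t) = f(x(t)) + g(y(t)) + ⟪λ*, Ax(t)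 + By(t) − b⟫ − f(x*) − g(y*) + (γ(t)/2)‖v(t) − x*‖² + (β(t)/2)‖w(t) − y*‖² + (θ(t)/2)‖λ(t) − λ*‖². Then for every t ≥ 0 one has (d/dt)E(t) ≤ −E(t) − (μ_f/2)‖x'(t)‖² − (μ_g/2)‖y'(t)‖². -/
set_option maxHeartbeats 1000000


open Real
open scoped RealInnerProductSpace

/-- Lyapunov differential inequality for the accelerated primal-dual dynamical
system for `min f(x) + g(y)  s.t.  Ax + By = b` (smooth unconstrained case). -/
theorem lyapunov_derivative_inequality
    {m n r : ℕ}
    (μf μg γ0 β0 : ℝ) (hμf : 0 ≤ μf) (hμg : 0 ≤ μg) (hγ0 : 0 < γ0) (hβ0 : 0 < β0)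
    (f : EuclideanSpace ℝ (Fin m) → ℝ) (g : EuclideanSpace ℝ (Fin n) → ℝ)
    (f' : EuclideanSpace ℝ (Fin m) → EuclideanSpace ℝ (Fin m))
    (g' : EuclideanSpace ℝ (Fin n) → EuclideanSpace ℝ (Fin n))
    (hf' : ∀ z, HasGradientAt f (f' z) z)
    (hg' : ∀ z, HasGradientAt g (g' z) z)
    (hfconv : ConvexOn ℝ Set.univ f) (hgconv : ConvexOn ℝ Set.univ g)
    (hfsc : ∀ x₁ x₂, f x₁ - f x₂ - ⟪f' x₂, x₁ - x₂⟫ ≥ μf / 2 * ‖x₁ - x₂‖ ^ 2)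
    (hgsc : ∀ y₁ y₂, g y₁ - g y₂ - ⟪g' y₂, y₁ - y₂⟫ ≥ μg / 2 * ‖y₁ - y₂‖ ^ 2)
    (A : EuclideanSpace ℝ (Fin m) →L[ℝ] EuclideanSpace ℝ (Fin r))
    (B : EuclideanSpace ℝ (Fin n) →L[ℝ] EuclideanSpace ℝ (Fin r))
    (b : EuclideanSpace ℝ (Fin r))
    (xs : EuclideanSpace ℝ (Fin m)) (ys : EuclideanSpace ℝ (Fin n))
    (ls : EuclideanSpace ℝ (Fin r))
    (hxs : f' xs + A.adjoint ls = 0) (hys : g' ys + B.adjoint ls = 0)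
    (hfeas : A xs + B ys = b)
    (θ γ β : ℝ → ℝ)
    (hθde : ∀ t, 0 ≤ t → HasDerivAt θ (-θ t) t)
    (hγde : ∀ t, 0 ≤ t → HasDerivAt γ (μf - γ t) t)
    (hβde : ∀ t, 0 ≤ t → HasDerivAt β (μg - β t) t)
    (hθ0 : θ 0 = 1) (hγ00 : γ 0 = γ0) (hβ00 : β 0 = β0)
    (x v : ℝ → EuclideanSpace ℝ (Fin m)) (y w : ℝ → EuclideanSpace ℝ (Fin n))
    (lam : ℝ → EuclideanSpace ℝ (Fin r))
    (vd : ℝ → EuclideanSpace ℝ (Fin m)) (wd : ℝ → EuclideanSpace ℝ (Fin n))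
    (ld : ℝ → EuclideanSpace ℝ (Fin r))
    (hx : ∀ t, 0 ≤ t → HasDerivAt x (v t - x t) t)
    (hv : ∀ t, 0 ≤ t → HasDerivAt v (vd t) t)
    (hveq : ∀ t, 0 ≤ t → γ t • vd t = μf • (x t - v t) - (f' (x t) + A.adjoint (lam t)))
    (hl : ∀ t, 0 ≤ t → HasDerivAt lam (ld t) t)
    (hleq : ∀ t, 0 ≤ t → θ t • ld t = A (v t) + B (w t) - b)
    (hw : ∀ t, 0 ≤ t → HasDerivAt w (wd t) t)
    (hweq : ∀ t, 0 ≤ t → β t • wd t = μg • (y t - w t) - (g' (y t) + B.adjoint (lam t)))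
    (hy : ∀ t, 0 ≤ t → HasDerivAt y (w t - y t) t)
    (E : ℝ → ℝ)
    (hE : ∀ t, E t =
      f (x t) + g (y t) + ⟪ls, A (x t) + B (y t) - b⟫ - f xs - g ys
        + γ t / 2 * ‖v t - xs‖ ^ 2 + β t / 2 * ‖w t - ys‖ ^ 2
        + θ t / 2 * ‖lam t - ls‖ ^ 2) :
    ∀ t, 0 ≤ t → ∀ d : ℝ, HasDerivAt E d t →
      d ≤ -E t - μf / 2 * ‖v t - x t‖ ^ 2 - μg / 2 * ‖w t - y t‖ ^ 2 := by
  
  intro t ht d hd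
  have hxt := hx t ht
  have hyt := hy t ht
  have hvt := hv t ht
  have hwt := hw t ht
  have hlt := hl t ht
  have hθt := hθde t ht
  have hγt := hγde t ht
  have hβt := hβde t ht
  -- rewrite E with inner products instead of norms
  have hEfun : E = fun s =>
      f (x s) + g (y s) + ⟪ls, A (x s) + B (y s) - b⟫ - f xs - g ys
        + γ s / 2 * ⟪v s - xs, v s - xs⟫ + β s / 2 * ⟪w s - ys, w s - ys⟫
        + θ s / 2 * ⟪lam s - ls, lam s - ls⟫ := by
    funext s; rw [hE s]; simp only [real_inner_self_eq_norm_sq]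
  have h1 : HasDerivAt (fun s => f (x s)) ⟪f' (x t), v t - x t⟫ t := by
    have h1' := ((hf' (x t)).hasFDerivAt.comp_hasDerivAt t hxt); simp at h1'; exact h1'
  have h2 : HasDerivAt (fun s => g (y s)) ⟪g' (y t), w t - y t⟫ t := by
    have h2' := ((hg' (y t)).hasFDerivAt.comp_hasDerivAt t hyt); simp at h2'; exact h2'
  have h3 : HasDerivAt (fun s => ⟪ls, A (x s) + B (y s) - b⟫)
      ⟪ls, A (v t - x t) + B (w t - y t)⟫ t := by
    simpa using HasDerivAt.inner ℝ (hasDerivAt_const t ls)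
      (((A.hasFDerivAt.comp_hasDerivAt t hxt).add
        (B.hasFDerivAt.comp_hasDerivAt t hyt)).sub_const b)
  have h4 : HasDerivAt (fun s => γ s / 2 * ⟪v s - xs, v s - xs⟫)
      ((μf - γ t) / 2 * ⟪v t - xs, v t - xs⟫
        + γ t / 2 * (⟪v t - xs, vd t⟫ + ⟪vd t, v t - xs⟫)) t :=
    (hγt.div_const 2).mul (HasDerivAt.inner ℝ (hvt.sub_const xs) (hvt.sub_const xs))
  have h5 : HasDerivAt (fun s => β s / 2 * ⟪w s - ys, w s - ys⟫)
      ((μg - β t) / 2 * ⟪w t - ys, w t - ys⟫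
        + β t / 2 * (⟪w t - ys, wd t⟫ + ⟪wd t, w t - ys⟫)) t :=
    (hβt.div_const 2).mul (HasDerivAt.inner ℝ (hwt.sub_const ys) (hwt.sub_const ys))
  have h6 : HasDerivAt (fun s => θ s / 2 * ⟪lam s - ls, lam s - ls⟫)
      ((-θ t) / 2 * ⟪lam t - ls, lam t - ls⟫
        + θ t / 2 * (⟪lam t - ls, ld t⟫ + ⟪ld t, lam t - ls⟫)) t :=
    (hθt.div_const 2).mul (HasDerivAt.inner ℝ (hlt.sub_const ls) (hlt.sub_const ls))
  have hD : HasDerivAt E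
      (⟪f' (x t), v t - x t⟫ + ⟪g' (y t), w t - y t⟫
        + ⟪ls, A (v t - x t) + B (w t - y t)⟫
        + ((μf - γ t) / 2 * ⟪v t - xs, v t - xs⟫
            + γ t / 2 * (⟪v t - xs, vd t⟫ + ⟪vd t, v t - xs⟫))
        + ((μg - β t) / 2 * ⟪w t - ys, w t - ys⟫
            + β t / 2 * (⟪w t - ys, wd t⟫ + ⟪wd t, w t - ys⟫))
        + ((-θ t) / 2 * ⟪lam t - ls, lam t - ls⟫
            + θ t / 2 * (⟪lam t - ls, ld t⟫ + ⟪ld t, lam t - ls⟫))) t := by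
    rw [hEfun]
    exact ((((((h1.add h2).add h3).sub_const (f xs)).sub_const (g ys)).add h4).add h5).add h6
  have hdeq := hd.unique hD
  -- substitutions from the dynamics
  have hsub1' : γ t * ⟪v t - xs, vd t⟫
      = μf * ⟪v t - xs, x t - v t⟫ - ⟪v t - xs, f' (x t)⟫
        - ⟪v t - xs, A.adjoint (lam t)⟫ := by
    rw [← real_inner_smul_right, hveq t ht]
    simp only [inner_sub_right, inner_add_right, real_inner_smul_right]
    ring
  have hsub1 : γ t / 2 * (⟪v t - xs, vd t⟫ + ⟪vd t, v t - xs⟫)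
      = μf * ⟪v t - xs, x t - v t⟫ - ⟪v t - xs, f' (x t)⟫
        - ⟪v t - xs, A.adjoint (lam t)⟫ := by
    rw [real_inner_comm (v t - xs) (vd t)]
    linear_combination hsub1'
  have hsub2' : β t * ⟪w t - ys, wd t⟫
      = μg * ⟪w t - ys, y t - w t⟫ - ⟪w t - ys, g' (y t)⟫
        - ⟪w t - ys, B.adjoint (lam t)⟫ := by
    rw [← real_inner_smul_right, hweq t ht]
    simp only [inner_sub_right, inner_add_right, real_inner_smul_right]
    ring
  have hsub2 : β t / 2 * (⟪w t - ys, wd t⟫ + ⟪wd t, w t - ys⟫)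
      = μg * ⟪w t - ys, y t - w t⟫ - ⟪w t - ys, g' (y t)⟫
        - ⟪w t - ys, B.adjoint (lam t)⟫ := by
    rw [real_inner_comm (w t - ys) (wd t)]
    linear_combination hsub2'
  have hsub3' : θ t * ⟪lam t - ls, ld t⟫ = ⟪lam t - ls, A (v t) + B (w t) - b⟫ := by
    rw [← real_inner_smul_right, hleq t ht]
  have hsub3 : θ t / 2 * (⟪lam t - ls, ld t⟫ + ⟪ld t, lam t - ls⟫)
      = ⟪lam t - ls, A (v t) + B (w t) - b⟫ := by
    rw [real_inner_comm (lam t - ls) (ld t)]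
    linear_combination hsub3'
  -- group identities
  have G1f : ⟪f' (x t), v t - x t⟫ - ⟪v t - xs, f' (x t)⟫ = ⟪f' (x t), xs - x t⟫ := by
    rw [real_inner_comm (f' (x t)) (v t - xs), ← inner_sub_right]
    congr 1; abel
  have G1g : ⟪g' (y t), w t - y t⟫ - ⟪w t - ys, g' (y t)⟫ = ⟪g' (y t), ys - y t⟫ := by
    rw [real_inner_comm (g' (y t)) (w t - ys), ← inner_sub_right]
    congr 1; abel
  have G2f : μf / 2 * ⟪v t - xs, v t - xs⟫ + μf * ⟪v t - xs, x t - v t⟫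
      + μf / 2 * ⟪v t - x t, v t - x t⟫ = μf / 2 * ⟪xs - x t, xs - x t⟫ := by
    rw [show xs - x t = (v t - x t) - (v t - xs) from by abel,
      show x t - v t = -(v t - x t) from by abel]
    simp only [inner_sub_left, inner_sub_right, inner_neg_right]
    linear_combination (μf / 2) * real_inner_comm xs (v t) + (μf / 2) * real_inner_comm (v t) (x t)
      - (μf / 2) * real_inner_comm xs (x t) + μf * real_inner_comm (v t) xs
      + μf * real_inner_comm (x t) (v t) - μf * real_inner_comm (x t) xs
  have G2g : μg / 2 * ⟪w t - ys, w t - ys⟫ + μg * ⟪w t - ys, y t - w t⟫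
      + μg / 2 * ⟪w t - y t, w t - y t⟫ = μg / 2 * ⟪ys - y t, ys - y t⟫ := by
    rw [show ys - y t = (w t - y t) - (w t - ys) from by abel,
      show y t - w t = -(w t - y t) from by abel]
    simp only [inner_sub_left, inner_sub_right, inner_neg_right]
    linear_combination (μg / 2) * real_inner_comm ys (w t) + (μg / 2) * real_inner_comm (w t) (y t)
      - (μg / 2) * real_inner_comm ys (y t) + μg * real_inner_comm (w t) ys
      + μg * real_inner_comm (y t) (w t) - μg * real_inner_comm (y t) ys
  have G3 : ⟪ls, A (v t - x t) + B (w t - y t)⟫ + ⟪ls, A (x t) + B (y t) - b⟫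
      - ⟪v t - xs, A.adjoint (lam t)⟫ - ⟪w t - ys, B.adjoint (lam t)⟫
      + ⟪lam t - ls, A (v t) + B (w t) - b⟫ = 0 := by
    rw [← hfeas]
    simp only [inner_add_right, inner_sub_right, inner_sub_left, map_sub,
      ContinuousLinearMap.adjoint_inner_right]
    linear_combination real_inner_comm (A (v t)) (lam t) + real_inner_comm (B (w t)) (lam t)
      - real_inner_comm (A xs) (lam t) - real_inner_comm (B ys) (lam t)
  -- strong convexity at the saddle point
  have hfineq := hfsc xs (x t)
  have hgineq := hgsc ys (y t)
  have key : d + E t + μf / 2 * ⟪v t - x t, v t - x t⟫ + μg / 2 * ⟪w t - y t, w t - y t⟫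
      = (f (x t) - f xs + ⟪f' (x t), xs - x t⟫ + μf / 2 * ⟪xs - x t, xs - x t⟫)
        + (g (y t) - g ys + ⟪g' (y t), ys - y t⟫ + μg / 2 * ⟪ys - y t, ys - y t⟫) := by
    rw [hdeq, hE t]
    simp only [← real_inner_self_eq_norm_sq]
    rw [hsub1, hsub2, hsub3]
    linear_combination G1f + G1g + G2f + G2g + G3
  have hn1 : ⟪v t - x t, v t - x t⟫ = ‖v t - x t‖ ^ 2 := real_inner_self_eq_norm_sq _
  have hn2 : ⟪w t - y t, w t - y t⟫ = ‖w t - y t‖ ^ 2 := real_inner_self_eq_norm_sq _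
  have hn3 : ⟪xs - x t, xs - x t⟫ = ‖xs - x t‖ ^ 2 := real_inner_self_eq_norm_sq _
  have hn4 : ⟪ys - y t, ys - y t⟫ = ‖ys - y t‖ ^ 2 := real_inner_self_eq_norm_sq _
  rw [hn1, hn2, hn3, hn4] at key
  linarith [hfineq, hgineq, key]
end

section
/- Let μ_f, μ_g ≥ 0 and let f : ℝ^m → ℝ, g : ℝ^n → ℝ be differentiable convex functions satisfying f(x₁) − f(x₂) − ⟪∇f(x₂), x₁ − x₂⟫ ≥ (μ_f/2)‖x₁ − x₂‖² and g(y₁) − g(y₂) − ⟪∇g(y₂), y₁ − y₂⟫ ≥ (μ_g/2)‖y₁ − y₂‖² for all points. Let (x*, y*, λ*) satisfy ∇f(x*) + Aᵀλ* = 0, ∇g(y*) + Bᵀλ* = 0 and Ax* + By* = b. Suppose θ, γ, β : [0,∞) → ℝ solve θ' = −θ, γ' = μ_f − γ, β' = μ_g − β with θ(0) = 1, γ(0) = γ₀ > 0, β(0) = β₀ > 0, and x, v : [0,∞) → ℝ^m, y, w : [0,∞) → ℝ^n, λ : [0,∞) → ℝ^r are continuously differentiable with x' = v − x, γ v' = μ_f(x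 − v) − (∇f(x) + Aᵀλ), θ λ' = Av + Bw − b, β w' = μ_g(y − w) − (∇g(y) + Bᵀλ), y' = w − y. Define E(t) = f(x(t)) + g(y(t)) + ⟪λ*, Ax(t) + By(t) − b⟫ − f(x*) − g(y*) + (γ(t)/2)‖v(t) − x*‖² + (β(t)/2)‖w(t) − y*‖² + (θ(t)/2)‖λ(t) − λ*‖². Then for all t ≥ 0: 2e^t E(t) + ∫₀^t e^s (μ_f‖x'(s)‖² + μ_g‖y'(s)‖²) ds ≤ 2E(0); in particular E(t) ≤ e^{−t} E(0). -/
open Real MeasureTheory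
open scoped RealInnerProductSpace

set_option maxHeartbeats 2000000

/-- Exponential decay (integrated form) of the Lyapunov function for the accelerated
primal-dual dynamical system for `min f(x) + g(y)  s.t.  Ax + By = b`. -/
theorem lyapunov_exponential_decay
    {m n r : ℕ}
    (μf μg γ0 β0 : ℝ) (hμf : 0 ≤ μf) (hμg : 0 ≤ μg) (hγ0 : 0 < γ0) (hβ0 : 0 < β0)
    (f : EuclideanSpace ℝ (Fin m) → ℝ) (g : EuclideanSpace ℝ (Fin n) → ℝ)
    (f' : EuclideanSpace ℝ (Fin m) → EuclideanSpace ℝ (Fin m))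
    (g' : EuclideanSpace ℝ (Fin n) → EuclideanSpace ℝ (Fin n))
    (hf' : ∀ z, HasGradientAt f (f' z) z)
    (hg' : ∀ z, HasGradientAt g (g' z) z)
    (hfconv : ConvexOn ℝ Set.univ f) (hgconv : ConvexOn ℝ Set.univ g)
    (hfsc : ∀ x₁ x₂, f x₁ - f x₂ - ⟪f' x₂, x₁ - x₂⟫ ≥ μf / 2 * ‖x₁ - x₂‖ ^ 2)
    (hgsc : ∀ y₁ y₂, g y₁ - g y₂ - ⟪g' y₂, y₁ - y₂⟫ ≥ μg / 2 * ‖y₁ - y₂‖ ^ 2)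
    (A : EuclideanSpace ℝ (Fin m) →L[ℝ] EuclideanSpace ℝ (Fin r))
    (B : EuclideanSpace ℝ (Fin n) →L[ℝ] EuclideanSpace ℝ (Fin r))
    (b : EuclideanSpace ℝ (Fin r))
    (xs : EuclideanSpace ℝ (Fin m)) (ys : EuclideanSpace ℝ (Fin n))
    (ls : EuclideanSpace ℝ (Fin r))
    (hxs : f' xs + A.adjoint ls = 0) (hys : g' ys + B.adjoint ls = 0)
    (hfeas : A xs + B ys = b)
    (θ γ β : ℝ → ℝ)
    (hθde : ∀ t, 0 ≤ t → HasDerivAt θ (-θ t) t)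
    (hγde : ∀ t, 0 ≤ t → HasDerivAt γ (μf - γ t) t)
    (hβde : ∀ t, 0 ≤ t → HasDerivAt β (μg - β t) t)
    (hθ0 : θ 0 = 1) (hγ00 : γ 0 = γ0) (hβ00 : β 0 = β0)
    (x v : ℝ → EuclideanSpace ℝ (Fin m)) (y w : ℝ → EuclideanSpace ℝ (Fin n))
    (lam : ℝ → EuclideanSpace ℝ (Fin r))
    (vd : ℝ → EuclideanSpace ℝ (Fin m)) (wd : ℝ → EuclideanSpace ℝ (Fin n))
    (ld : ℝ → EuclideanSpace ℝ (Fin r))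
    (hx : ∀ t, 0 ≤ t → HasDerivAt x (v t - x t) t)
    (hv : ∀ t, 0 ≤ t → HasDerivAt v (vd t) t)
    (hveq : ∀ t, 0 ≤ t → γ t • vd t = μf • (x t - v t) - (f' (x t) + A.adjoint (lam t)))
    (hl : ∀ t, 0 ≤ t → HasDerivAt lam (ld t) t)
    (hleq : ∀ t, 0 ≤ t → θ t • ld t = A (v t) + B (w t) - b)
    (hw : ∀ t, 0 ≤ t → HasDerivAt w (wd t) t)
    (hweq : ∀ t, 0 ≤ t → β t • wd t = μg • (y t - w t) - (g' (y t) + B.adjoint (lam t)))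
    (hy : ∀ t, 0 ≤ t → HasDerivAt y (w t - y t) t)
    (E : ℝ → ℝ)
    (hE : ∀ t, E t =
      f (x t) + g (y t) + ⟪ls, A (x t) + B (y t) - b⟫ - f xs - g ys
        + γ t / 2 * ‖v t - xs‖ ^ 2 + β t / 2 * ‖w t - ys‖ ^ 2
        + θ t / 2 * ‖lam t - ls‖ ^ 2) :
    ∀ t, 0 ≤ t →
      2 * Real.exp t * E t
          + (∫ s in (0:ℝ)..t,
              Real.exp s * (μf * ‖v s - x s‖ ^ 2 + μg * ‖w s - y s‖ ^ 2))
        ≤ 2 * E 0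
      ∧ E t ≤ Real.exp (-t) * E 0 := by
  -- derivative of the Lyapunov function
  have hEderiv : ∀ s, 0 ≤ s → HasDerivAt E
      (⟪f' (x s), v s - x s⟫ + ⟪g' (y s), w s - y s⟫
        + ⟪ls, A (v s - x s) + B (w s - y s)⟫
        + ((μf - γ s) / 2 * ‖v s - xs‖ ^ 2 + γ s * ⟪vd s, v s - xs⟫)
        + ((μg - β s) / 2 * ‖w s - ys‖ ^ 2 + β s * ⟪wd s, w s - ys⟫)
        + (-θ s / 2 * ‖lam s - ls‖ ^ 2 + θ s * ⟪ld s, lam s - ls⟫)) s := by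
    intro s hs
    have hEfun : E = fun t =>
        f (x t) + g (y t) + ⟪ls, A (x t) + B (y t) - b⟫ - f xs - g ys
          + γ t / 2 * ‖v t - xs‖ ^ 2 + β t / 2 * ‖w t - ys‖ ^ 2
          + θ t / 2 * ‖lam t - ls‖ ^ 2 := funext hE
    rw [hEfun]
    -- norm square derivatives
    have hnsq : ∀ {k : ℕ} (z : ℝ → EuclideanSpace ℝ (Fin k)) (zd c : EuclideanSpace ℝ (Fin k)),
        HasDerivAt z zd s → HasDerivAt (fun t => ‖z t - c‖ ^ 2) (2 * ⟪zd, z s - c⟫) s := by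
      intro k z zd c hz
      have h1 : HasDerivAt (fun t => z t - c) zd s := hz.sub_const c
      have h2 := h1.inner ℝ h1
      have heq : (fun t => ⟪z t - c, z t - c⟫) = fun t => ‖z t - c‖ ^ 2 := by
        funext u; rw [real_inner_self_eq_norm_sq]
      rw [heq] at h2
      convert h2 using 1
      · rfl
      · rfl
      · rw [real_inner_comm]; ring
    have h1 : HasDerivAt (fun t => f (x t)) ⟪f' (x s), v s - x s⟫ s := by
      have := (hf' (x s)).hasFDerivAt.comp_hasDerivAt s (hx s hs)
      simp at this
      exact (this : _)
    have h2 : HasDerivAt (fun t => g (y t)) ⟪g' (y s), w s - y s⟫ s := by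
      have := (hg' (y s)).hasFDerivAt.comp_hasDerivAt s (hy s hs)
      simp at this
      exact (this : _)
    have h3 : HasDerivAt (fun t => ⟪ls, A (x t) + B (y t) - b⟫)
        ⟪ls, A (v s - x s) + B (w s - y s)⟫ s := by
      have hc : HasDerivAt (fun t => A (x t) + B (y t) - b)
          (A (v s - x s) + B (w s - y s)) s :=
        ((A.hasFDerivAt.comp_hasDerivAt s (hx s hs)).add
          (B.hasFDerivAt.comp_hasDerivAt s (hy s hs))).sub_const b
      simpa using (hasDerivAt_const s ls).inner ℝ hc
    have h4 : HasDerivAt (fun t => γ t / 2 * ‖v t - xs‖ ^ 2)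
        ((μf - γ s) / 2 * ‖v s - xs‖ ^ 2 + γ s * ⟪vd s, v s - xs⟫) s := by
      have := ((hγde s hs).div_const 2).mul (hnsq v (vd s) xs (hv s hs))
      exact this.congr_deriv (by ring)
    have h5 : HasDerivAt (fun t => β t / 2 * ‖w t - ys‖ ^ 2)
        ((μg - β s) / 2 * ‖w s - ys‖ ^ 2 + β s * ⟪wd s, w s - ys⟫) s := by
      have := ((hβde s hs).div_const 2).mul (hnsq w (wd s) ys (hw s hs))
      exact this.congr_deriv (by ring)
    have h6 : HasDerivAt (fun t => θ t / 2 * ‖lam t - ls‖ ^ 2)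
        (-θ s / 2 * ‖lam s - ls‖ ^ 2 + θ s * ⟪ld s, lam s - ls⟫) s := by
      have := ((hθde s hs).div_const 2).mul (hnsq lam (ld s) ls (hl s hs))
      exact this.congr_deriv (by ring)
    exact ((((((h1.add h2).add h3).sub_const (f xs)).sub_const (g ys)).add h4).add h5).add h6
  -- the key differential inequality
  have hkey : ∀ s, 0 ≤ s →
      (⟪f' (x s), v s - x s⟫ + ⟪g' (y s), w s - y s⟫
        + ⟪ls, A (v s - x s) + B (w s - y s)⟫
        + ((μf - γ s) / 2 * ‖v s - xs‖ ^ 2 + γ s * ⟪vd s, v s - xs⟫)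
        + ((μg - β s) / 2 * ‖w s - ys‖ ^ 2 + β s * ⟪wd s, w s - ys⟫)
        + (-θ s / 2 * ‖lam s - ls‖ ^ 2 + θ s * ⟪ld s, lam s - ls⟫))
        + E s + (μf / 2 * ‖v s - x s‖ ^ 2 + μg / 2 * ‖w s - y s‖ ^ 2) ≤ 0 := by
    intro s hs
    rw [hE s]
    have hv' : γ s * ⟪vd s, v s - xs⟫
        = μf * ⟪x s - v s, v s - xs⟫ - ⟪f' (x s), v s - xs⟫ - ⟪lam s, A (v s - xs)⟫ := by
      rw [← real_inner_smul_left, hveq s hs]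
      simp only [inner_sub_left, inner_add_left, real_inner_smul_left,
        ContinuousLinearMap.adjoint_inner_left]
      ring
    have hw' : β s * ⟪wd s, w s - ys⟫
        = μg * ⟪y s - w s, w s - ys⟫ - ⟪g' (y s), w s - ys⟫ - ⟪lam s, B (w s - ys)⟫ := by
      rw [← real_inner_smul_left, hweq s hs]
      simp only [inner_sub_left, inner_add_left, real_inner_smul_left,
        ContinuousLinearMap.adjoint_inner_left]
      ring
    have hl' : θ s * ⟪ld s, lam s - ls⟫ = ⟪A (v s) + B (w s) - b, lam s - ls⟫ := by
      rw [← real_inner_smul_left, hleq s hs]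
    have hlin : ⟪ls, A (v s - x s) + B (w s - y s)⟫ + ⟪ls, A (x s) + B (y s) - b⟫
        - ⟪lam s, A (v s - xs)⟫ - ⟪lam s, B (w s - ys)⟫
        + ⟪A (v s) + B (w s) - b, lam s - ls⟫ = 0 := by
      rw [← hfeas]
      simp only [map_sub, map_add, inner_sub_left, inner_add_left,
        inner_sub_right, inner_add_right]
      simp only [real_inner_comm (lam s), real_inner_comm ls]
      ring
    have hq2f : ⟪f' (x s), v s - x s⟫ - ⟪f' (x s), v s - xs⟫ = ⟪f' (x s), xs - x s⟫ := by
      rw [← inner_sub_right]; congr 1; abel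
    have hq2g : ⟪g' (y s), w s - y s⟫ - ⟪g' (y s), w s - ys⟫ = ⟪g' (y s), ys - y s⟫ := by
      rw [← inner_sub_right]; congr 1; abel
    have hA1 : μf * ⟪x s - v s, v s - xs⟫
        = μf * ⟪x s - xs, v s - xs⟫ - μf * ‖v s - xs‖ ^ 2 := by
      have : x s - v s = (x s - xs) - (v s - xs) := by abel
      rw [this, inner_sub_left, real_inner_self_eq_norm_sq]; ring
    have hB1 : μg * ⟪y s - w s, w s - ys⟫
        = μg * ⟪y s - ys, w s - ys⟫ - μg * ‖w s - ys‖ ^ 2 := by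
      have : y s - w s = (y s - ys) - (w s - ys) := by abel
      rw [this, inner_sub_left, real_inner_self_eq_norm_sq]; ring
    have hA2 : μf * ‖v s - x s‖ ^ 2
        = μf * ‖x s - xs‖ ^ 2 - 2 * (μf * ⟪x s - xs, v s - xs⟫) + μf * ‖v s - xs‖ ^ 2 := by
      have h0 : v s - x s = (v s - xs) - (x s - xs) := by abel
      rw [h0, ← real_inner_self_eq_norm_sq, ← real_inner_self_eq_norm_sq,
        ← real_inner_self_eq_norm_sq]
      simp only [inner_sub_left, inner_sub_right, real_inner_comm]
      ring
    have hB2 : μg * ‖w s - y s‖ ^ 2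
        = μg * ‖y s - ys‖ ^ 2 - 2 * (μg * ⟪y s - ys, w s - ys⟫) + μg * ‖w s - ys‖ ^ 2 := by
      have h0 : w s - y s = (w s - ys) - (y s - ys) := by abel
      rw [h0, ← real_inner_self_eq_norm_sq, ← real_inner_self_eq_norm_sq,
        ← real_inner_self_eq_norm_sq]
      simp only [inner_sub_left, inner_sub_right, real_inner_comm]
      ring
    have hsc1 := hfsc xs (x s)
    have hsc2 := hgsc ys (y s)
    rw [norm_sub_rev] at hsc1
    rw [norm_sub_rev] at hsc2
    linarith [hsc1, hsc2, hv', hw', hl', hlin, hq2f, hq2g, hA1, hB1, hA2, hB2]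
  intro t ht
  set F : ℝ → ℝ := fun u => Real.exp u * (μf * ‖v u - x u‖ ^ 2 + μg * ‖w u - y u‖ ^ 2) with hF
  have hFcont : ∀ u : ℝ, 0 ≤ u → ContinuousAt F u := by
    intro u hu
    exact (Real.continuous_exp.continuousAt).mul
      ((continuousAt_const.mul
          ((((hv u hu).continuousAt.sub (hx u hu).continuousAt).norm).pow 2)).add
        (continuousAt_const.mul
          ((((hw u hu).continuousAt.sub (hy u hu).continuousAt).norm).pow 2)))
  have hFnonneg : ∀ u, 0 ≤ F u := by
    intro u
    rw [hF]
    positivity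
  have hFint : IntervalIntegrable F MeasureTheory.volume 0 t := by
    apply ContinuousOn.intervalIntegrable
    intro u hu
    rw [Set.uIcc_of_le ht] at hu
    exact (hFcont u hu.1).continuousWithinAt
  set Φ : ℝ → ℝ := fun s => 2 * Real.exp s * E s + ∫ u in (0:ℝ)..s, F u with hΦ
  have hΦcont : ContinuousOn Φ (Set.Icc 0 t) := by
    apply ContinuousOn.add
    · intro s hsI
      exact (((continuous_const.mul Real.continuous_exp).continuousAt).mul
        (hEderiv s hsI.1).continuousAt).continuousWithinAt
    · have h0mem : (0:ℝ) ∈ Set.uIcc 0 t := by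
        rw [Set.uIcc_of_le ht]; exact Set.left_mem_Icc.2 ht
      have := intervalIntegral.continuousOn_primitive_interval' hFint h0mem
      rwa [Set.uIcc_of_le ht] at this
  have hΦder : ∀ s ∈ Set.Ioo (0:ℝ) t, ∃ d, HasDerivAt Φ d s ∧ d ≤ 0 := by
    intro s hsI
    have hs0 : (0:ℝ) ≤ s := hsI.1.le
    have h1 : HasDerivAt (fun u => 2 * Real.exp u * E u)
        (2 * Real.exp s * E s + 2 * Real.exp s *
          (⟪f' (x s), v s - x s⟫ + ⟪g' (y s), w s - y s⟫
            + ⟪ls, A (v s - x s) + B (w s - y s)⟫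
            + ((μf - γ s) / 2 * ‖v s - xs‖ ^ 2 + γ s * ⟪vd s, v s - xs⟫)
            + ((μg - β s) / 2 * ‖w s - ys‖ ^ 2 + β s * ⟪wd s, w s - ys⟫)
            + (-θ s / 2 * ‖lam s - ls‖ ^ 2 + θ s * ⟪ld s, lam s - ls⟫))) s := by
      have := ((Real.hasDerivAt_exp s).const_mul 2).mul (hEderiv s hs0)
      exact this
    have h2 : HasDerivAt (fun u => ∫ p in (0:ℝ)..u, F p) (F s) s := by
      apply intervalIntegral.integral_hasDerivAt_right
      · apply ContinuousOn.intervalIntegrable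
        intro u hu
        rw [Set.uIcc_of_le hs0] at hu
        exact (hFcont u hu.1).continuousWithinAt
      · exact ContinuousOn.stronglyMeasurableAtFilter isOpen_Ioi
          (fun u hu => (hFcont u (le_of_lt hu)).continuousWithinAt) s hsI.1
      · exact hFcont s hs0
    refine ⟨_, h1.add h2, ?_⟩
    have hk := hkey s hs0
    have hFs : F s = Real.exp s * (μf * ‖v s - x s‖ ^ 2 + μg * ‖w s - y s‖ ^ 2) := by rw [hF]
    rw [hFs]
    nlinarith [Real.exp_pos s, hk]
  have hanti : AntitoneOn Φ (Set.Icc 0 t) := by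
    apply antitoneOn_of_deriv_nonpos (convex_Icc 0 t) hΦcont
    · intro s hsI
      rw [interior_Icc] at hsI
      obtain ⟨d, hd, _⟩ := hΦder s hsI
      exact hd.differentiableAt.differentiableWithinAt
    · intro s hsI
      rw [interior_Icc] at hsI
      obtain ⟨d, hd, hdle⟩ := hΦder s hsI
      rw [hd.deriv]
      exact hdle
  have hΦt : Φ t ≤ Φ 0 :=
    hanti (Set.left_mem_Icc.2 ht) (Set.right_mem_Icc.2 ht) ht
  have hΦ0 : Φ 0 = 2 * E 0 := by
    rw [hΦ]
    simp
  have hΦteq : Φ t = 2 * Real.exp t * E t + ∫ u in (0:ℝ)..t, F u := by rw [hΦ]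
  have hmain : 2 * Real.exp t * E t + (∫ u in (0:ℝ)..t, F u) ≤ 2 * E 0 := by
    rw [← hΦ0, ← hΦteq]
    exact hΦt
  have hInt : 0 ≤ ∫ u in (0:ℝ)..t, F u :=
    intervalIntegral.integral_nonneg ht fun u _ => hFnonneg u
  constructor
  · have : (∫ s in (0:ℝ)..t, Real.exp s * (μf * ‖v s - x s‖ ^ 2 + μg * ‖w s - y s‖ ^ 2))
        = ∫ u in (0:ℝ)..t, F u := by rw [hF]
    rw [this]
    exact hmain
  · have h1 : Real.exp t * E t ≤ E 0 := by linarith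
    calc E t = Real.exp (-t) * (Real.exp t * E t) := by
          rw [← mul_assoc, ← Real.exp_add]; simp
      _ ≤ Real.exp (-t) * E 0 := mul_le_mul_of_nonneg_left h1 (Real.exp_pos _).le
end

section
/- Fix k ∈ ℕ and α_k > 0, and let θ_{k+1} = θ_k/(1+α_k), γ_{k+1} = (γ_k + α_k μ_f)/(1+α_k), β_{k+1} = (β_k + α_k μ_g)/(1+α_k) with θ_k, γ_k, β_k > 0 and μ_f, μ_g ≥ 0. Suppose the single step of the implicit scheme holds: x_k, x_{k+1} ∈ X, y_k, y_{k+1} ∈ Y, v_k, v_{k+1} ∈ ℝ^m, w_k, w_{k+1} ∈ ℝ^n, λ_k, λ_{k+1}, λ̄_{k+1} ∈ ℝ^r satisfy conditions (i)–(v) of the implicit scheme, and (x*, y*, λ*) is a saddle point. Then E_{k+1} − E_k ≤ −α_k E_{k+1} + (θ_k/2)‖λ_{k+1} − λ̄_{k+1}‖² − (γ_k/2)‖v_{k+1} − v_k‖² − (β_k/2)‖w_{k+1} − w_k‖², where E_j = f(x_j) + g(y_j) + ⟪λ*, Ax_j + By_j − b⟫ − f(x*) − g(y*) + (γ_j/2)‖v_j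 − x*‖² + (β_j/2)‖w_j − y*‖² + (θ_j/2)‖λ_j − λ*‖² for j = k, k+1. -/
open Real
open scoped RealInnerProductSpace

set_option maxHeartbeats 2000000 in
/-- One-iteration estimate (Lemma 3.1) for the implicit discretization of the
accelerated primal-dual flow for `min f(x) + g(y)  s.t.  Ax + By = b`. -/
theorem implicit_scheme_one_step_estimate
    {m n r : ℕ}
    (X : Set (EuclideanSpace ℝ (Fin m))) (Y : Set (EuclideanSpace ℝ (Fin n)))
    (hXconv : Convex ℝ X) (hXclosed : IsClosed X)
    (hYconv : Convex ℝ Y) (hYclosed : IsClosed Y)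
    (A : EuclideanSpace ℝ (Fin m) →L[ℝ] EuclideanSpace ℝ (Fin r))
    (B : EuclideanSpace ℝ (Fin n) →L[ℝ] EuclideanSpace ℝ (Fin r))
    (b : EuclideanSpace ℝ (Fin r))
    (f : EuclideanSpace ℝ (Fin m) → ℝ) (g : EuclideanSpace ℝ (Fin n) → ℝ)
    (hfconv : ConvexOn ℝ Set.univ f) (hgconv : ConvexOn ℝ Set.univ g)
    (μf μg : ℝ) (hμf : 0 ≤ μf) (hμg : 0 ≤ μg)
    -- parameters of the step
    (αk θk γk βk θk1 γk1 βk1 : ℝ)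
    (hαk : 0 < αk) (hθk : 0 < θk) (hγk : 0 < γk) (hβk : 0 < βk)
    (hθk1 : θk1 = θk / (1 + αk))
    (hγk1 : γk1 = (γk + αk * μf) / (1 + αk))
    (hβk1 : βk1 = (βk + αk * μg) / (1 + αk))
    -- the iterates of one step of the implicit scheme
    (xk xk1 vk vk1 : EuclideanSpace ℝ (Fin m))
    (yk yk1 wk wk1 : EuclideanSpace ℝ (Fin n))
    (lk lk1 lbar : EuclideanSpace ℝ (Fin r))
    (hxk : xk ∈ X) (hxk1 : xk1 ∈ X) (hyk : yk ∈ Y) (hyk1 : yk1 ∈ Y)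
    -- (i)
    (hi : xk1 - xk = αk • (vk1 - xk1))
    -- (ii)
    (hii : ∀ z ∈ X,
      f z + ⟪lbar, A z⟫ ≥
        f xk1 + ⟪lbar, A xk1⟫
          + ⟪μf • (xk1 - vk1) - (γk / αk) • (vk1 - vk), z - xk1⟫
          + μf / 2 * ‖z - xk1‖ ^ 2)
    -- (iii)
    (hiii : θk • (lk1 - lk) = αk • (A vk1 + B wk1 - b))
    -- (iv)
    (hiv : ∀ z ∈ Y,
      g z + ⟪lbar, B z⟫ ≥
        g yk1 + ⟪lbar, B yk1⟫
          + ⟪μg • (yk1 - wk1) - (βk / αk) • (wk1 - wk), z - yk1⟫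
          + μg / 2 * ‖z - yk1‖ ^ 2)
    -- (v)
    (hv : yk1 - yk = αk • (wk1 - yk1))
    -- saddle point
    (xs : EuclideanSpace ℝ (Fin m)) (ys : EuclideanSpace ℝ (Fin n))
    (ls : EuclideanSpace ℝ (Fin r))
    (hxs : xs ∈ X) (hys : ys ∈ Y) (hfeas : A xs + B ys = b)
    (hsaddle : ∀ x ∈ X, ∀ y ∈ Y,
      f x + g y + ⟪ls, A x + B y - b⟫ ≥ f xs + g ys)
    -- Lyapunov values
    (Ek Ek1 : ℝ)
    (hEk : Ek = f xk + g yk + ⟪ls, A xk + B yk - b⟫ - f xs - g ys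
      + γk / 2 * ‖vk - xs‖ ^ 2 + βk / 2 * ‖wk - ys‖ ^ 2 + θk / 2 * ‖lk - ls‖ ^ 2)
    (hEk1 : Ek1 = f xk1 + g yk1 + ⟪ls, A xk1 + B yk1 - b⟫ - f xs - g ys
      + γk1 / 2 * ‖vk1 - xs‖ ^ 2 + βk1 / 2 * ‖wk1 - ys‖ ^ 2 + θk1 / 2 * ‖lk1 - ls‖ ^ 2) :
    Ek1 - Ek ≤ -αk * Ek1 + θk / 2 * ‖lk1 - lbar‖ ^ 2
      - γk / 2 * ‖vk1 - vk‖ ^ 2 - βk / 2 * ‖wk1 - wk‖ ^ 2 := by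
    -- basic nonvanishing facts
  have hα0 : αk ≠ 0 := ne_of_gt hαk
  have h1α : (1 : ℝ) + αk ≠ 0 := by positivity
  -- rewrite xk, yk via (i), (v)
  have hxeq : xk = xk1 - αk • (vk1 - xk1) := by rw [← hi]; abel
  have hyeq : yk = yk1 - αk • (wk1 - yk1) := by rw [← hv]; abel
  -- key vector identities
  have hvec : αk • (xs - xk1) + (xk - xk1) = αk • (xs - vk1) := by rw [hxeq]; module
  have hvecg : αk • (ys - yk1) + (yk - yk1) = αk • (ys - wk1) := by rw [hyeq]; module
  have hcomb : ∀ u : EuclideanSpace ℝ (Fin m),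
      αk * ⟪u, xs - xk1⟫ + ⟪u, xk - xk1⟫ = αk * ⟪u, xs - vk1⟫ := by
    intro u
    calc αk * ⟪u, xs - xk1⟫ + ⟪u, xk - xk1⟫
        = ⟪u, αk • (xs - xk1) + (xk - xk1)⟫ := by
          rw [inner_add_right, real_inner_smul_right]
      _ = ⟪u, αk • (xs - vk1)⟫ := by rw [hvec]
      _ = αk * ⟪u, xs - vk1⟫ := real_inner_smul_right _ _ _
  have hcombg : ∀ u : EuclideanSpace ℝ (Fin n),
      αk * ⟪u, ys - yk1⟫ + ⟪u, yk - yk1⟫ = αk * ⟪u, ys - wk1⟫ := by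
    intro u
    calc αk * ⟪u, ys - yk1⟫ + ⟪u, yk - yk1⟫
        = ⟪u, αk • (ys - yk1) + (yk - yk1)⟫ := by
          rw [inner_add_right, real_inner_smul_right]
      _ = ⟪u, αk • (ys - wk1)⟫ := by rw [hvecg]
      _ = αk * ⟪u, ys - wk1⟫ := real_inner_smul_right _ _ _
  -- primal inequalities
  have h1 := hii xs hxs
  have h2 := hii xk hxk
  have h3 := hiv ys hys
  have h4 := hiv yk hyk
  have hf1 : αk * (f xk1 + ⟪lbar, A xk1⟫
      + ⟪μf • (xk1 - vk1) - (γk / αk) • (vk1 - vk), xs - xk1⟫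
      + μf / 2 * ‖xs - xk1‖ ^ 2) ≤ αk * (f xs + ⟪lbar, A xs⟫) :=
    mul_le_mul_of_nonneg_left h1 hαk.le
  have hg1 : αk * (g yk1 + ⟪lbar, B yk1⟫
      + ⟪μg • (yk1 - wk1) - (βk / αk) • (wk1 - wk), ys - yk1⟫
      + μg / 2 * ‖ys - yk1‖ ^ 2) ≤ αk * (g ys + ⟪lbar, B ys⟫) :=
    mul_le_mul_of_nonneg_left h3 hαk.le
  -- expansion of the ⟪p, ·⟫ terms
  have e1 : ⟪xk1 - vk1, xs - vk1⟫ = -⟪xk1 - vk1, vk1 - xs⟫ := by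
    rw [show xs - vk1 = -(vk1 - xs) by abel, inner_neg_right]
  have e2 : ⟪vk1 - vk, xs - vk1⟫ = -⟪vk1 - vk, vk1 - xs⟫ := by
    rw [show xs - vk1 = -(vk1 - xs) by abel, inner_neg_right]
  have e3 : ⟪yk1 - wk1, ys - wk1⟫ = -⟪yk1 - wk1, wk1 - ys⟫ := by
    rw [show ys - wk1 = -(wk1 - ys) by abel, inner_neg_right]
  have e4 : ⟪wk1 - wk, ys - wk1⟫ = -⟪wk1 - wk, wk1 - ys⟫ := by
    rw [show ys - wk1 = -(wk1 - ys) by abel, inner_neg_right]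
  have hP : αk * ⟪μf • (xk1 - vk1) - (γk / αk) • (vk1 - vk), xs - xk1⟫
      + ⟪μf • (xk1 - vk1) - (γk / αk) • (vk1 - vk), xk - xk1⟫
      = -(αk * μf) * ⟪xk1 - vk1, vk1 - xs⟫ + γk * ⟪vk1 - vk, vk1 - xs⟫ := by
    rw [hcomb (μf • (xk1 - vk1) - (γk / αk) • (vk1 - vk))]
    rw [inner_sub_left, real_inner_smul_left, real_inner_smul_left, e1, e2]
    field_simp
    ring
  have hQ : αk * ⟪μg • (yk1 - wk1) - (βk / αk) • (wk1 - wk), ys - yk1⟫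
      + ⟪μg • (yk1 - wk1) - (βk / αk) • (wk1 - wk), yk - yk1⟫
      = -(αk * μg) * ⟪yk1 - wk1, wk1 - ys⟫ + βk * ⟪wk1 - wk, wk1 - ys⟫ := by
    rw [hcombg (μg • (yk1 - wk1) - (βk / αk) • (wk1 - wk))]
    rw [inner_sub_left, real_inner_smul_left, real_inner_smul_left, e3, e4]
    field_simp
    ring
  -- lbar linear terms
  have hvecA : αk • (A xs - A xk1) + (A xk - A xk1) = αk • (A xs - A vk1) := by
    simpa only [map_add, map_sub, map_smul] using congrArg A hvec
  have hvecB : αk • (B ys - B yk1) + (B yk - B yk1) = αk • (B ys - B wk1) := by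
    simpa only [map_add, map_sub, map_smul] using congrArg B hvecg
  have hA4 : αk * ⟪lbar, A xs⟫ + ⟪lbar, A xk⟫ - (1 + αk) * ⟪lbar, A xk1⟫
      = αk * ⟪lbar, A xs - A vk1⟫ := by
    have h : ⟪lbar, αk • (A xs - A xk1) + (A xk - A xk1)⟫
        = αk * ⟪lbar, A xs - A vk1⟫ := by
      rw [hvecA, real_inner_smul_right]
    rw [inner_add_right, real_inner_smul_right, inner_sub_right, inner_sub_right] at h
    linarith
  have hB4 : αk * ⟪lbar, B ys⟫ + ⟪lbar, B yk⟫ - (1 + αk) * ⟪lbar, B yk1⟫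
      = αk * ⟪lbar, B ys - B wk1⟫ := by
    have h : ⟪lbar, αk • (B ys - B yk1) + (B yk - B yk1)⟫
        = αk * ⟪lbar, B ys - B wk1⟫ := by
      rw [hvecB, real_inner_smul_right]
    rw [inner_add_right, real_inner_smul_right, inner_sub_right, inner_sub_right] at h
    linarith
  -- norm identities (γ and β blocks)
  have hγ5 : γk * ⟪vk1 - vk, vk1 - xs⟫
      = γk / 2 * ‖vk1 - vk‖ ^ 2 + γk / 2 * ‖vk1 - xs‖ ^ 2 - γk / 2 * ‖vk - xs‖ ^ 2 := by
    have h := norm_sub_sq_real (vk1 - vk) (vk1 - xs)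
    rw [show (vk1 - vk) - (vk1 - xs) = xs - vk by abel] at h
    rw [show ‖xs - vk‖ = ‖vk - xs‖ from norm_sub_rev _ _] at h
    linear_combination (γk / 2) * h
  have hβ5 : βk * ⟪wk1 - wk, wk1 - ys⟫
      = βk / 2 * ‖wk1 - wk‖ ^ 2 + βk / 2 * ‖wk1 - ys‖ ^ 2 - βk / 2 * ‖wk - ys‖ ^ 2 := by
    have h := norm_sub_sq_real (wk1 - wk) (wk1 - ys)
    rw [show (wk1 - wk) - (wk1 - ys) = ys - wk by abel] at h
    rw [show ‖ys - wk‖ = ‖wk - ys‖ from norm_sub_rev _ _] at h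
    linear_combination (βk / 2) * h
  have hμf8 : αk * μf * ‖xs - xk1‖ ^ 2
      = αk * μf * ‖xk1 - vk1‖ ^ 2 + 2 * (αk * μf) * ⟪xk1 - vk1, vk1 - xs⟫
        + αk * μf * ‖vk1 - xs‖ ^ 2 := by
    have h := norm_add_sq_real (xk1 - vk1) (vk1 - xs)
    rw [show (xk1 - vk1) + (vk1 - xs) = xk1 - xs by abel] at h
    rw [show ‖xs - xk1‖ = ‖xk1 - xs‖ from norm_sub_rev _ _]
    linear_combination (αk * μf) * h
  have hμg8 : αk * μg * ‖ys - yk1‖ ^ 2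
      = αk * μg * ‖yk1 - wk1‖ ^ 2 + 2 * (αk * μg) * ⟪yk1 - wk1, wk1 - ys⟫
        + αk * μg * ‖wk1 - ys‖ ^ 2 := by
    have h := norm_add_sq_real (yk1 - wk1) (wk1 - ys)
    rw [show (yk1 - wk1) + (wk1 - ys) = yk1 - ys by abel] at h
    rw [show ‖ys - yk1‖ = ‖yk1 - ys‖ from norm_sub_rev _ _]
    linear_combination (αk * μg) * h
  -- positivity facts
  have posf1 : 0 ≤ αk * μf * ‖xk1 - vk1‖ ^ 2 :=
    mul_nonneg (mul_nonneg hαk.le hμf) (sq_nonneg _)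
  have posf2 : 0 ≤ μf * ‖xk - xk1‖ ^ 2 := mul_nonneg hμf (sq_nonneg _)
  have posg1 : 0 ≤ αk * μg * ‖yk1 - wk1‖ ^ 2 :=
    mul_nonneg (mul_nonneg hαk.le hμg) (sq_nonneg _)
  have posg2 : 0 ≤ μg * ‖yk - yk1‖ ^ 2 := mul_nonneg hμg (sq_nonneg _)
  -- the multiplier (ls) linear terms
  have hAxk : A xk = A xk1 - αk • (A vk1 - A xk1) := by
    rw [hxeq]; simp [map_sub, map_smul, smul_sub]
  have hByk : B yk = B yk1 - αk • (B wk1 - B yk1) := by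
    rw [hyeq]; simp [map_sub, map_smul, smul_sub]
  have hvecLam : (1 + αk) • (A xk1 + B yk1 - b) - (A xk + B yk - b)
      = αk • (A vk1 + B wk1 - b) := by
    rw [hAxk, hByk]; module
  have hls : (1 + αk) * ⟪ls, A xk1 + B yk1 - b⟫ - ⟪ls, A xk + B yk - b⟫
      = αk * ⟪ls, A vk1 + B wk1 - b⟫ := by
    have h : ⟪ls, (1 + αk) • (A xk1 + B yk1 - b) - (A xk + B yk - b)⟫
        = ⟪ls, αk • (A vk1 + B wk1 - b)⟫ := by rw [hvecLam]
    rw [inner_sub_right, real_inner_smul_right, real_inner_smul_right] at h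
    linarith
  -- dual step identities
  have hθu : ∀ u : EuclideanSpace ℝ (Fin r),
      θk * ⟪lk1 - lk, u⟫ = αk * ⟪A vk1 + B wk1 - b, u⟫ := by
    intro u
    simpa only [real_inner_smul_left] using
      congrArg (fun v : EuclideanSpace ℝ (Fin r) => (inner ℝ v u : ℝ)) hiii
  have hθ2 := hθu (lk1 - ls)
  have hθ3 := hθu (lk1 - lbar)
  have hθ4 : αk * ⟪A vk1 + B wk1 - b, lk1 - ls⟫
      = αk * ⟪A vk1 + B wk1 - b, lk1 - lbar⟫ + αk * ⟪A vk1 + B wk1 - b, lbar - ls⟫ := by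
    have h : ⟪A vk1 + B wk1 - b, lk1 - ls⟫
        = ⟪A vk1 + B wk1 - b, lk1 - lbar⟫ + ⟪A vk1 + B wk1 - b, lbar - ls⟫ := by
      rw [← inner_add_right]
      congr 1
      abel
    linear_combination αk * h
  have hθ5 : θk * ‖lk - ls‖ ^ 2
      = θk * ‖lk1 - lk‖ ^ 2 - 2 * (θk * ⟪lk1 - lk, lk1 - ls⟫) + θk * ‖lk1 - ls‖ ^ 2 := by
    have h := norm_sub_sq_real (lk1 - lk) (lk1 - ls)
    rw [show (lk1 - lk) - (lk1 - ls) = ls - lk by abel] at h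
    rw [show ‖ls - lk‖ = ‖lk - ls‖ from norm_sub_rev _ _] at h
    linear_combination θk * h
  have hθ6 : θk * ‖lk - lbar‖ ^ 2
      = θk * ‖lk1 - lk‖ ^ 2 - 2 * (θk * ⟪lk1 - lk, lk1 - lbar⟫) + θk * ‖lk1 - lbar‖ ^ 2 := by
    have h := norm_sub_sq_real (lk1 - lk) (lk1 - lbar)
    rw [show (lk1 - lk) - (lk1 - lbar) = lbar - lk by abel] at h
    rw [show ‖lbar - lk‖ = ‖lk - lbar‖ from norm_sub_rev _ _] at h
    linear_combination θk * h
  have hθpos : 0 ≤ θk * ‖lk - lbar‖ ^ 2 := mul_nonneg hθk.le (sq_nonneg _)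
  -- global cancellation of the multiplier cross terms
  have hcanc : αk * ⟪lbar, A xs - A vk1⟫ + αk * ⟪lbar, B ys - B wk1⟫
      + αk * ⟪ls, A vk1 + B wk1 - b⟫ + αk * ⟪A vk1 + B wk1 - b, lbar - ls⟫ = 0 := by
    have hc1 : ⟪lbar, A xs - A vk1⟫ + ⟪lbar, B ys - B wk1⟫
        = -⟪lbar, A vk1 + B wk1 - b⟫ := by
      rw [← inner_add_right, ← inner_neg_right]
      congr 1
      rw [← hfeas]
      abel
    have hc2 : ⟪A vk1 + B wk1 - b, lbar - ls⟫
        = ⟪lbar, A vk1 + B wk1 - b⟫ - ⟪ls, A vk1 + B wk1 - b⟫ := by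
      rw [inner_sub_right, real_inner_comm (A vk1 + B wk1 - b) lbar,
        real_inner_comm (A vk1 + B wk1 - b) ls]
    linear_combination αk * hc1 + αk * hc2
  -- parameter identities (already multiplied through)
  have Pga : αk * (γk1 / 2 * ‖vk1 - xs‖ ^ 2) + γk1 / 2 * ‖vk1 - xs‖ ^ 2
      = (γk + αk * μf) / 2 * ‖vk1 - xs‖ ^ 2 := by
    rw [hγk1]; field_simp; ring
  have Pbe : αk * (βk1 / 2 * ‖wk1 - ys‖ ^ 2) + βk1 / 2 * ‖wk1 - ys‖ ^ 2
      = (βk + αk * μg) / 2 * ‖wk1 - ys‖ ^ 2 := by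
    rw [hβk1]; field_simp; ring
  have Pth : αk * (θk1 / 2 * ‖lk1 - ls‖ ^ 2) + θk1 / 2 * ‖lk1 - ls‖ ^ 2
      = θk / 2 * ‖lk1 - ls‖ ^ 2 := by
    rw [hθk1]; field_simp; ring
  -- scaled Lyapunov value
  have hEk1s : αk * Ek1 = αk * (f xk1 + g yk1 + ⟪ls, A xk1 + B yk1 - b⟫ - f xs - g ys
      + γk1 / 2 * ‖vk1 - xs‖ ^ 2 + βk1 / 2 * ‖wk1 - ys‖ ^ 2
      + θk1 / 2 * ‖lk1 - ls‖ ^ 2) := by rw [hEk1]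
  -- conclude
  linarith [hEk, hEk1, hEk1s, Pga, Pbe, Pth, hf1, h2, hP, hA4, hγ5, hμf8, posf1, posf2,
    hg1, h4, hQ, hB4, hβ5, hμg8, posg1, posg2, hls, hθ2, hθ3, hθ4, hθ5, hθ6, hθpos, hcanc]
end

section
/- Suppose the implicit scheme (conditions (i)–(v)) holds for all k ∈ ℕ with the semi-implicit multiplier choice λ̄_{k+1} = λ_k + (α_k/θ_k)(Av_{k+1} + Bw_k − b), parameter recursions θ₀ = 1, θ_{k+1} = θ_k/(1+α_k), γ₀ > 0, γ_{k+1} = (γ_k + α_kμ_f)/(1+α_k), β₀ > 0, β_{k+1} = (β_k + α_kμ_g)/(1+α_k), the initial setting γ₀ = μ_f whenever μ_f > 0 and β₀ = μ_g whenever μ_g > 0, and step sizes determined by α_k²‖B‖² = θ_k β_k (with ‖B‖ > 0). Let (x*, y*, λ*) be a saddle point and set E₀ = f(x₀) + g(y₀) + ⟪λ*, Ax₀ + By₀ − b⟫ − f(x*) − g(y*) + (γ₀/2)‖v₀ − x*‖² + (β₀/2)‖w₀ − y*‖² + (1/2)‖λ₀ − λ*‖² and R₀ = √(2E₀) + ‖λ₀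 − λ*‖ + ‖Ax₀ + By₀ − b‖. Then for all k: E_{k+1} − E_k ≤ −α_k E_{k+1} (hence E_k ≤ θ_k E₀); ‖Ax_k + By_k − b‖ ≤ θ_k R₀; f(x_k) + g(y_k) + ⟪λ*, Ax_k + By_k − b⟫ − f(x*) − g(y*) ≤ θ_k E₀; |f(x_k) + g(y_k) − f(x*) − g(y*)| ≤ θ_k(E₀ + ‖λ*‖R₀); and θ_k ≤ min{ Q/(Q + √β₀·k), 4Q²/(2Q + √μ_g·k)² } where Q = ‖B‖ + √β₀. -/
open Real
open scoped RealInnerProductSpace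

lemma inner_expand {d : ℕ} (p q u w : EuclideanSpace ℝ (Fin d)) :
    ⟪p - q, u - w⟫ = (‖p - w‖^2 + ‖q - u‖^2 - ‖p - u‖^2 - ‖q - w‖^2)/2 := by
  simp only [norm_sub_sq_real, inner_sub_left, inner_sub_right]
  ring

lemma primal_est {d e : ℕ} (C : EuclideanSpace ℝ (Fin d) →L[ℝ] EuclideanSpace ℝ (Fin e))
    (h : EuclideanSpace ℝ (Fin d) → ℝ) {μ a c : ℝ} (hμ : 0 ≤ μ) (ha : 0 < a)
    {xp vp vv xx s : EuclideanSpace ℝ (Fin d)} {lb : EuclideanSpace ℝ (Fin e)}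
    (hxx : xx - xp = a • (xp - vp))
    (h1 : h s + ⟪lb, C s⟫ ≥ h xp + ⟪lb, C xp⟫
      + ⟪μ • (xp - vp) - (c / a) • (vp - vv), s - xp⟫ + μ / 2 * ‖s - xp‖ ^ 2)
    (h2 : h xx + ⟪lb, C xx⟫ ≥ h xp + ⟪lb, C xp⟫
      + ⟪μ • (xp - vp) - (c / a) • (vp - vv), xx - xp⟫ + μ / 2 * ‖xx - xp‖ ^ 2) :
    (1 + a) * h xp - h xx - a * h s + a * (⟪lb, C vp⟫ - ⟪lb, C s⟫)
      ≤ c / 2 * (‖vv - s‖ ^ 2 - ‖vp - s‖ ^ 2) - c / 2 * ‖vp - vv‖ ^ 2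
        - a * μ / 2 * ‖vp - s‖ ^ 2 := by
  have hane : a ≠ 0 := ha.ne'
  have e0 : xx = xp + a • (xp - vp) := by
    rw [sub_eq_iff_eq_add] at hxx; rw [hxx]; abel
  have elin : ⟪lb, C xx⟫ = ⟪lb, C xp⟫ + a * (⟪lb, C xp⟫ - ⟪lb, C vp⟫) := by
    rw [e0, map_add, map_smul, inner_add_right, real_inner_smul_right, map_sub, inner_sub_right]
  have eP2 : ⟪μ • (xp - vp) - (c / a) • (vp - vv), xx - xp⟫
      = a * μ * ‖xp - vp‖ ^ 2 - c * ((‖vv - xp‖^2 - ‖vp - xp‖^2 - ‖vv - vp‖^2)/2) := by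
    rw [hxx, real_inner_smul_right, inner_sub_left, real_inner_smul_left, real_inner_smul_left,
        real_inner_self_eq_norm_sq, inner_expand vp vv xp vp]
    simp only [sub_self, norm_zero]
    field_simp
    ring
  have eP1 : a * ⟪μ • (xp - vp) - (c / a) • (vp - vv), s - xp⟫
      = a * μ * ((‖vp - s‖^2 - ‖xp - s‖^2 - ‖vp - xp‖^2)/2)
        - c * ((‖vp - xp‖^2 + ‖vv - s‖^2 - ‖vp - s‖^2 - ‖vv - xp‖^2)/2) := by
    rw [inner_sub_left, real_inner_smul_left, real_inner_smul_left,
        inner_expand xp vp s xp, inner_expand vp vv s xp]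
    simp only [sub_self, norm_zero]
    field_simp
    ring
  have enx : ‖xx - xp‖^2 = a^2 * ‖xp - vp‖^2 := by
    rw [hxx, norm_smul, Real.norm_eq_abs, mul_pow, sq_abs]
  have h1a := mul_le_mul_of_nonneg_left h1 ha.le
  rw [elin, eP2, enx] at h2
  rw [norm_sub_rev xp vp] at h2
  rw [norm_sub_rev s xp] at h1a
  rw [show ‖vp - vv‖ = ‖vv - vp‖ from norm_sub_rev _ _]
  nlinarith [h1a, h2, eP1, mul_nonneg (mul_nonneg ha.le hμ) (sq_nonneg ‖vp - xp‖),
    mul_nonneg (mul_nonneg (mul_nonneg ha.le ha.le) hμ) (sq_nonneg ‖vp - xp‖)]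

set_option maxHeartbeats 1600000 in
/-- Convergence of the semi-implicit primal-dual method (Theorem 3.1):
multiplier choice `λ̄ₖ₊₁ = λₖ + (αₖ/θₖ)(A vₖ₊₁ + B wₖ − b)` with step sizes
`αₖ²‖B‖² = θₖ βₖ`. -/
theorem semi_implicit_choice_lv_convergence
    {m n r : ℕ}
    (X : Set (EuclideanSpace ℝ (Fin m))) (Y : Set (EuclideanSpace ℝ (Fin n)))
    (hXconv : Convex ℝ X) (hXclosed : IsClosed X)
    (hYconv : Convex ℝ Y) (hYclosed : IsClosed Y)
    (A : EuclideanSpace ℝ (Fin m) →L[ℝ] EuclideanSpace ℝ (Fin r))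
    (B : EuclideanSpace ℝ (Fin n) →L[ℝ] EuclideanSpace ℝ (Fin r))
    (b : EuclideanSpace ℝ (Fin r))
    (f : EuclideanSpace ℝ (Fin m) → ℝ) (g : EuclideanSpace ℝ (Fin n) → ℝ)
    (hfconv : ConvexOn ℝ Set.univ f) (hgconv : ConvexOn ℝ Set.univ g)
    (μf μg : ℝ) (hμf : 0 ≤ μf) (hμg : 0 ≤ μg)
    -- parameter sequences
    (α θ γ β : ℕ → ℝ) (hα : ∀ k, 0 < α k)
    (hθ0 : θ 0 = 1) (hγ0pos : 0 < γ 0) (hβ0pos : 0 < β 0)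
    (hθrec : ∀ k, θ (k + 1) = θ k / (1 + α k))
    (hγrec : ∀ k, γ (k + 1) = (γ k + α k * μf) / (1 + α k))
    (hβrec : ∀ k, β (k + 1) = (β k + α k * μg) / (1 + α k))
    (hγinit : 0 < μf → γ 0 = μf) (hβinit : 0 < μg → β 0 = μg)
    -- iterates
    (x v : ℕ → EuclideanSpace ℝ (Fin m)) (y w : ℕ → EuclideanSpace ℝ (Fin n))
    (l lbar : ℕ → EuclideanSpace ℝ (Fin r))
    (hx0 : x 0 ∈ X) (hy0 : y 0 ∈ Y)
    -- the implicit scheme (i)-(v)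
    (hi : ∀ k, x (k + 1) - x k = α k • (v (k + 1) - x (k + 1)))
    (hii : ∀ k, x (k + 1) ∈ X ∧ ∀ z ∈ X,
      f z + ⟪lbar k, A z⟫ ≥
        f (x (k + 1)) + ⟪lbar k, A (x (k + 1))⟫
          + ⟪μf • (x (k + 1) - v (k + 1)) - (γ k / α k) • (v (k + 1) - v k),
              z - x (k + 1)⟫
          + μf / 2 * ‖z - x (k + 1)‖ ^ 2)
    (hiii : ∀ k, θ k • (l (k + 1) - l k) = α k • (A (v (k + 1)) + B (w (k + 1)) - b))
    (hiv : ∀ k, y (k + 1) ∈ Y ∧ ∀ z ∈ Y,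
      g z + ⟪lbar k, B z⟫ ≥
        g (y (k + 1)) + ⟪lbar k, B (y (k + 1))⟫
          + ⟪μg • (y (k + 1) - w (k + 1)) - (β k / α k) • (w (k + 1) - w k),
              z - y (k + 1)⟫
          + μg / 2 * ‖z - y (k + 1)‖ ^ 2)
    (hv : ∀ k, y (k + 1) - y k = α k • (w (k + 1) - y (k + 1)))
    -- multiplier choice and step-size rule
    (hlbar : ∀ k, lbar k = l k + (α k / θ k) • (A (v (k + 1)) + B (w k) - b))
    (hstep : ∀ k, α k ^ 2 * ‖B‖ ^ 2 = θ k * β k)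
    -- saddle point
    (xs : EuclideanSpace ℝ (Fin m)) (ys : EuclideanSpace ℝ (Fin n))
    (ls : EuclideanSpace ℝ (Fin r))
    (hxs : xs ∈ X) (hys : ys ∈ Y) (hfeas : A xs + B ys = b)
    (hsaddle : ∀ x' ∈ X, ∀ y' ∈ Y,
      f x' + g y' + ⟪ls, A x' + B y' - b⟫ ≥ f xs + g ys)
    -- Lyapunov function and constants
    (E : ℕ → ℝ)
    (hE : ∀ k, E k = f (x k) + g (y k) + ⟪ls, A (x k) + B (y k) - b⟫ - f xs - g ys
      + γ k / 2 * ‖v k - xs‖ ^ 2 + β k / 2 * ‖w k - ys‖ ^ 2 + θ k / 2 * ‖l k - ls‖ ^ 2)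
    (R0 : ℝ)
    (hR0 : R0 = Real.sqrt (2 * E 0) + ‖l 0 - ls‖ + ‖A (x 0) + B (y 0) - b‖)
    (hB : 0 < ‖B‖)
    (Q : ℝ) (hQ : Q = ‖B‖ + Real.sqrt (β 0)) :
    ∀ k : ℕ,
      E (k + 1) - E k ≤ -(α k) * E (k + 1) ∧
      E k ≤ θ k * E 0 ∧
      ‖A (x k) + B (y k) - b‖ ≤ θ k * R0 ∧
      f (x k) + g (y k) + ⟪ls, A (x k) + B (y k) - b⟫ - f xs - g ys ≤ θ k * E 0 ∧
      |f (x k) + g (y k) - f xs - g ys| ≤ θ k * (E 0 + ‖ls‖ * R0) ∧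
      θ k ≤ min (Q / (Q + Real.sqrt (β 0) * (k : ℝ)))
                (4 * Q ^ 2 / (2 * Q + Real.sqrt μg * (k : ℝ)) ^ 2) := by
  -- positivity of parameter sequences
  have hθpos : ∀ k, 0 < θ k := by
    intro k; induction k with
    | zero => rw [hθ0]; norm_num
    | succ k ih => rw [hθrec k]; exact div_pos ih (by linarith [hα k])
  have hθle1 : ∀ k, θ k ≤ 1 := by
    intro k; induction k with
    | zero => rw [hθ0]
    | succ k ih =>
      rw [hθrec k]
      exact le_trans (div_le_self (hθpos k).le (by linarith [hα k])) ih
  have hγpos : ∀ k, 0 < γ k := by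
    intro k; induction k with
    | zero => exact hγ0pos
    | succ k ih =>
      rw [hγrec k]
      exact div_pos (by nlinarith [mul_nonneg (hα k).le hμf]) (by linarith [hα k])
  have hβpos : ∀ k, 0 < β k := by
    intro k; induction k with
    | zero => exact hβ0pos
    | succ k ih =>
      rw [hβrec k]
      exact div_pos (by nlinarith [mul_nonneg (hα k).le hμg]) (by linarith [hα k])
  -- membership of the iterates
  have hxmem : ∀ k, x k ∈ X := fun k => by
    cases k with
    | zero => exact hx0
    | succ k => exact (hii k).1
  have hymem : ∀ k, y k ∈ Y := fun k => by
    cases k with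
    | zero => exact hy0
    | succ k => exact (hiv k).1
  -- basic vector identities
  have hdx : ∀ k, x k - x (k + 1) = α k • (x (k + 1) - v (k + 1)) := by
    intro k
    calc x k - x (k + 1) = -(x (k + 1) - x k) := by abel
    _ = -(α k • (v (k + 1) - x (k + 1))) := by rw [hi k]
    _ = α k • (x (k + 1) - v (k + 1)) := by rw [← smul_neg, neg_sub]
  have hdy : ∀ k, y k - y (k + 1) = α k • (y (k + 1) - w (k + 1)) := by
    intro k
    calc y k - y (k + 1) = -(y (k + 1) - y k) := by abel
    _ = -(α k • (w (k + 1) - y (k + 1))) := by rw [hv k]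
    _ = α k • (y (k + 1) - w (k + 1)) := by rw [← smul_neg, neg_sub]
  have e0x : ∀ k, x k = x (k + 1) + α k • (x (k + 1) - v (k + 1)) := by
    intro k; have h := hdx k; rw [sub_eq_iff_eq_add] at h; rw [h]; abel
  have e0y : ∀ k, y k = y (k + 1) + α k • (y (k + 1) - w (k + 1)) := by
    intro k; have h := hdy k; rw [sub_eq_iff_eq_add] at h; rw [h]; abel
  -- gap nonnegativity
  have hgapnn : ∀ k, 0 ≤ f (x k) + g (y k) + ⟪ls, A (x k) + B (y k) - b⟫ - f xs - g ys := by
    intro k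
    have := hsaddle (x k) (hxmem k) (y k) (hymem k)
    linarith
  have hEnn : ∀ k, 0 ≤ E k := by
    intro k
    rw [hE k]
    have := hgapnn k
    nlinarith [mul_nonneg (hγpos k).le (sq_nonneg ‖v k - xs‖),
      mul_nonneg (hβpos k).le (sq_nonneg ‖w k - ys‖),
      mul_nonneg (hθpos k).le (sq_nonneg ‖l k - ls‖)]
  -- the key one-step estimate
  have hkey : ∀ k, (1 + α k) * E (k + 1) ≤ E k := by
    intro k
    have ha := hα k
    have ht := hθpos k
    have htne : θ k ≠ 0 := ht.ne'
    have hane : α k ≠ 0 := ha.ne'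
    have h1apos : (0:ℝ) < 1 + α k := by linarith
    have h1ane : (1:ℝ) + α k ≠ 0 := h1apos.ne'
    have factA := primal_est A f hμf ha (hdx k) ((hii k).2 xs hxs) ((hii k).2 (x k) (hxmem k))
    have factB := primal_est B g hμg ha (hdy k) ((hiv k).2 ys hys) ((hiv k).2 (y k) (hymem k))
    have hlamv : l (k + 1) - l k = (α k / θ k) • (A (v (k + 1)) + B (w (k + 1)) - b) := by
      have h3 := hiii k
      have h4 := congrArg (fun z => (θ k)⁻¹ • z) h3
      simp only [smul_smul] at h4
      rw [inv_mul_cancel₀ htne, one_smul] at h4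
      rw [div_eq_inv_mul]; exact h4
    have hr : A (v (k + 1)) + B (w (k + 1)) - b = (θ k / α k) • (l (k + 1) - l k) := by
      rw [hlamv, smul_smul, show θ k / α k * (α k / θ k) = 1 by field_simp, one_smul]
    have hbar : l (k + 1) - lbar k = (α k / θ k) • (B (w (k + 1)) - B (w k)) := by
      have e1 : lbar k - l k = (α k / θ k) • (A (v (k + 1)) + B (w k) - b) := by
        rw [hlbar k]; abel
      calc l (k + 1) - lbar k = (l (k + 1) - l k) - (lbar k - l k) := by abel
      _ = (α k / θ k) • (A (v (k + 1)) + B (w (k + 1)) - b)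
            - (α k / θ k) • (A (v (k + 1)) + B (w k) - b) := by rw [hlamv, e1]
      _ = (α k / θ k) • (B (w (k + 1)) - B (w k)) := by rw [← smul_sub]; congr 1; abel
    have hinner : θ k * ⟪l (k + 1) - l k, l (k + 1) - ls⟫
        = α k * ⟪A (v (k + 1)) + B (w (k + 1)) - b, l (k + 1) - ls⟫ := by
      rw [← real_inner_smul_left, hiii k, real_inner_smul_left]
    have hexp : ⟪l (k + 1) - l k, l (k + 1) - ls⟫
        = (‖l (k + 1) - ls‖^2 + ‖l (k + 1) - l k‖^2 - ‖l k - ls‖^2)/2 := by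
      rw [inner_expand, norm_sub_rev (l k) (l (k + 1))]
      simp only [sub_self, norm_zero]
      ring
    have factC : θ k/2 * ‖l (k + 1) - ls‖^2 - θ k/2 * ‖l k - ls‖^2
        = α k * ⟪A (v (k + 1)) + B (w (k + 1)) - b, l (k + 1) - ls⟫
          - θ k/2 * ‖l (k + 1) - l k‖^2 := by
      linear_combination hinner - θ k * hexp
    have factE : α k * ⟪l (k + 1) - lbar k, A (v (k + 1)) + B (w (k + 1)) - b⟫
        ≤ β k/2 * ‖w (k + 1) - w k‖^2 + θ k/2 * ‖l (k + 1) - l k‖^2 := by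
      have e1 : α k * ⟪l (k + 1) - lbar k, A (v (k + 1)) + B (w (k + 1)) - b⟫
          = α k * ⟪B (w (k + 1)) - B (w k), l (k + 1) - l k⟫ := by
        rw [hbar, real_inner_smul_left, hr, real_inner_smul_right]
        field_simp
      rw [e1]
      have hcs : ⟪B (w (k + 1)) - B (w k), l (k + 1) - l k⟫
          ≤ ‖B‖ * ‖w (k + 1) - w k‖ * ‖l (k + 1) - l k‖ := by
        calc ⟪B (w (k + 1)) - B (w k), l (k + 1) - l k⟫
            ≤ ‖B (w (k + 1)) - B (w k)‖ * ‖l (k + 1) - l k‖ := real_inner_le_norm _ _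
        _ ≤ ‖B‖ * ‖w (k + 1) - w k‖ * ‖l (k + 1) - l k‖ := by
            apply mul_le_mul_of_nonneg_right _ (norm_nonneg _)
            rw [← map_sub]; exact B.le_opNorm _
      have hcs2 := mul_le_mul_of_nonneg_left hcs ha.le
      nlinarith [hcs2, hstep k, ht,
        sq_nonneg (α k * ‖B‖ * ‖w (k + 1) - w k‖ - θ k * ‖l (k + 1) - l k‖)]
    have eJ : ⟪ls, A (x k) + B (y k) - b⟫
        = (1 + α k) * ⟪ls, A (x (k + 1)) + B (y (k + 1)) - b⟫
          - α k * ⟪ls, A (v (k + 1)) + B (w (k + 1)) - b⟫ := by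
      rw [e0x k, e0y k]
      simp only [map_add, map_smul, map_sub, inner_add_right, inner_sub_right,
        real_inner_smul_right]
      ring
    have eKa : α k * (⟪lbar k, A (v (k + 1))⟫ - ⟪lbar k, A xs⟫)
          + α k * (⟪lbar k, B (w (k + 1))⟫ - ⟪lbar k, B ys⟫)
        = α k * ⟪lbar k, A (v (k + 1)) + B (w (k + 1)) - b⟫ := by
      rw [← hfeas]
      simp only [inner_add_right, inner_sub_right]
      ring
    have eK2a : α k * ⟪A (v (k + 1)) + B (w (k + 1)) - b, l (k + 1) - ls⟫
        = α k * ⟪l (k + 1) - lbar k, A (v (k + 1)) + B (w (k + 1)) - b⟫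
          + α k * ⟪lbar k, A (v (k + 1)) + B (w (k + 1)) - b⟫
          - α k * ⟪ls, A (v (k + 1)) + B (w (k + 1)) - b⟫ := by
      rw [real_inner_comm]
      simp only [inner_sub_left]
      ring
    have hEk1 : (1 + α k) * E (k + 1)
        = (1 + α k) * (f (x (k + 1)) + g (y (k + 1))
            + ⟪ls, A (x (k + 1)) + B (y (k + 1)) - b⟫ - f xs - g ys)
          + (γ k + α k * μf)/2 * ‖v (k + 1) - xs‖^2
          + (β k + α k * μg)/2 * ‖w (k + 1) - ys‖^2
          + θ k/2 * ‖l (k + 1) - ls‖^2 := by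
      rw [hE (k + 1), hγrec k, hβrec k, hθrec k]
      field_simp
    rw [hEk1, hE k]
    have hnn : 0 ≤ γ k / 2 * ‖v (k + 1) - v k‖^2 :=
      mul_nonneg (by linarith [hγpos k]) (sq_nonneg _)
    linarith [factA, factB, factC, factE, eJ, eKa, eK2a, hnn]
  -- decay of the Lyapunov function
  have hEleθ : ∀ k, E k ≤ θ k * E 0 := by
    intro k; induction k with
    | zero => rw [hθ0]; linarith
    | succ k ih =>
      have ha := hα k
      have h1apos : (0:ℝ) < 1 + α k := by linarith
      have h1 := hkey k
      rw [hθrec k]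
      rw [div_mul_eq_mul_div, le_div_iff₀ h1apos]
      nlinarith [h1, ih]
  have hE0nn : 0 ≤ E 0 := hEnn 0
  -- multiplier boundedness
  have hlam_bound : ∀ k, ‖l k - ls‖ ≤ Real.sqrt (2 * E 0) := by
    intro k
    have h1 : θ k/2 * ‖l k - ls‖^2 ≤ E k := by
      rw [hE k]
      have := hgapnn k
      nlinarith [mul_nonneg (hγpos k).le (sq_nonneg ‖v k - xs‖),
        mul_nonneg (hβpos k).le (sq_nonneg ‖w k - ys‖)]
    have h2 : ‖l k - ls‖^2 ≤ 2 * E 0 := by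
      have h3 := hEleθ k
      have ht := hθpos k
      nlinarith [h1, h3, ht]
    calc ‖l k - ls‖ = Real.sqrt (‖l k - ls‖^2) := (Real.sqrt_sq (norm_nonneg _)).symm
    _ ≤ Real.sqrt (2 * E 0) := Real.sqrt_le_sqrt h2
  -- residual identity and feasibility bound
  have hres : ∀ k, A (x k) + B (y k) - b = θ k • ((A (x 0) + B (y 0) - b) + (l k - l 0)) := by
    intro k; induction k with
    | zero => rw [hθ0, one_smul]; simp
    | succ k ih =>
      have ha := hα k
      have h1apos : (0:ℝ) < 1 + α k := by linarith
      have hvr : (1 + α k) • (A (x (k + 1)) + B (y (k + 1)) - b)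
          = (A (x k) + B (y k) - b) + θ k • (l (k + 1) - l k) := by
        rw [hiii k, e0x k, e0y k]
        simp only [map_add, map_smul, map_sub]
        module
      rw [ih] at hvr
      have hvr2 : (1 + α k) • (A (x (k + 1)) + B (y (k + 1)) - b)
          = θ k • ((A (x 0) + B (y 0) - b) + (l (k + 1) - l 0)) := by
        rw [hvr, ← smul_add]; congr 1; abel
      have h5 := congrArg (fun z => (1 + α k)⁻¹ • z) hvr2
      simp only [smul_smul, inv_mul_cancel₀ h1apos.ne', one_smul] at h5
      rw [h5, hθrec k, div_eq_inv_mul]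
  have hfeasb : ∀ k, ‖A (x k) + B (y k) - b‖ ≤ θ k * R0 := by
    intro k
    rw [hres k, norm_smul, Real.norm_eq_abs, abs_of_pos (hθpos k)]
    apply mul_le_mul_of_nonneg_left _ (hθpos k).le
    have hsplit : l k - l 0 = (l k - ls) + (ls - l 0) := by abel
    calc ‖A (x 0) + B (y 0) - b + (l k - l 0)‖
        ≤ ‖A (x 0) + B (y 0) - b‖ + ‖l k - l 0‖ := norm_add_le _ _
    _ ≤ ‖A (x 0) + B (y 0) - b‖ + (‖l k - ls‖ + ‖ls - l 0‖) := by
        rw [hsplit]; linarith [norm_add_le (l k - ls) (ls - l 0)]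
    _ ≤ R0 := by
        rw [hR0, norm_sub_rev ls (l 0)]
        linarith [hlam_bound k]
  -- primal-dual gap bound
  have hgapbound : ∀ k, f (x k) + g (y k) + ⟪ls, A (x k) + B (y k) - b⟫ - f xs - g ys
      ≤ θ k * E 0 := by
    intro k
    have h1 := hEleθ k
    rw [hE k] at h1
    nlinarith [mul_nonneg (hγpos k).le (sq_nonneg ‖v k - xs‖),
      mul_nonneg (hβpos k).le (sq_nonneg ‖w k - ys‖),
      mul_nonneg (hθpos k).le (sq_nonneg ‖l k - ls‖)]
  -- objective bound
  have habs : ∀ k, |f (x k) + g (y k) - f xs - g ys| ≤ θ k * (E 0 + ‖ls‖ * R0) := by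
    intro k
    have hub := hgapbound k
    have hip : |⟪ls, A (x k) + B (y k) - b⟫| ≤ ‖ls‖ * (θ k * R0) := by
      calc |⟪ls, A (x k) + B (y k) - b⟫| ≤ ‖ls‖ * ‖A (x k) + B (y k) - b‖ :=
        abs_real_inner_le_norm _ _
      _ ≤ ‖ls‖ * (θ k * R0) := mul_le_mul_of_nonneg_left (hfeasb k) (norm_nonneg ls)
    have hgk := hgapnn k
    have ht := (hθpos k).le
    have hip' := abs_le.mp hip
    rw [abs_le]
    constructor
    · nlinarith [mul_nonneg ht hE0nn, hip'.1, hip'.2]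
    · nlinarith [mul_nonneg ht hE0nn, hip'.1, hip'.2]
  -- θ decay bounds
  have hsβ : 0 < Real.sqrt (β 0) := Real.sqrt_pos.mpr hβ0pos
  have hQpos : 0 < Q := by rw [hQ]; linarith [Real.sqrt_nonneg (β 0)]
  have hBQ : ‖B‖ ≤ Q := by rw [hQ]; linarith [Real.sqrt_nonneg (β 0)]
  have hβθ : ∀ k, β 0 * θ k ≤ β k := by
    intro k; induction k with
    | zero => rw [hθ0]; linarith
    | succ k ih =>
      have ha := hα k
      have h1apos : (0:ℝ) < 1 + α k := by linarith
      rw [hβrec k, hθrec k, ← mul_div_assoc]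
      exact (div_le_div_iff_of_pos_right h1apos).mpr (by nlinarith [mul_nonneg ha.le hμg])
  have hαB : ∀ k, θ k * Real.sqrt (β 0) ≤ α k * ‖B‖ := by
    intro k
    have h1 : (θ k * Real.sqrt (β 0))^2 ≤ (α k * ‖B‖)^2 := by
      rw [mul_pow, mul_pow, Real.sq_sqrt hβ0pos.le]
      have ht := hθpos k
      nlinarith [hstep k, hβθ k]
    have h2 : 0 ≤ θ k * Real.sqrt (β 0) := mul_nonneg (hθpos k).le (Real.sqrt_nonneg _)
    have h3 : 0 ≤ α k * ‖B‖ := mul_nonneg (hα k).le hB.le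
    nlinarith [h1, h2, h3]
  have hinv : ∀ k : ℕ, 1 + (k : ℝ) * (Real.sqrt (β 0) / ‖B‖) ≤ 1 / θ k := by
    intro k; induction k with
    | zero => rw [hθ0]; norm_num
    | succ k ih =>
      have ht := hθpos k
      have stepk : Real.sqrt (β 0) / ‖B‖ ≤ α k / θ k := by
        rw [div_le_div_iff₀ hB ht]
        nlinarith [hαB k]
      have hrec : 1 / θ (k + 1) = 1 / θ k + α k / θ k := by
        rw [hθrec k, one_div_div, add_div]
      push_cast
      rw [hrec]
      linarith [ih, stepk]
  have hbound1 : ∀ k : ℕ, θ k ≤ Q / (Q + Real.sqrt (β 0) * k) := by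
    intro k
    have hden : (0:ℝ) < 1 + (k : ℝ) * (Real.sqrt (β 0) / ‖B‖) := by positivity
    have h1 : θ k ≤ 1 / (1 + (k : ℝ) * (Real.sqrt (β 0) / ‖B‖)) := by
      rw [le_div_iff₀ hden]
      have ht := hθpos k
      have hid : θ k * (1 / θ k) = 1 := by field_simp
      nlinarith [hinv k, hid, ht]
    have h2 : 1 / (1 + (k : ℝ) * (Real.sqrt (β 0) / ‖B‖))
        = ‖B‖ / (‖B‖ + Real.sqrt (β 0) * k) := by
      have hd1 : (0:ℝ) < ‖B‖ + Real.sqrt (β 0) * k :=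
        add_pos_of_pos_of_nonneg hB (mul_nonneg hsβ.le (Nat.cast_nonneg k))
      rw [div_eq_div_iff hden.ne' hd1.ne']
      field_simp
    have h3 : ‖B‖ / (‖B‖ + Real.sqrt (β 0) * k) ≤ Q / (Q + Real.sqrt (β 0) * k) := by
      have hd1 : (0:ℝ) < ‖B‖ + Real.sqrt (β 0) * k :=
        add_pos_of_pos_of_nonneg hB (mul_nonneg hsβ.le (Nat.cast_nonneg k))
      have hd2 : (0:ℝ) < Q + Real.sqrt (β 0) * k :=
        add_pos_of_pos_of_nonneg hQpos (mul_nonneg hsβ.le (Nat.cast_nonneg k))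
      rw [div_le_div_iff₀ hd1 hd2]
      nlinarith [mul_nonneg hsβ.le (Nat.cast_nonneg k : (0:ℝ) ≤ (k:ℝ))]
    calc θ k ≤ _ := h1
    _ = _ := h2
    _ ≤ _ := h3
  have hbound2 : ∀ k : ℕ, θ k ≤ 4 * Q^2 / (2 * Q + Real.sqrt μg * k)^2 := by
    rcases eq_or_lt_of_le hμg with h0 | hpos
    · intro k
      rw [← h0, Real.sqrt_zero, zero_mul, add_zero,
        show (2*Q)^2 = 4*Q^2 by ring, div_self (by nlinarith [hQpos] : (4:ℝ)*Q^2 ≠ 0)]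
      exact hθle1 k
    · have hβ0μ : β 0 = μg := hβinit hpos
      have hsμ : 0 < Real.sqrt μg := Real.sqrt_pos.mpr hpos
      have hQμ : Q = ‖B‖ + Real.sqrt μg := by rw [hQ, hβ0μ]
      have hβconst : ∀ k, β k = μg := by
        intro k; induction k with
        | zero => exact hβ0μ
        | succ k ih =>
          rw [hβrec k, ih]
          have ha := hα k
          field_simp
      have hau : ∀ k, α k * ‖B‖ = Real.sqrt (θ k) * Real.sqrt μg := by
        intro k
        have h1 : (α k * ‖B‖)^2 = θ k * μg := by
          rw [mul_pow, hstep k, hβconst k]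
        rw [show α k * ‖B‖ = Real.sqrt ((α k * ‖B‖)^2) from
          (Real.sqrt_sq (mul_nonneg (hα k).le hB.le)).symm, h1,
          Real.sqrt_mul (hθpos k).le]
      have hsqrtθ : ∀ k, Real.sqrt (θ k) ≤ 1 := by
        intro k
        rw [show (1:ℝ) = Real.sqrt 1 by simp]
        exact Real.sqrt_le_sqrt (hθle1 k)
      have hmain : ∀ k : ℕ, 1 + (k : ℝ) * (Real.sqrt μg / (2 * Q)) ≤ 1 / Real.sqrt (θ k) := by
        intro k; induction k with
        | zero => rw [hθ0, Real.sqrt_one]; norm_num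
        | succ k ih =>
          have ht := hθpos k
          have hst : 0 < Real.sqrt (θ k) := Real.sqrt_pos.mpr ht
          set u := Real.sqrt (θ k) * Real.sqrt μg with hu
          have hupos : 0 < u := mul_pos hst hsμ
          have hule : u ≤ Q - ‖B‖ := by
            have : u ≤ 1 * Real.sqrt μg :=
              mul_le_mul_of_nonneg_right (hsqrtθ k) hsμ.le
            rw [one_mul] at this
            rw [hQμ]; linarith
          have ha := hα k
          have h1apos : (0:ℝ) < 1 + α k := by linarith
          have hQne : Q ≠ 0 := hQpos.ne'
          have hstne : Real.sqrt (θ k) ≠ 0 := hst.ne'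
          have hab := hau k
          have key2 : u * (4 * Q) + u^2 ≤ α k * (4 * Q^2) := by
            have hA1 : 0 ≤ u * ‖B‖ * ((Q - ‖B‖) - u) :=
              mul_nonneg (mul_nonneg hupos.le hB.le) (by linarith)
            have hA2 : 0 ≤ u * (Q - ‖B‖) * (4 * Q - ‖B‖) := by
              apply mul_nonneg (mul_nonneg hupos.le (by linarith))
              linarith
            have hmul : (u * (4 * Q) + u^2) * ‖B‖ ≤ α k * (4 * Q^2) * ‖B‖ := by
              nlinarith [hA1, hA2, hab]
            exact le_of_mul_le_mul_right hmul hB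
          have key : u / Q + u^2 / (4 * Q^2) ≤ α k := by
            have e : u / Q + u^2 / (4 * Q^2) = (u * (4 * Q) + u^2) / (4 * Q^2) := by
              field_simp
            rw [e, div_le_iff₀ (by nlinarith [hQpos])]
            linarith [key2]
          have hkey2 : 1 + u / (2 * Q) ≤ Real.sqrt (1 + α k) := by
            have hunn : (0:ℝ) ≤ 1 + u / (2 * Q) := by
              have := div_nonneg hupos.le (by linarith : (0:ℝ) ≤ 2 * Q)
              linarith
            rw [show (1:ℝ) + u / (2 * Q) = Real.sqrt ((1 + u / (2 * Q))^2) from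
              (Real.sqrt_sq hunn).symm]
            apply Real.sqrt_le_sqrt
            have e : (1 + u / (2 * Q))^2 = 1 + u / Q + u^2 / (4 * Q^2) := by
              field_simp; ring
            rw [e]; linarith [key]
          have hsub : Real.sqrt (θ (k + 1)) = Real.sqrt (θ k) / Real.sqrt (1 + α k) := by
            rw [hθrec k, Real.sqrt_div ht.le]
          have h6 : 1 / Real.sqrt (θ (k + 1)) = Real.sqrt (1 + α k) / Real.sqrt (θ k) := by
            rw [hsub, one_div_div]
          have h7 : (1 + u / (2 * Q)) / Real.sqrt (θ k)
              = 1 / Real.sqrt (θ k) + Real.sqrt μg / (2 * Q) := by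
            rw [hu]; field_simp
          have h8 : (1 + u / (2 * Q)) / Real.sqrt (θ k)
              ≤ Real.sqrt (1 + α k) / Real.sqrt (θ k) :=
            (div_le_div_iff_of_pos_right hst).mpr hkey2
          push_cast
          rw [← h6] at h8
          rw [h7] at h8
          rw [h6]
          linarith [ih]
      intro k
      have hc : (0:ℝ) < 1 + (k : ℝ) * (Real.sqrt μg / (2 * Q)) := by
        have : (0:ℝ) ≤ (k : ℝ) * (Real.sqrt μg / (2 * Q)) :=
          mul_nonneg (Nat.cast_nonneg k)
            (div_nonneg (Real.sqrt_nonneg _) (by linarith))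
        linarith
      have hstk : 0 < Real.sqrt (θ k) := Real.sqrt_pos.mpr (hθpos k)
      have h1 : Real.sqrt (θ k) ≤ 1 / (1 + (k : ℝ) * (Real.sqrt μg / (2 * Q))) := by
        rw [le_div_iff₀ hc]
        have hid : Real.sqrt (θ k) * (1 / Real.sqrt (θ k)) = 1 := by field_simp
        nlinarith [hmain k, hid, hstk]
      have h2 : θ k ≤ (1 / (1 + (k : ℝ) * (Real.sqrt μg / (2 * Q))))^2 := by
        have hsq := Real.sq_sqrt (hθpos k).le
        nlinarith [h1, hstk.le]
      have hne : (2 * Q + Real.sqrt μg * (k : ℝ)) ≠ 0 := by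
        have : (0:ℝ) ≤ Real.sqrt μg * (k : ℝ) :=
          mul_nonneg (Real.sqrt_nonneg _) (Nat.cast_nonneg k)
        nlinarith [hQpos]
      calc θ k ≤ _ := h2
      _ = 4 * Q^2 / (2 * Q + Real.sqrt μg * k)^2 := by
          field_simp
          ring
  -- assemble the conclusion
  intro k
  exact ⟨by linarith [hkey k], hEleθ k, hfeasb k, hgapbound k, habs k,
    le_min (hbound1 k) (hbound2 k)⟩
end

section
/- In the setting of the implicit scheme with the semi-implicit choice λ̄_{k+1} = λ_k + (α_k/θ_k)(Av_{k+1} + Bw_k − b), α_k²‖B‖² = θ_kβ_k, γ₀ = μ_f whenever μ_f > 0, β₀ = μ_g whenever μ_g > 0, specialized to n = r, B = −Id, b = 0 and Y = ℝ^n, assume additionally that g is M_g-Lipschitz continuous on ℝ^n, i.e. |g(y₁) − g(y₂)| ≤ M_g‖y₁ − y₂‖ for all y₁, y₂. Let (x*, y*, λ*) be a saddle point, define P(x) = f(x) + g(Ax) and P* = f(x*) + g(Ax*), and let E₀ and R₀ be as in the main convergence theorem. Then for all k ≥ 1: 0 ≤ P(x_k) − P* ≤ θ_k (E₀ + (‖λ*‖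 + M_g) R₀), where θ_k ≤ min{ Q/(Q + √β₀·k), 4Q²/(2Q + √μ_g·k)² } with Q = 1 + √β₀ (here ‖B‖ = 1). -/
open Real
open scoped RealInnerProductSpace

variable {E F : Type*} [NormedAddCommGroup E] [InnerProductSpace ℝ E]
  [NormedAddCommGroup F] [InnerProductSpace ℝ F]

set_option maxHeartbeats 2000000 in
lemma onestep (A : E →L[ℝ] F) (f : E → ℝ) (g : F → ℝ)
    (μf μg a θ γ0 γ1 β0 β1 : ℝ)
    (hμf : 0 ≤ μf) (hμg : 0 ≤ μg)
    (ha : 0 < a) (hθ : 0 < θ) (hβ : 0 < β0) (hγ : 0 < γ0)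
    (hγ1 : γ1 * (1 + a) = γ0 + a * μf) (hβ1 : β1 * (1 + a) = β0 + a * μg)
    (hstep : a^2 = θ * β0)
    (X0 X1 V0 V1 xs : E) (Y0 Y1 W0 W1 l0 l1 lb ys ls : F)
    (hR1 : X0 = X1 - a • (V1 - X1))
    (hR5 : Y0 = Y1 - a • (W1 - Y1))
    (hR3 : θ • (l1 - l0) = a • (A V1 - W1))
    (hRlb : lb = l0 + (a / θ) • (A V1 - W0))
    (hfeas : A xs = ys)
    (h1 : f X0 + ⟪lb, A X0⟫ ≥ f X1 + ⟪lb, A X1⟫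
        + ⟪μf • (X1 - V1) - (γ0/a) • (V1 - V0), X0 - X1⟫ + μf/2 * ‖X0 - X1‖^2)
    (h2 : f xs + ⟪lb, A xs⟫ ≥ f X1 + ⟪lb, A X1⟫
        + ⟪μf • (X1 - V1) - (γ0/a) • (V1 - V0), xs - X1⟫ + μf/2 * ‖xs - X1‖^2)
    (h3 : g Y0 - ⟪lb, Y0⟫ ≥ g Y1 - ⟪lb, Y1⟫
        + ⟪μg • (Y1 - W1) - (β0/a) • (W1 - W0), Y0 - Y1⟫ + μg/2 * ‖Y0 - Y1‖^2)
    (h4 : g ys - ⟪lb, ys⟫ ≥ g Y1 - ⟪lb, Y1⟫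
        + ⟪μg • (Y1 - W1) - (β0/a) • (W1 - W0), ys - Y1⟫ + μg/2 * ‖ys - Y1‖^2) :
    (1+a) * (f X1 + g Y1 + ⟪ls, A X1 - Y1⟫ - f xs - g ys)
      + γ1*(1+a)/2 * ‖V1 - xs‖^2 + β1*(1+a)/2 * ‖W1 - ys‖^2 + θ/2 * ‖l1 - ls‖^2
    ≤ (f X0 + g Y0 + ⟪ls, A X0 - Y0⟫ - f xs - g ys)
      + γ0/2 * ‖V0 - xs‖^2 + β0/2 * ‖W0 - ys‖^2 + θ/2 * ‖l0 - ls‖^2 := by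
  have hane : a ≠ 0 := ne_of_gt ha
  have hθne : θ ≠ 0 := ne_of_gt hθ
  have hx01 : X0 - X1 = (-a) • (V1 - X1) := by rw [hR1]; module
  have hy01 : Y0 - Y1 = (-a) • (W1 - Y1) := by rw [hR5]; module
  -- x-side quadratic identity
  have eX : ⟪μf • (X1 - V1) - (γ0/a) • (V1 - V0), X0 - X1⟫
      + a*⟪μf • (X1 - V1) - (γ0/a) • (V1 - V0), xs - X1⟫ + a*μf/2*‖xs - X1‖^2
      = γ0/2*(‖V1 - xs‖^2 - ‖V0 - xs‖^2 + ‖V1 - V0‖^2)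
        + a*μf/2*‖V1 - xs‖^2 + a*μf/2*‖X1 - V1‖^2 := by
    simp only [hx01, ← real_inner_self_eq_norm_sq, inner_sub_left, inner_sub_right,
      real_inner_smul_left, real_inner_smul_right, inner_neg_left, inner_neg_right,
      real_inner_comm]
    field_simp
    ring
  have eY : ⟪μg • (Y1 - W1) - (β0/a) • (W1 - W0), Y0 - Y1⟫
      + a*⟪μg • (Y1 - W1) - (β0/a) • (W1 - W0), ys - Y1⟫ + a*μg/2*‖ys - Y1‖^2
      = β0/2*(‖W1 - ys‖^2 - ‖W0 - ys‖^2 + ‖W1 - W0‖^2)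
        + a*μg/2*‖W1 - ys‖^2 + a*μg/2*‖Y1 - W1‖^2 := by
    simp only [hy01, ← real_inner_self_eq_norm_sq, inner_sub_left, inner_sub_right,
      real_inner_smul_left, real_inner_smul_right, inner_neg_left, inner_neg_right,
      real_inner_comm]
    field_simp
    ring
  -- linear expansions
  have hAX0 : A X0 = A X1 - a • (A V1 - A X1) := by rw [hR1]; simp [map_sub, map_smul]
  have eL1 : ⟪lb, A X0⟫ = (1+a) * ⟪lb, A X1⟫ - a * ⟪lb, A V1⟫ := by
    rw [hAX0]
    simp only [inner_sub_right, real_inner_smul_right]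
    ring
  have eL2 : ⟪lb, Y0⟫ = (1+a) * ⟪lb, Y1⟫ - a * ⟪lb, W1⟫ := by
    rw [hR5]
    simp only [inner_sub_right, real_inner_smul_right]
    ring
  have eL3 : a * ⟪lb, A xs⟫ = a * ⟪lb, ys⟫ := by rw [hfeas]
  have eL4 : a * ⟪lb, A V1⟫ - a * ⟪lb, W1⟫ = θ * ⟪lb, l1 - l0⟫ := by
    have h := congrArg (fun z => (⟪lb, z⟫ : ℝ)) hR3
    simp only [real_inner_smul_right, inner_sub_right] at h ⊢
    linarith [h]
  have hvec : (1+a) • (A X1 - Y1) - (A X0 - Y0) = θ • (l1 - l0) := by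
    rw [hR3, hAX0, hR5]; module
  have eL5 : (1+a) * ⟪ls, A X1 - Y1⟫ - ⟪ls, A X0 - Y0⟫ = θ * ⟪ls, l1 - l0⟫ := by
    have h := congrArg (fun z => (⟪ls, z⟫ : ℝ)) hvec
    simp only [real_inner_smul_right, inner_sub_right] at h ⊢
    linarith [h]
  have hlbθ : θ • lb = θ • l1 + a • (W1 - W0) := by
    rw [hRlb, smul_add, smul_smul, mul_div_cancel₀ a hθne]
    have h7 : a • (A V1 - W0) = a • (A V1 - W1) + a • (W1 - W0) := by module
    rw [h7, ← hR3]; module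
  have eL6 : θ * ⟪lb, l1 - l0⟫ = θ * ⟪l1, l1 - l0⟫ + a * ⟪W1 - W0, l1 - l0⟫ := by
    have h := congrArg (fun z => (⟪z, l1 - l0⟫ : ℝ)) hlbθ
    simp only [real_inner_smul_left, inner_add_left, inner_sub_right, inner_sub_left] at h ⊢
    linarith [h]
  have eL7 : θ * ⟪ls, l1 - l0⟫ - θ * ⟪l1, l1 - l0⟫
      = θ * (‖l0 - ls‖^2 - ‖l1 - ls‖^2 - ‖l1 - l0‖^2) / 2 := by
    simp only [← real_inner_self_eq_norm_sq, inner_sub_left, inner_sub_right,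
      real_inner_comm]
    ring
  have eC : -(a * ⟪W1 - W0, l1 - l0⟫) ≤ β0/2 * ‖W1 - W0‖^2 + θ/2 * ‖l1 - l0‖^2 := by
    have h0 : (0:ℝ) ≤ ‖β0 • (W1 - W0) + a • (l1 - l0)‖^2 := sq_nonneg _
    rw [norm_add_sq_real, norm_smul, norm_smul, real_inner_smul_left,
      real_inner_smul_right] at h0
    simp only [Real.norm_eq_abs, abs_of_pos hβ, abs_of_pos ha] at h0
    have h1' : β0 * (β0/2*‖W1 - W0‖^2 + θ/2*‖l1 - l0‖^2 + a*⟪W1 - W0, l1 - l0⟫)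
        = (1/2)*((β0*‖W1 - W0‖)^2 + 2*(β0*(a*⟪W1 - W0, l1 - l0⟫)) + (a*‖l1 - l0‖)^2) := by
      linear_combination (-(‖l1 - l0‖^2)/2) * hstep
    have hS : β0 * 0 ≤ β0 * (β0/2*‖W1 - W0‖^2 + θ/2*‖l1 - l0‖^2 + a*⟪W1 - W0, l1 - l0⟫) := by
      rw [mul_zero]; linarith [h0, h1']
    have hS' := le_of_mul_le_mul_left hS hβ
    linarith [hS']
  have h2a := mul_le_mul_of_nonneg_left h2 ha.le
  have h4a := mul_le_mul_of_nonneg_left h4 ha.le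
  have hn1 : (0:ℝ) ≤ μf/2 * ‖X0 - X1‖^2 := by positivity
  have hn2 : (0:ℝ) ≤ μg/2 * ‖Y0 - Y1‖^2 := by positivity
  have hn3 : (0:ℝ) ≤ a*μf/2 * ‖X1 - V1‖^2 := by positivity
  have hn4 : (0:ℝ) ≤ a*μg/2 * ‖Y1 - W1‖^2 := by positivity
  have hn5 : (0:ℝ) ≤ γ0/2 * ‖V1 - V0‖^2 := by positivity
  have hγ1n : γ1 * (1 + a) / 2 * ‖V1 - xs‖^2 = (γ0 + a * μf) / 2 * ‖V1 - xs‖^2 := by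
    rw [hγ1]
  have hβ1n : β1 * (1 + a) / 2 * ‖W1 - ys‖^2 = (β0 + a * μg) / 2 * ‖W1 - ys‖^2 := by
    rw [hβ1]
  linarith [h1, h2a, h3, h4a, eX, eY, eL1, eL2, eL3, eL4, eL5, eL6, eL7, eC,
    hn1, hn2, hn3, hn4, hn5, hγ1n, hβ1n]


lemma quot_step (A1 A0 c1 c0 a θ θ1 : ℝ) (hθ : 0 < θ) (ha : 0 < a)
    (hθ1 : θ1 = θ / (1 + a)) (hkey : (1 + a) * A1 + θ * c1 ≤ A0 + θ * c0) :
    A1 / θ1 + c1 ≤ A0 / θ + c0 := by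
  have h1a : (0:ℝ) < 1 + a := by linarith
  have hθne : θ ≠ 0 := ne_of_gt hθ
  have e1 : A1 / θ1 = (1 + a) * A1 / θ := by rw [hθ1]; field_simp
  have h2 : (0:ℝ) ≤ (A0 + θ * c0 - ((1 + a) * A1 + θ * c1)) / θ :=
    div_nonneg (by linarith) hθ.le
  have h3 : (A0 + θ * c0 - ((1 + a) * A1 + θ * c1)) / θ
      = A0 / θ + c0 - ((1 + a) * A1 / θ + c1) := by field_simp
  rw [e1]
  nlinarith [h3 ▸ h2]



set_option maxHeartbeats 2000000 in
/-- Corollary 3.1: for the composite problem `min_{x ∈ X} P(x) = f(x) + g(Ax)`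
(the case `B = -Id`, `b = 0`, `Y = ℝⁿ` of the separable problem), the
semi-implicit method with `λ̄ₖ₊₁ = λₖ + (αₖ/θₖ)(A vₖ₊₁ − wₖ)` and step sizes
`αₖ² = θₖ βₖ` (note `‖B‖ = 1`), assuming `g` is `M_g`-Lipschitz, yields the
nonergodic rate for the composite objective residual. -/
theorem composite_objective_residual_rate
    {m n : ℕ}
    (X : Set (EuclideanSpace ℝ (Fin m)))
    (hXconv : Convex ℝ X) (hXclosed : IsClosed X)
    (A : EuclideanSpace ℝ (Fin m) →L[ℝ] EuclideanSpace ℝ (Fin n))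
    (f : EuclideanSpace ℝ (Fin m) → ℝ) (g : EuclideanSpace ℝ (Fin n) → ℝ)
    (hfconv : ConvexOn ℝ Set.univ f) (hgconv : ConvexOn ℝ Set.univ g)
    (μf μg : ℝ) (hμf : 0 ≤ μf) (hμg : 0 ≤ μg)
    (Mg : ℝ) (hMg : 0 ≤ Mg)
    (hglip : ∀ y₁ y₂, |g y₁ - g y₂| ≤ Mg * ‖y₁ - y₂‖)
    -- parameter sequences
    (α θ γ β : ℕ → ℝ) (hα : ∀ k, 0 < α k)
    (hθ0 : θ 0 = 1) (hγ0pos : 0 < γ 0) (hβ0pos : 0 < β 0)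
    (hθrec : ∀ k, θ (k + 1) = θ k / (1 + α k))
    (hγrec : ∀ k, γ (k + 1) = (γ k + α k * μf) / (1 + α k))
    (hβrec : ∀ k, β (k + 1) = (β k + α k * μg) / (1 + α k))
    (hγinit : 0 < μf → γ 0 = μf) (hβinit : 0 < μg → β 0 = μg)
    -- iterates (B = -Id, b = 0, Y = ℝⁿ)
    (x v : ℕ → EuclideanSpace ℝ (Fin m)) (y w : ℕ → EuclideanSpace ℝ (Fin n))
    (l lbar : ℕ → EuclideanSpace ℝ (Fin n))
    (hx0 : x 0 ∈ X)
    -- the implicit scheme (i)-(v)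
    (hi : ∀ k, x (k + 1) - x k = α k • (v (k + 1) - x (k + 1)))
    (hii : ∀ k, x (k + 1) ∈ X ∧ ∀ z ∈ X,
      f z + ⟪lbar k, A z⟫ ≥
        f (x (k + 1)) + ⟪lbar k, A (x (k + 1))⟫
          + ⟪μf • (x (k + 1) - v (k + 1)) - (γ k / α k) • (v (k + 1) - v k),
              z - x (k + 1)⟫
          + μf / 2 * ‖z - x (k + 1)‖ ^ 2)
    (hiii : ∀ k, θ k • (l (k + 1) - l k) = α k • (A (v (k + 1)) - w (k + 1)))
    (hiv : ∀ k, ∀ z : EuclideanSpace ℝ (Fin n),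
      g z - ⟪lbar k, z⟫ ≥
        g (y (k + 1)) - ⟪lbar k, y (k + 1)⟫
          + ⟪μg • (y (k + 1) - w (k + 1)) - (β k / α k) • (w (k + 1) - w k),
              z - y (k + 1)⟫
          + μg / 2 * ‖z - y (k + 1)‖ ^ 2)
    (hv : ∀ k, y (k + 1) - y k = α k • (w (k + 1) - y (k + 1)))
    -- multiplier choice and step-size rule (‖B‖ = 1)
    (hlbar : ∀ k, lbar k = l k + (α k / θ k) • (A (v (k + 1)) - w k))
    (hstep : ∀ k, α k ^ 2 = θ k * β k)
    -- saddle point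
    (xs : EuclideanSpace ℝ (Fin m)) (ys : EuclideanSpace ℝ (Fin n))
    (ls : EuclideanSpace ℝ (Fin n))
    (hxs : xs ∈ X) (hfeasS : A xs = ys)
    (hsaddle : ∀ x' ∈ X, ∀ y' : EuclideanSpace ℝ (Fin n),
      f x' + g y' + ⟪ls, A x' - y'⟫ ≥ f xs + g ys)
    -- composite objective, Lyapunov value and constants
    (P : EuclideanSpace ℝ (Fin m) → ℝ) (hP : ∀ z, P z = f z + g (A z))
    (Pstar : ℝ) (hPstar : Pstar = f xs + g (A xs))
    (E0 : ℝ)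
    (hE0 : E0 = f (x 0) + g (y 0) + ⟪ls, A (x 0) - y 0⟫ - f xs - g ys
      + γ 0 / 2 * ‖v 0 - xs‖ ^ 2 + β 0 / 2 * ‖w 0 - ys‖ ^ 2 + 1 / 2 * ‖l 0 - ls‖ ^ 2)
    (R0 : ℝ) (hR0 : R0 = Real.sqrt (2 * E0) + ‖l 0 - ls‖ + ‖A (x 0) - y 0‖)
    (Q : ℝ) (hQ : Q = 1 + Real.sqrt (β 0)) :
    ∀ k : ℕ, 1 ≤ k →
      0 ≤ P (x k) - Pstar ∧
      P (x k) - Pstar ≤ θ k * (E0 + (‖ls‖ + Mg) * R0) ∧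
      θ k ≤ min (Q / (Q + Real.sqrt (β 0) * (k : ℝ)))
                (4 * Q ^ 2 / (2 * Q + Real.sqrt μg * (k : ℝ)) ^ 2) := by

  -- basic positivity facts
  have h1α : ∀ k, (0:ℝ) < 1 + α k := fun k => by linarith [hα k]
  have hθpos : ∀ k, 0 < θ k := by
    intro k
    induction k with
    | zero => rw [hθ0]; norm_num
    | succ k ih => rw [hθrec k]; exact div_pos ih (h1α k)
  have hβpos : ∀ k, 0 < β k := by
    intro k
    induction k with
    | zero => exact hβ0pos
    | succ k ih =>
      rw [hβrec k]
      exact div_pos (by nlinarith [mul_nonneg (hα k).le hμg]) (h1α k)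
  have hγpos : ∀ k, 0 < γ k := by
    intro k
    induction k with
    | zero => exact hγ0pos
    | succ k ih =>
      rw [hγrec k]
      exact div_pos (by nlinarith [mul_nonneg (hα k).le hμf]) (h1α k)
  have hθle1 : ∀ k, θ k ≤ 1 := by
    intro k
    induction k with
    | zero => rw [hθ0]
    | succ k ih =>
      rw [hθrec k, div_le_iff₀ (h1α k)]
      nlinarith [hθpos k, hα k]
  have hmem : ∀ k, x k ∈ X := by
    intro k
    cases k with
    | zero => exact hx0
    | succ k => exact (hii k).1
  have hLnn : ∀ k, 0 ≤ f (x k) + g (y k) + ⟪ls, A (x k) - y k⟫ - f xs - g ys := by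
    intro k
    have h := hsaddle (x k) (hmem k) (y k)
    linarith
  -- one-step contraction of the scaled Lyapunov function
  have hkey : ∀ k,
      (f (x (k+1)) + g (y (k+1)) + ⟪ls, A (x (k+1)) - y (k+1)⟫ - f xs - g ys
        + γ (k+1) / 2 * ‖v (k+1) - xs‖^2 + β (k+1) / 2 * ‖w (k+1) - ys‖^2) / θ (k+1)
        + 1/2 * ‖l (k+1) - ls‖^2
      ≤ (f (x k) + g (y k) + ⟪ls, A (x k) - y k⟫ - f xs - g ys
        + γ k / 2 * ‖v k - xs‖^2 + β k / 2 * ‖w k - ys‖^2) / θ k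
        + 1/2 * ‖l k - ls‖^2 := by
    intro k
    have hγ1 : γ (k+1) * (1 + α k) = γ k + α k * μf := by
      rw [hγrec k]; exact div_mul_cancel₀ _ (ne_of_gt (h1α k))
    have hβ1 : β (k+1) * (1 + α k) = β k + α k * μg := by
      rw [hβrec k]; exact div_mul_cancel₀ _ (ne_of_gt (h1α k))
    have hR1 : x k = x (k+1) - α k • (v (k+1) - x (k+1)) := by
      rw [← hi k]; module
    have hR5 : y k = y (k+1) - α k • (w (k+1) - y (k+1)) := by
      rw [← hv k]; module
    have key := onestep A f g μf μg (α k) (θ k) (γ k) (γ (k+1)) (β k) (β (k+1))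
      hμf hμg (hα k) (hθpos k) (hβpos k) (hγpos k) hγ1 hβ1 (hstep k)
      (x k) (x (k+1)) (v k) (v (k+1)) xs
      (y k) (y (k+1)) (w k) (w (k+1)) (l k) (l (k+1)) (lbar k) ys ls
      hR1 hR5 (hiii k) (hlbar k) hfeasS
      ((hii k).2 (x k) (hmem k)) ((hii k).2 xs hxs) (hiv k (y k)) (hiv k ys)
    exact quot_step _ _ _ _ (α k) (θ k) (θ (k+1)) (hθpos k) (hα k) (hθrec k)
      (by nlinarith [key])
  have hΦle : ∀ k,
      (f (x k) + g (y k) + ⟪ls, A (x k) - y k⟫ - f xs - g ys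
        + γ k / 2 * ‖v k - xs‖^2 + β k / 2 * ‖w k - ys‖^2) / θ k
        + 1/2 * ‖l k - ls‖^2 ≤ E0 := by
    intro k
    induction k with
    | zero =>
      rw [hθ0, div_one, hE0]
    | succ k ih => exact le_trans (hkey k) ih
  have hqnn : ∀ k, 0 ≤ f (x k) + g (y k) + ⟪ls, A (x k) - y k⟫ - f xs - g ys
      + γ k / 2 * ‖v k - xs‖^2 + β k / 2 * ‖w k - ys‖^2 := by
    intro k
    have h1 := hLnn k
    have h2 : 0 ≤ γ k / 2 * ‖v k - xs‖^2 :=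
      mul_nonneg (by linarith [hγpos k]) (sq_nonneg _)
    have h3 : 0 ≤ β k / 2 * ‖w k - ys‖^2 :=
      mul_nonneg (by linarith [hβpos k]) (sq_nonneg _)
    linarith
  have hE0nn : 0 ≤ E0 := by
    have h := hΦle 0
    have h2 := div_nonneg (hqnn 0) (hθpos 0).le
    nlinarith [sq_nonneg ‖l 0 - ls‖]
  have hlls : ∀ k, ‖l k - ls‖ ≤ Real.sqrt (2 * E0) := by
    intro k
    have h := hΦle k
    have h2 := div_nonneg (hqnn k) (hθpos k).le
    have h3 : ‖l k - ls‖^2 ≤ 2 * E0 := by linarith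
    calc ‖l k - ls‖ = Real.sqrt (‖l k - ls‖^2) := (Real.sqrt_sq (norm_nonneg _)).symm
      _ ≤ Real.sqrt (2 * E0) := Real.sqrt_le_sqrt h3
  have hLbd : ∀ k, f (x k) + g (y k) + ⟪ls, A (x k) - y k⟫ - f xs - g ys ≤ θ k * E0 := by
    intro k
    have h := hΦle k
    have h4 : (f (x k) + g (y k) + ⟪ls, A (x k) - y k⟫ - f xs - g ys
        + γ k / 2 * ‖v k - xs‖^2 + β k / 2 * ‖w k - ys‖^2) / θ k ≤ E0 := by
      nlinarith [sq_nonneg ‖l k - ls‖]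
    have h5 := (div_le_iff₀ (hθpos k)).mp h4
    have h2 : 0 ≤ γ k / 2 * ‖v k - xs‖^2 :=
      mul_nonneg (by linarith [hγpos k]) (sq_nonneg _)
    have h3 : 0 ≤ β k / 2 * ‖w k - ys‖^2 :=
      mul_nonneg (by linarith [hβpos k]) (sq_nonneg _)
    nlinarith [h5, h2, h3]
  -- feasibility identity
  have hfeasId : ∀ k, A (x k) - y k = θ k • (A (x 0) - y 0 + (l k - l 0)) := by
    intro k
    induction k with
    | zero => rw [hθ0]; simp
    | succ k ih =>
      have h1 := congrArg (⇑A) (hi k)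
      rw [map_sub, map_smul, map_sub] at h1
      have h2 := hv k
      have h3 : (1 + α k) • (A (x (k+1)) - y (k+1))
          = (A (x k) - y k) + α k • (A (v (k+1)) - w (k+1)) := by
        have e : (1 + α k) • (A (x (k+1)) - y (k+1))
            - ((A (x k) - y k) + α k • (A (v (k+1)) - w (k+1)))
            = ((A (x (k+1)) - A (x k)) - α k • (A (v (k+1)) - A (x (k+1))))
              - ((y (k+1) - y k) - α k • (w (k+1) - y (k+1))) := by module
        rw [h1, h2] at e
        simp only [sub_self, sub_zero] at e
        exact sub_eq_zero.mp e
      rw [← hiii k, ih] at h3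
      have hθk : θ k = (1 + α k) * θ (k+1) := by
        rw [hθrec k]
        rw [mul_div_cancel₀ _ (ne_of_gt (h1α k))]
      rw [hθk] at h3
      have h4 : ((1 + α k) * θ (k+1)) • (A (x 0) - y 0 + (l k - l 0))
            + ((1 + α k) * θ (k+1)) • (l (k+1) - l k)
          = (1 + α k) • (θ (k+1) • (A (x 0) - y 0 + (l (k+1) - l 0))) := by
        module
      exact smul_right_injective (EuclideanSpace ℝ (Fin n)) (ne_of_gt (h1α k))
        (h3.trans h4)
  have hAxyb : ∀ k, ‖A (x k) - y k‖ ≤ θ k * R0 := by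
    intro k
    rw [hfeasId k, norm_smul, Real.norm_eq_abs, abs_of_pos (hθpos k)]
    have h1 : l k - l 0 = (l k - ls) - (l 0 - ls) := by module
    have h2 : ‖A (x 0) - y 0 + (l k - l 0)‖
        ≤ ‖A (x 0) - y 0‖ + (‖l k - ls‖ + ‖l 0 - ls‖) := by
      calc ‖A (x 0) - y 0 + (l k - l 0)‖
          ≤ ‖A (x 0) - y 0‖ + ‖l k - l 0‖ := norm_add_le _ _
        _ ≤ _ := by
            rw [h1]
            have h6 := norm_sub_le (l k - ls) (l 0 - ls)
            linarith
    have h3 : ‖A (x 0) - y 0‖ + (‖l k - ls‖ + ‖l 0 - ls‖) ≤ R0 := by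
      rw [hR0]; linarith [hlls k]
    exact mul_le_mul_of_nonneg_left (le_trans h2 h3) (hθpos k).le
  -- θ bounds
  have hQ1 : 1 ≤ Q := by
    rw [hQ]; linarith [Real.sqrt_nonneg (β 0)]
  have hQ0 : (0:ℝ) < Q := by linarith
  have hβθ : ∀ k, β 0 ≤ β k / θ k := by
    intro k
    induction k with
    | zero => rw [hθ0, div_one]
    | succ k ih =>
      have e : β (k+1) / θ (k+1) = (β k + α k * μg) / θ k := by
        have hne1 : (1 + α k) ≠ 0 := ne_of_gt (h1α k)
        have hne2 : θ k ≠ 0 := ne_of_gt (hθpos k)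
        rw [hβrec k, hθrec k]
        field_simp
      have h2 : β k / θ k ≤ (β k + α k * μg) / θ k := by
        exact (div_le_div_iff_of_pos_right (hθpos k)).mpr (by nlinarith [mul_nonneg (hα k).le hμg])
      rw [e]
      linarith
  have hratio : ∀ k, Real.sqrt (β 0) ≤ α k / θ k := by
    intro k
    have h1 : (α k / θ k)^2 = β k / θ k := by
      rw [div_pow, hstep k, pow_two]
      rw [mul_div_mul_left _ _ (ne_of_gt (hθpos k))]
    have h2 : Real.sqrt (β 0) ≤ Real.sqrt ((α k / θ k)^2) :=
      Real.sqrt_le_sqrt (by rw [h1]; exact hβθ k)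
    rwa [Real.sqrt_sq (div_nonneg (hα k).le (hθpos k).le)] at h2
  have hinv : ∀ k : ℕ, 1 + Real.sqrt (β 0) * k ≤ 1 / θ k := by
    intro k
    induction k with
    | zero => simp [hθ0]
    | succ k ih =>
      have e : 1 / θ (k+1) = 1 / θ k + α k / θ k := by
        rw [hθrec k, one_div_div]
        ring
      rw [e]
      push_cast
      have h3 := hratio k
      linarith
  have hbound1 : ∀ k : ℕ, θ k ≤ Q / (Q + Real.sqrt (β 0) * k) := by
    intro k
    have hsβ : 0 < Real.sqrt (β 0) := Real.sqrt_pos.mpr hβ0pos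
    have hkc : (0:ℝ) ≤ (k:ℝ) := Nat.cast_nonneg k
    have hc : 0 < 1 + Real.sqrt (β 0) * k := by nlinarith
    have hd : 0 < Q + Real.sqrt (β 0) * k := by nlinarith
    have h1 : θ k ≤ 1 / (1 + Real.sqrt (β 0) * k) := by
      rw [le_div_iff₀ hc]
      calc θ k * (1 + Real.sqrt (β 0) * k)
          ≤ θ k * (1 / θ k) := mul_le_mul_of_nonneg_left (hinv k) (hθpos k).le
        _ = 1 := mul_one_div_cancel (ne_of_gt (hθpos k))
    have h2 : 1 / (1 + Real.sqrt (β 0) * k) ≤ Q / (Q + Real.sqrt (β 0) * k) := by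
      rw [div_le_div_iff₀ hc hd]
      nlinarith [mul_nonneg (mul_nonneg (sub_nonneg.mpr hQ1) hsβ.le) hkc]
    linarith
  have hbound2 : ∀ k : ℕ, θ k ≤ 4 * Q ^ 2 / (2 * Q + Real.sqrt μg * k) ^ 2 := by
    intro k
    rcases eq_or_lt_of_le hμg with hμg0 | hμgpos
    · have hs : Real.sqrt μg = 0 := by rw [← hμg0, Real.sqrt_zero]
      rw [hs]
      have e : (2 * Q + 0 * (k:ℝ))^2 = 4 * Q^2 := by ring
      rw [e, div_self (by nlinarith : (4:ℝ) * Q^2 ≠ 0)]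
      exact hθle1 k
    · have hβ0μ : β 0 = μg := hβinit hμgpos
      have hQμ : Q = 1 + Real.sqrt μg := by rw [hQ, hβ0μ]
      have hsμ : 0 < Real.sqrt μg := Real.sqrt_pos.mpr hμgpos
      have hsq : ∀ j : ℕ, (2*Q + Real.sqrt μg * j) / (2*Q) ≤ 1 / Real.sqrt (θ j) := by
        intro j
        induction j with
        | zero =>
          rw [hθ0, Real.sqrt_one]
          push_cast
          rw [mul_zero, add_zero, div_self (by nlinarith : (2:ℝ) * Q ≠ 0)]
          norm_num
        | succ j ih =>
          have hβallj : β j = μg := by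
            clear ih
            induction j with
            | zero => exact hβ0μ
            | succ j ihh =>
              rw [hβrec j, ihh, div_eq_iff (ne_of_gt (h1α j))]
              ring
          have hspos : 0 < Real.sqrt (θ j) := Real.sqrt_pos.mpr (hθpos j)
          have htpos : 0 < Real.sqrt (1 + α j) := Real.sqrt_pos.mpr (h1α j)
          have ht1 : 1 ≤ Real.sqrt (1 + α j) := by
            have h9 : Real.sqrt 1 ≤ Real.sqrt (1 + α j) :=
              Real.sqrt_le_sqrt (by linarith [hα j])
            rwa [Real.sqrt_one] at h9
          have ht2 : Real.sqrt (1 + α j) ^ 2 = 1 + α j := Real.sq_sqrt (h1α j).le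
          have hs2 : Real.sqrt (θ j) ^ 2 = θ j := Real.sq_sqrt (hθpos j).le
          have hθ1s : Real.sqrt (θ (j+1)) = Real.sqrt (θ j) / Real.sqrt (1 + α j) := by
            rw [hθrec j, Real.sqrt_div (hθpos j).le]
          have hαs : α j = Real.sqrt (θ j) * Real.sqrt μg := by
            calc α j = Real.sqrt (α j ^ 2) := (Real.sqrt_sq (hα j).le).symm
              _ = Real.sqrt (θ j * μg) := by rw [hstep j, hβallj]
              _ = Real.sqrt (θ j) * Real.sqrt μg := Real.sqrt_mul (hθpos j).le _
          have hsle1 : Real.sqrt (θ j) ≤ 1 := by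
            have h9 : Real.sqrt (θ j) ≤ Real.sqrt 1 := Real.sqrt_le_sqrt (hθle1 j)
            rwa [Real.sqrt_one] at h9
          have hαle : α j ≤ Real.sqrt μg := by
            rw [hαs]
            nlinarith
          have htq : Real.sqrt (1 + α j) ≤ Q := by
            calc Real.sqrt (1 + α j) ≤ Real.sqrt (Q^2) :=
                Real.sqrt_le_sqrt (by nlinarith)
              _ = Q := Real.sqrt_sq hQ0.le
          have hts : 1 / Real.sqrt (θ (j+1)) = Real.sqrt (1 + α j) / Real.sqrt (θ j) := by
            rw [hθ1s, one_div_div]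
          have e2 : Real.sqrt (1 + α j) / Real.sqrt (θ j)
              = 1 / Real.sqrt (θ j) + (Real.sqrt (1 + α j) - 1) / Real.sqrt (θ j) := by
            ring
          have e3 : (Real.sqrt (1 + α j) - 1) / Real.sqrt (θ j)
              = Real.sqrt μg / (Real.sqrt (1 + α j) + 1) := by
            rw [div_eq_div_iff (ne_of_gt hspos)
              (by linarith : (0:ℝ) < Real.sqrt (1 + α j) + 1).ne']
            linear_combination ht2 + hαs
          have e4 : Real.sqrt μg / (2*Q) ≤ Real.sqrt μg / (Real.sqrt (1 + α j) + 1) := by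
            rw [div_le_div_iff₀ (by nlinarith : (0:ℝ) < 2*Q) (by linarith : (0:ℝ) < Real.sqrt (1 + α j) + 1)]
            nlinarith
          have e5 : (2*Q + Real.sqrt μg * ((j:ℝ)+1)) / (2*Q)
              = (2*Q + Real.sqrt μg * (j:ℝ)) / (2*Q) + Real.sqrt μg / (2*Q) := by
            field_simp
            ring
          rw [hts]
          push_cast
          rw [e5]
          linarith [ih, e2, e3, e4]
      have h1 := hsq k
      have hkc : (0:ℝ) ≤ (k:ℝ) := Nat.cast_nonneg k
      have hden : (0:ℝ) < 2*Q + Real.sqrt μg * k := by nlinarith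
      have hsk : 0 < Real.sqrt (θ k) := Real.sqrt_pos.mpr (hθpos k)
      have h2 : Real.sqrt (θ k) ≤ 2*Q / (2*Q + Real.sqrt μg * k) := by
        rw [le_div_iff₀ hden]
        have h3 := mul_le_mul_of_nonneg_left h1 hsk.le
        have h4 : Real.sqrt (θ k) * (1 / Real.sqrt (θ k)) = 1 :=
          mul_one_div_cancel (ne_of_gt hsk)
        have h5 : Real.sqrt (θ k) * ((2*Q + Real.sqrt μg * k) / (2*Q)) * (2*Q)
            = Real.sqrt (θ k) * (2*Q + Real.sqrt μg * k) := by
          field_simp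
        nlinarith [h3, h4]
      have h6 : θ k = Real.sqrt (θ k) ^ 2 := (Real.sq_sqrt (hθpos k).le).symm
      rw [h6]
      calc Real.sqrt (θ k) ^ 2 ≤ (2*Q / (2*Q + Real.sqrt μg * k)) ^ 2 :=
          pow_le_pow_left₀ hsk.le h2 2
        _ = 4 * Q ^ 2 / (2 * Q + Real.sqrt μg * k) ^ 2 := by
            rw [div_pow]
            congr 1
            ring
  -- conclusion
  intro k _hk
  refine ⟨?_, ?_, le_min (hbound1 k) (hbound2 k)⟩
  · have h := hsaddle (x k) (hmem k) (A (x k))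
    rw [hP, hPstar, hfeasS]
    simp only [sub_self, inner_zero_right] at h
    linarith
  · have hgd : g (A (x k)) - g (y k) ≤ Mg * ‖A (x k) - y k‖ :=
      le_trans (le_abs_self _) (hglip _ _)
    have hip : -⟪ls, A (x k) - y k⟫ ≤ ‖ls‖ * ‖A (x k) - y k‖ := by
      have h1 := abs_real_inner_le_norm ls (A (x k) - y k)
      linarith [neg_le_abs (⟪ls, A (x k) - y k⟫ : ℝ)]
    have h2 := hLbd k
    have h3 := hAxyb k
    have h4 : Mg * ‖A (x k) - y k‖ ≤ Mg * (θ k * R0) :=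
      mul_le_mul_of_nonneg_left h3 hMg
    have h5 : ‖ls‖ * ‖A (x k) - y k‖ ≤ ‖ls‖ * (θ k * R0) :=
      mul_le_mul_of_nonneg_left h3 (norm_nonneg ls)
    rw [hP, hPstar, hfeasS]
    nlinarith [h2, hgd, hip, h4, h5]
end

section
/- Suppose the implicit scheme (conditions (i)–(v)) holds for all k ∈ ℕ with the alternative semi-implicit multiplier choice λ̄_{k+1} = λ_k + (α_k/θ_k)(Av_k + Bw_{k+1} − b), parameter recursions θ₀ = 1, θ_{k+1} = θ_k/(1+α_k), γ₀ > 0, γ_{k+1} = (γ_k + α_kμ_f)/(1+α_k), β₀ > 0, β_{k+1} = (β_k + α_kμ_g)/(1+α_k), the initial setting γ₀ = μ_f whenever μ_f > 0 and β₀ = μ_g whenever μ_g > 0, and step sizes determined by α_k²‖A‖² = γ_k θ_k (with ‖A‖ > 0). Let (x*, y*, λ*) be a saddle point, E₀ and R₀ as before. Then for all k: E_{k+1} − E_k ≤ −α_k E_{k+1}; ‖Ax_k + By_k − b‖ ≤ θ_k R₀; f(x_k) + g(y_k) + ⟪λ*, Ax_k + By_k − b⟫ − f(x*) − g(y*) ≤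 θ_k E₀; |f(x_k) + g(y_k) − f(x*) − g(y*)| ≤ θ_k(E₀ + ‖λ*‖R₀); and θ_k ≤ min{ Q/(Q + √γ₀·k), 4Q²/(2Q + √μ_f·k)² } where Q = ‖A‖ + √γ₀. -/
open Real
open scoped RealInnerProductSpace

/-!
The Lyapunov function contracts, `(1 + αₖ) Eₖ₊₁ ≤ Eₖ`. Test the strongly convex inequality (ii) at
`x*` (with weight `αₖ`) and at `xₖ`: by (i) the sum reduces to
`(γₖ + αₖμ_f)/2 ‖vₖ₊₁ − x*‖² + γₖ/2 ‖vₖ₊₁ − vₖ‖² ≤ γₖ/2 ‖vₖ − x*‖²` up to the Lagrangian terms, and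
likewise for (iv) and (v). The multipliers `λ̄ₖ₊₁` used there differ from `λₖ₊₁` only by
`(αₖ/θₖ) A (vₖ₊₁ − vₖ)`; by Young's inequality and the step-size rule `αₖ²‖A‖² = γₖθₖ`, the resulting
error is exactly paid for by `γₖ/2 ‖vₖ₊₁ − vₖ‖²`. Hence `Eₖ ≤ θₖ E₀`.

The residual `rₖ = Axₖ + Byₖ − b` satisfies `rₖ = θₖ (r₀ − λ₀ + λₖ)`, and `‖λₖ − λ*‖ ≤ √(2E₀)` by the
dual part of `E`, which gives the feasibility and objective bounds. Finally
`γₖ = μ_f + (γ₀ − μ_f) θₖ`, so the step-size rule forces `αₖ‖A‖ ≥ √γ₀ θₖ` and `αₖ‖A‖ ≥ √(μ_f θₖ)`;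
these give the `O(1/k)` and `O(1/k²)` decay of `θₖ`.
-/

section Parameters

variable {α θ : ℕ → ℝ}

theorem theta_pos (hα : ∀ k, 0 < α k) (hθ0 : θ 0 = 1)
    (hθrec : ∀ k, θ (k + 1) = θ k / (1 + α k)) (k : ℕ) : 0 < θ k := by
  induction k with
  | zero => simp [hθ0]
  | succ k ih => rw [hθrec]; exact div_pos ih (by linarith [hα k])

theorem theta_le_one (hα : ∀ k, 0 < α k) (hθ0 : θ 0 = 1)
    (hθrec : ∀ k, θ (k + 1) = θ k / (1 + α k)) (k : ℕ) : θ k ≤ 1 := by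
  induction k with
  | zero => simp [hθ0]
  | succ k ih => rw [hθrec, div_le_one (by linarith [hα k])]; linarith [hα k]

theorem theta_eq_one_add_mul_theta_succ (hα : ∀ k, 0 < α k)
    (hθrec : ∀ k, θ (k + 1) = θ k / (1 + α k)) (k : ℕ) : θ k = (1 + α k) * θ (k + 1) := by
  rw [hθrec, mul_div_cancel₀ _ (by linarith [hα k])]

theorem averaged_rec_eq {u : ℕ → ℝ} {μ : ℝ} (hα : ∀ k, 0 < α k) (hθ0 : θ 0 = 1)
    (hθrec : ∀ k, θ (k + 1) = θ k / (1 + α k))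
    (hrec : ∀ k, u (k + 1) = (u k + α k * μ) / (1 + α k)) (k : ℕ) :
    u k = μ + (u 0 - μ) * θ k := by
  induction k with
  | zero => simp [hθ0]
  | succ k ih =>
    have : 1 + α k ≠ 0 := by linarith [hα k]
    rw [hrec, hθrec, ih]
    field_simp
    ring

theorem averaged_rec_nonneg {u : ℕ → ℝ} {μ : ℝ} (hα : ∀ k, 0 < α k) (hθ0 : θ 0 = 1)
    (hθrec : ∀ k, θ (k + 1) = θ k / (1 + α k))
    (hrec : ∀ k, u (k + 1) = (u k + α k * μ) / (1 + α k)) (hμ : 0 ≤ μ) (hu0 : 0 ≤ u 0)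
    (k : ℕ) : 0 ≤ u k := by
  rw [averaged_rec_eq hα hθ0 hθrec hrec k]
  nlinarith [theta_pos hα hθ0 hθrec k, theta_le_one hα hθ0 hθrec k]

theorem sqrt_mul_le_of_step_rule (hα : ∀ k, 0 < α k) (hθ0 : θ 0 = 1)
    (hθrec : ∀ k, θ (k + 1) = θ k / (1 + α k)) {γ : ℕ → ℝ} {μ c : ℝ} (hμ : 0 ≤ μ)
    (hγ0 : μ ≤ γ 0) (hγrec : ∀ k, γ (k + 1) = (γ k + α k * μ) / (1 + α k)) (hc : 0 ≤ c)
    (hstep : ∀ k, α k ^ 2 * c ^ 2 = γ k * θ k) (k : ℕ) :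
    √(γ 0) * θ k ≤ α k * c ∧ √μ * √(θ k) ≤ α k * c := by
  have hγ := averaged_rec_eq hα hθ0 hθrec hγrec k
  have hθ := theta_pos hα hθ0 hθrec k
  have hθ1 := theta_le_one hα hθ0 hθrec k
  have hαc : 0 ≤ α k * c := mul_nonneg (hα k).le hc
  constructor <;> refine le_of_pow_le_pow_left₀ two_ne_zero hαc ?_ <;>
    rw [mul_pow, mul_pow, sq_sqrt (by linarith), hstep k, hγ]
  · nlinarith [mul_nonneg (mul_nonneg hμ hθ.le) (sub_nonneg.mpr hθ1)]
  · rw [sq_sqrt hθ.le]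
    nlinarith [mul_nonneg (sub_nonneg.mpr hγ0) (sq_nonneg (θ k))]

theorem le_theta_mul_of_step {E : ℕ → ℝ} (hα : ∀ k, 0 < α k) (hθ0 : θ 0 = 1)
    (hθrec : ∀ k, θ (k + 1) = θ k / (1 + α k)) (hE : ∀ k, (1 + α k) * E (k + 1) ≤ E k)
    (k : ℕ) : E k ≤ θ k * E 0 := by
  induction k with
  | zero => simp [hθ0]
  | succ k ih =>
    refine le_of_mul_le_mul_left ?_ (by linarith [hα k] : 0 < 1 + α k)
    calc (1 + α k) * E (k + 1) ≤ θ k * E 0 := (hE k).trans ih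
      _ = (1 + α k) * (θ (k + 1) * E 0) := by
        rw [theta_eq_one_add_mul_theta_succ hα hθrec k]; ring

theorem eq_theta_smul_of_step {V : Type*} [AddCommGroup V] [Module ℝ V] {r l : ℕ → V}
    (hα : ∀ k, 0 < α k) (hθ0 : θ 0 = 1) (hθrec : ∀ k, θ (k + 1) = θ k / (1 + α k))
    (hr : ∀ k, (1 + α k) • r (k + 1) = r k + θ k • (l (k + 1) - l k)) (k : ℕ) :
    r k = θ k • (r 0 - l 0 + l k) := by
  induction k with
  | zero => simp [hθ0]
  | succ k ih =>
    refine smul_right_injective V (by linarith [hα k] : 1 + α k ≠ 0) ?_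
    simp only
    rw [hr, ih, smul_smul, ← theta_eq_one_add_mul_theta_succ hα hθrec k]
    module

theorem theta_le_div_add (hα : ∀ k, 0 < α k) (hθ0 : θ 0 = 1)
    (hθrec : ∀ k, θ (k + 1) = θ k / (1 + α k)) {s c Q : ℝ} (hs : 0 ≤ s) (hcQ : c ≤ Q) (hQ : 0 < Q)
    (hstep : ∀ k, s * θ k ≤ α k * c) (k : ℕ) : θ k ≤ Q / (Q + s * k) := by
  rw [le_div_iff₀ (by positivity)]
  induction k with
  | zero => simp [hθ0]
  | succ k ih =>
    rw [hθrec, div_mul_eq_mul_div, div_le_iff₀ (by linarith [hα k])]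
    push_cast
    linarith [hstep k, mul_le_mul_of_nonneg_left hcQ (hα k).le]

theorem theta_le_div_add_sq (hα : ∀ k, 0 < α k) (hθ0 : θ 0 = 1)
    (hθrec : ∀ k, θ (k + 1) = θ k / (1 + α k)) {a c Q : ℝ} (ha : 0 ≤ a)
    (hQ : c + a ≤ Q) (hQ0 : 0 < Q) (hstep : ∀ k, a * √(θ k) ≤ α k * c) (k : ℕ) :
    θ k ≤ 4 * Q ^ 2 / (2 * Q + a * k) ^ 2 := by
  have hθpos := theta_pos hα hθ0 hθrec
  have hθ1 := theta_le_one hα hθ0 hθrec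
  suffices h : √(θ k) * (2 * Q + a * k) ≤ 2 * Q by
    rw [le_div_iff₀ (by positivity), ← sq_sqrt (hθpos k).le, ← mul_pow]
    nlinarith [pow_le_pow_left₀ (by positivity) h 2]
  induction k with
  | zero => simp [hθ0]
  | succ k ih =>
    set t := a * √(θ k)
    have ht0 : 0 ≤ t := by positivity
    have hta : t ≤ a := mul_le_of_le_one_right ha (sqrt_le_one.mpr (hθ1 k))
    have htα : t ≤ α k * c := hstep k
    -- `t ≤ α c` and `t ≤ a ≤ Q - c`; what remains is `α (4Q - c) (Q - c) ≥ 0`.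
    have hgap : 4 * Q * t + t ^ 2 ≤ 4 * Q ^ 2 * α k := by
      nlinarith [mul_le_mul_of_nonneg_left htα (by positivity : (0:ℝ) ≤ 4 * Q),
        mul_le_mul htα hta ht0 (ht0.trans htα),
        mul_le_mul_of_nonneg_left (by linarith : a ≤ Q - c) (ht0.trans htα),
        mul_nonneg (hα k).le (mul_nonneg (by linarith : (0:ℝ) ≤ 4 * Q - c) (by linarith : 0 ≤ Q - c))]
    have hsq : θ k * (2 * Q + a * (k + 1)) ^ 2 = (√(θ k) * (2 * Q + a * k) + t) ^ 2 := by
      linear_combination (-(2 * Q + a * (k + 1)) ^ 2) * sq_sqrt (hθpos k).le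
    have hS : (√(θ k) * (2 * Q + a * k) + t) ^ 2 ≤ (2 * Q + t) ^ 2 :=
      pow_le_pow_left₀ (by positivity) (by linarith) 2
    refine le_of_pow_le_pow_left₀ two_ne_zero (by positivity) ?_
    rw [mul_pow, sq_sqrt (hθpos _).le, hθrec, div_mul_eq_mul_div, div_le_iff₀ (by linarith [hα k])]
    push_cast
    linarith

end Parameters

section Bounds

theorem le_sqrt_two_mul_of_half_mul_sq_le {θ t e : ℝ} (hθ : 0 < θ) (ht : 0 ≤ t)
    (h : θ / 2 * t ^ 2 ≤ θ * e) : t ≤ √(2 * e) :=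
  (le_sqrt ht (by nlinarith [sq_nonneg t])).mpr (by nlinarith)

theorem abs_le_add_of_nonneg_of_le {a c p q : ℝ} (h0 : 0 ≤ a + c) (hp : a + c ≤ p)
    (hc : |c| ≤ q) : |a| ≤ p + q := by
  rw [abs_le] at hc ⊢
  constructor <;> linarith

theorem norm_smul_sub_add_le {V : Type*} [SeminormedAddCommGroup V] [NormedSpace ℝ V]
    {θ ρ : ℝ} (hθ : 0 ≤ θ) {r l₀ l l' : V} (hl : ‖l - l'‖ ≤ ρ) :
    ‖θ • (r - l₀ + l)‖ ≤ θ * (ρ + ‖l₀ - l'‖ + ‖r‖) := by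
  rw [norm_smul, norm_of_nonneg hθ]
  refine mul_le_mul_of_nonneg_left ?_ hθ
  calc ‖r - l₀ + l‖ = ‖(l - l') + (l' - l₀) + r‖ := by congr 1; abel
    _ ≤ ‖l - l'‖ + ‖l' - l₀‖ + ‖r‖ := norm_add₃_le
    _ ≤ ρ + ‖l₀ - l'‖ + ‖r‖ := by rw [norm_sub_rev l']; linarith

end Bounds

section Estimates

variable {H : Type*} [NormedAddCommGroup H] [InnerProductSpace ℝ H]

theorem primal_step_estimate (F : H → ℝ) {S : Set H} {α μ γ : ℝ} (hα : 0 < α) (hμ : 0 ≤ μ)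
    {x x' v v' z : H} (hrel : x' - x = α • (v' - x'))
    (hVI : ∀ z ∈ S, F z ≥ F x' + ⟪μ • (x' - v') - (γ / α) • (v' - v), z - x'⟫
      + μ / 2 * ‖z - x'‖ ^ 2)
    (hx : x ∈ S) (hz : z ∈ S) :
    (1 + α) * F x' + (γ + α * μ) / 2 * ‖v' - z‖ ^ 2 + γ / 2 * ‖v' - v‖ ^ 2
      ≤ F x + α * F z + γ / 2 * ‖v - z‖ ^ 2 := by
  have hz' := hVI z hz
  have hx' := hVI x hx
  rw [show x - x' = α • (x' - v') by linear_combination (norm := module) -hrel] at hx'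
  rw [show z - x' = (z - v') - (x' - v') by abel] at hz'
  rw [show v - z = -((v' - v) + (z - v')) by abel, norm_neg]
  rw [show v' - z = -(z - v') by abel, norm_neg]
  set d := x' - v'
  set ζ := z - v'
  obtain ⟨c, rfl⟩ : ∃ c, γ = α * c := ⟨γ / α, by field_simp⟩
  rw [mul_div_cancel_left₀ c hα.ne'] at hz' hx'
  simp only [inner_sub_left, inner_sub_right, real_inner_smul_left, real_inner_smul_right,
    norm_sub_sq_real, norm_add_sq_real, norm_smul, norm_eq_abs, mul_pow, sq_abs,
    real_inner_self_eq_norm_sq, real_inner_comm d ζ] at hz' hx' ⊢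
  linear_combination α * hz' + hx' + mul_nonneg (mul_nonneg hα.le hμ) (sq_nonneg ‖d‖) / 2
    + mul_nonneg (mul_nonneg (sq_nonneg α) hμ) (sq_nonneg ‖d‖) / 2

theorem dual_step_estimate {θ c : ℝ} (hθ : 0 ≤ θ) (l l' l₀ d : H) :
    θ * ⟪l₀ - (l' - c • d), l' - l⟫
      ≤ θ / 2 * ‖l - l₀‖ ^ 2 - θ / 2 * ‖l' - l₀‖ ^ 2 + θ * c ^ 2 / 2 * ‖d‖ ^ 2 := by
  have hyoung : 0 ≤ θ / 2 * ‖(l' - l) - c • d‖ ^ 2 := by positivity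
  rw [show l₀ - (l' - c • d) = c • d - (l' - l₀) by abel,
    show l - l₀ = (l' - l₀) - (l' - l) by abel]
  simp only [inner_sub_left, inner_sub_right, real_inner_smul_left, real_inner_smul_right,
    norm_sub_sq_real, norm_smul, norm_eq_abs, mul_pow, sq_abs, real_inner_comm d] at hyoung ⊢
  linear_combination hyoung

end Estimates

section Scheme

variable {H₁ H₂ K : Type*} [NormedAddCommGroup H₁] [InnerProductSpace ℝ H₁]
  [NormedAddCommGroup H₂] [InnerProductSpace ℝ H₂] [NormedAddCommGroup K] [InnerProductSpace ℝ K]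
  {A : H₁ →L[ℝ] K} {B : H₂ →L[ℝ] K} {b : K}

theorem residual_step {α θ : ℝ} {x x' v' : H₁} {y y' w' : H₂} {l l' : K}
    (hx : x' - x = α • (v' - x')) (hy : y' - y = α • (w' - y'))
    (hl : θ • (l' - l) = α • (A v' + B w' - b)) :
    (1 + α) • (A x' + B y' - b) = (A x + B y - b) + θ • (l' - l) := by
  have hAx := congrArg A hx
  have hBy := congrArg B hy
  simp only [map_sub, map_smul] at hAx hBy
  rw [hl]
  linear_combination (norm := module) hAx + hBy

theorem lyapunov_step {X : Set H₁} {Y : Set H₂} {f : H₁ → ℝ} {g : H₂ → ℝ}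
    {α θ θ' γ γ' β β' μf μg : ℝ} {x x' v v' xs : H₁} {y y' w w' ys : H₂} {l l' lb ls : K}
    (hα : 0 < α) (hθ : 0 < θ) (hβ : 0 ≤ β) (hμf : 0 ≤ μf) (hμg : 0 ≤ μg)
    (hx : x ∈ X) (hy : y ∈ Y) (hxs : xs ∈ X) (hys : ys ∈ Y) (hfeas : A xs + B ys = b)
    (hi : x' - x = α • (v' - x'))
    (hii : ∀ z ∈ X, f z + ⟪lb, A z⟫ ≥ f x' + ⟪lb, A x'⟫
      + ⟪μf • (x' - v') - (γ / α) • (v' - v), z - x'⟫ + μf / 2 * ‖z - x'‖ ^ 2)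
    (hiii : θ • (l' - l) = α • (A v' + B w' - b))
    (hiv : ∀ z ∈ Y, g z + ⟪lb, B z⟫ ≥ g y' + ⟪lb, B y'⟫
      + ⟪μg • (y' - w') - (β / α) • (w' - w), z - y'⟫ + μg / 2 * ‖z - y'‖ ^ 2)
    (hv : y' - y = α • (w' - y'))
    (hlb : lb = l + (α / θ) • (A v + B w' - b))
    (hstep : α ^ 2 * ‖A‖ ^ 2 = γ * θ) (hθ' : θ' = θ / (1 + α))
    (hγ' : γ' = (γ + α * μf) / (1 + α)) (hβ' : β' = (β + α * μg) / (1 + α)) :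
    (1 + α) * (f x' + g y' + ⟪ls, A x' + B y' - b⟫ - f xs - g ys
        + γ' / 2 * ‖v' - xs‖ ^ 2 + β' / 2 * ‖w' - ys‖ ^ 2 + θ' / 2 * ‖l' - ls‖ ^ 2)
      ≤ f x + g y + ⟪ls, A x + B y - b⟫ - f xs - g ys
        + γ / 2 * ‖v - xs‖ ^ 2 + β / 2 * ‖w - ys‖ ^ 2 + θ / 2 * ‖l - ls‖ ^ 2 := by
  have hF := primal_step_estimate (fun z => f z + ⟪lb, A z⟫) hα hμf hi hii hx hxs
  have hG := primal_step_estimate (fun z => g z + ⟪lb, B z⟫) hα hμg hv hiv hy hys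
  have hl' : l' - l = (α / θ) • (A v' + B w' - b) := by
    rw [div_eq_inv_mul, mul_smul, ← hiii, smul_smul, inv_mul_cancel₀ hθ.ne', one_smul]
  have hlb' : lb = l' - (α / θ) • A (v' - v) := by
    rw [hlb, map_sub]
    linear_combination (norm := module) -hl'
  have hdual := dual_step_estimate hθ.le l l' ls (A (v' - v)) (c := α / θ)
  rw [← hlb', inner_sub_left] at hdual
  have hAv : θ * (α / θ) ^ 2 / 2 * ‖A (v' - v)‖ ^ 2 ≤ γ / 2 * ‖v' - v‖ ^ 2 := by
    have hγ : θ * (α / θ) ^ 2 * ‖A‖ ^ 2 = γ := by field_simp; linear_combination hstep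
    calc θ * (α / θ) ^ 2 / 2 * ‖A (v' - v)‖ ^ 2
        ≤ θ * (α / θ) ^ 2 / 2 * (‖A‖ * ‖v' - v‖) ^ 2 := by
          gcongr
          exact A.le_opNorm _
      _ = γ / 2 * ‖v' - v‖ ^ 2 := by rw [← hγ]; ring
  have hres := residual_step hi hv hiii
  have hlink (μ : K) :
      (1 + α) * ⟪μ, A x' + B y' - b⟫ = ⟪μ, A x + B y - b⟫ + θ * ⟪μ, l' - l⟫ := by
    rw [← real_inner_smul_right, hres, inner_add_right, real_inner_smul_right]
  have hlink_lb := hlink lb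
  have hlink_ls := hlink ls
  have hb : ⟪lb, b⟫ = ⟪lb, A xs⟫ + ⟪lb, B ys⟫ := by rw [← hfeas, inner_add_right]
  have hw : 0 ≤ β / 2 * ‖w' - w‖ ^ 2 := by positivity
  have h1α : 1 + α ≠ 0 := by positivity
  rw [hθ', hγ', hβ']
  field_simp
  simp only [inner_add_right, inner_sub_right] at hlink_lb hlink_ls hdual ⊢
  rw [hb] at hlink_lb
  linarith

end Scheme

theorem semi_implicit_choice_lw_convergence_general
    {m n r : ℕ}
    (X : Set (EuclideanSpace ℝ (Fin m))) (Y : Set (EuclideanSpace ℝ (Fin n)))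
    (A : EuclideanSpace ℝ (Fin m) →L[ℝ] EuclideanSpace ℝ (Fin r))
    (B : EuclideanSpace ℝ (Fin n) →L[ℝ] EuclideanSpace ℝ (Fin r))
    (b : EuclideanSpace ℝ (Fin r))
    (f : EuclideanSpace ℝ (Fin m) → ℝ) (g : EuclideanSpace ℝ (Fin n) → ℝ)
    (μf μg : ℝ) (hμf : 0 ≤ μf) (hμg : 0 ≤ μg)
    -- parameter sequences
    (α θ γ β : ℕ → ℝ) (hα : ∀ k, 0 < α k)
    (hθ0 : θ 0 = 1) (hγ0pos : 0 < γ 0) (hβ0pos : 0 < β 0)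
    (hθrec : ∀ k, θ (k + 1) = θ k / (1 + α k))
    (hγrec : ∀ k, γ (k + 1) = (γ k + α k * μf) / (1 + α k))
    (hβrec : ∀ k, β (k + 1) = (β k + α k * μg) / (1 + α k))
    (hγinit : 0 < μf → γ 0 = μf)
    -- iterates
    (x v : ℕ → EuclideanSpace ℝ (Fin m)) (y w : ℕ → EuclideanSpace ℝ (Fin n))
    (l lbar : ℕ → EuclideanSpace ℝ (Fin r))
    (hx0 : x 0 ∈ X) (hy0 : y 0 ∈ Y)
    -- the implicit scheme (i)-(v)
    (hi : ∀ k, x (k + 1) - x k = α k • (v (k + 1) - x (k + 1)))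
    (hii : ∀ k, x (k + 1) ∈ X ∧ ∀ z ∈ X,
      f z + ⟪lbar k, A z⟫ ≥
        f (x (k + 1)) + ⟪lbar k, A (x (k + 1))⟫
          + ⟪μf • (x (k + 1) - v (k + 1)) - (γ k / α k) • (v (k + 1) - v k),
              z - x (k + 1)⟫
          + μf / 2 * ‖z - x (k + 1)‖ ^ 2)
    (hiii : ∀ k, θ k • (l (k + 1) - l k) = α k • (A (v (k + 1)) + B (w (k + 1)) - b))
    (hiv : ∀ k, y (k + 1) ∈ Y ∧ ∀ z ∈ Y,
      g z + ⟪lbar k, B z⟫ ≥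
        g (y (k + 1)) + ⟪lbar k, B (y (k + 1))⟫
          + ⟪μg • (y (k + 1) - w (k + 1)) - (β k / α k) • (w (k + 1) - w k),
              z - y (k + 1)⟫
          + μg / 2 * ‖z - y (k + 1)‖ ^ 2)
    (hv : ∀ k, y (k + 1) - y k = α k • (w (k + 1) - y (k + 1)))
    -- multiplier choice and step-size rule
    (hlbar : ∀ k, lbar k = l k + (α k / θ k) • (A (v k) + B (w (k + 1)) - b))
    (hstep : ∀ k, α k ^ 2 * ‖A‖ ^ 2 = γ k * θ k)
    -- saddle point
    (xs : EuclideanSpace ℝ (Fin m)) (ys : EuclideanSpace ℝ (Fin n))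
    (ls : EuclideanSpace ℝ (Fin r))
    (hxs : xs ∈ X) (hys : ys ∈ Y) (hfeas : A xs + B ys = b)
    (hsaddle : ∀ x' ∈ X, ∀ y' ∈ Y,
      f x' + g y' + ⟪ls, A x' + B y' - b⟫ ≥ f xs + g ys)
    -- Lyapunov function and constants
    (E : ℕ → ℝ)
    (hE : ∀ k, E k = f (x k) + g (y k) + ⟪ls, A (x k) + B (y k) - b⟫ - f xs - g ys
      + γ k / 2 * ‖v k - xs‖ ^ 2 + β k / 2 * ‖w k - ys‖ ^ 2 + θ k / 2 * ‖l k - ls‖ ^ 2)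
    (R0 : ℝ)
    (hR0 : R0 = Real.sqrt (2 * E 0) + ‖l 0 - ls‖ + ‖A (x 0) + B (y 0) - b‖)
    (Q : ℝ) (hQ : Q = ‖A‖ + Real.sqrt (γ 0)) :
    ∀ k : ℕ,
      E (k + 1) - E k ≤ -(α k) * E (k + 1) ∧
      E k ≤ θ k * E 0 ∧
      ‖A (x k) + B (y k) - b‖ ≤ θ k * R0 ∧
      f (x k) + g (y k) + ⟪ls, A (x k) + B (y k) - b⟫ - f xs - g ys ≤ θ k * E 0 ∧
      |f (x k) + g (y k) - f xs - g ys| ≤ θ k * (E 0 + ‖ls‖ * R0) ∧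
      θ k ≤ min (Q / (Q + Real.sqrt (γ 0) * (k : ℝ)))
                (4 * Q ^ 2 / (2 * Q + Real.sqrt μf * (k : ℝ)) ^ 2) := by
  have hθ := theta_pos hα hθ0 hθrec
  have hγ0μ : μf ≤ γ 0 := hμf.eq_or_lt.elim (fun h => h ▸ hγ0pos.le) fun h => (hγinit h).ge
  have hγ := averaged_rec_nonneg hα hθ0 hθrec hγrec hμf hγ0pos.le
  have hβ := averaged_rec_nonneg hα hθ0 hθrec hβrec hμg hβ0pos.le
  have hX k : x k ∈ X := by cases k with | zero => exact hx0 | succ k => exact (hii k).1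
  have hY k : y k ∈ Y := by cases k with | zero => exact hy0 | succ k => exact (hiv k).1
  have hdecay k : (1 + α k) * E (k + 1) ≤ E k := by
    rw [hE, hE]
    exact lyapunov_step (hα k) (hθ k) (hβ k) hμf hμg (hX k) (hY k) hxs hys hfeas (hi k)
      (hii k).2 (hiii k) (hiv k).2 (hv k) (hlbar k) (hstep k) (hθrec k) (hγrec k) (hβrec k)
  have hEθ := le_theta_mul_of_step hα hθ0 hθrec hdecay
  have hgap k : 0 ≤ f (x k) + g (y k) + ⟪ls, A (x k) + B (y k) - b⟫ - f xs - g ys := by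
    linarith [hsaddle _ (hX k) _ (hY k)]
  have hlow k : f (x k) + g (y k) + ⟪ls, A (x k) + B (y k) - b⟫ - f xs - g ys ≤ E k ∧
      θ k / 2 * ‖l k - ls‖ ^ 2 ≤ E k := by
    rw [hE]
    constructor <;> nlinarith [hgap k, mul_nonneg (hγ k) (sq_nonneg ‖v k - xs‖),
      mul_nonneg (hβ k) (sq_nonneg ‖w k - ys‖), mul_nonneg (hθ k).le (sq_nonneg ‖l k - ls‖)]
  have hE0 : 0 ≤ E 0 := (hgap 0).trans (hlow 0).1
  have hr := eq_theta_smul_of_step (r := fun k => A (x k) + B (y k) - b) hα hθ0 hθrec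
    fun k => residual_step (hi k) (hv k) (hiii k)
  have hres k : ‖A (x k) + B (y k) - b‖ ≤ θ k * R0 := hR0 ▸ hr k ▸ norm_smul_sub_add_le (hθ k).le
    (le_sqrt_two_mul_of_half_mul_sq_le (hθ k) (norm_nonneg _) ((hlow k).2.trans (hEθ k)))
  have hrate := sqrt_mul_le_of_step_rule hα hθ0 hθrec hμf hγ0μ hγrec (norm_nonneg A) hstep
  have hQ0 : 0 < Q := hQ ▸ add_pos_of_nonneg_of_pos (norm_nonneg A) (sqrt_pos.mpr hγ0pos)
  have hAQ : ‖A‖ + √μf ≤ Q := by rw [hQ]; gcongr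
  intro k
  refine ⟨by linarith [hdecay k], hEθ k, hres k, (hlow k).1.trans (hEθ k), ?_, le_min
    (theta_le_div_add hα hθ0 hθrec (sqrt_nonneg _) (by linarith [sqrt_nonneg μf]) hQ0
      (fun k => (hrate k).1) k)
    (theta_le_div_add_sq hα hθ0 hθrec (sqrt_nonneg _) hAQ hQ0 (fun k => (hrate k).2) k)⟩
  rw [mul_add, mul_left_comm]
  exact abs_le_add_of_nonneg_of_le (by linarith [hgap k]) (by linarith [(hlow k).1, hEθ k])
    ((abs_real_inner_le_norm _ _).trans (mul_le_mul_of_nonneg_left (hres k) (norm_nonneg ls)))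

/-- Convergence of the alternative semi-implicit primal-dual method (Theorem 3.2):
multiplier choice `λ̄ₖ₊₁ = λₖ + (αₖ/θₖ)(A vₖ + B wₖ₊₁ − b)` with step sizes
`αₖ²‖A‖² = γₖ θₖ`. -/
theorem semi_implicit_choice_lw_convergence
    {m n r : ℕ}
    (X : Set (EuclideanSpace ℝ (Fin m))) (Y : Set (EuclideanSpace ℝ (Fin n)))
    (hXconv : Convex ℝ X) (hXclosed : IsClosed X)
    (hYconv : Convex ℝ Y) (hYclosed : IsClosed Y)
    (A : EuclideanSpace ℝ (Fin m) →L[ℝ] EuclideanSpace ℝ (Fin r))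
    (B : EuclideanSpace ℝ (Fin n) →L[ℝ] EuclideanSpace ℝ (Fin r))
    (b : EuclideanSpace ℝ (Fin r))
    (f : EuclideanSpace ℝ (Fin m) → ℝ) (g : EuclideanSpace ℝ (Fin n) → ℝ)
    (hfconv : ConvexOn ℝ Set.univ f) (hgconv : ConvexOn ℝ Set.univ g)
    (μf μg : ℝ) (hμf : 0 ≤ μf) (hμg : 0 ≤ μg)
    -- parameter sequences
    (α θ γ β : ℕ → ℝ) (hα : ∀ k, 0 < α k)
    (hθ0 : θ 0 = 1) (hγ0pos : 0 < γ 0) (hβ0pos : 0 < β 0)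
    (hθrec : ∀ k, θ (k + 1) = θ k / (1 + α k))
    (hγrec : ∀ k, γ (k + 1) = (γ k + α k * μf) / (1 + α k))
    (hβrec : ∀ k, β (k + 1) = (β k + α k * μg) / (1 + α k))
    (hγinit : 0 < μf → γ 0 = μf) (hβinit : 0 < μg → β 0 = μg)
    -- iterates
    (x v : ℕ → EuclideanSpace ℝ (Fin m)) (y w : ℕ → EuclideanSpace ℝ (Fin n))
    (l lbar : ℕ → EuclideanSpace ℝ (Fin r))
    (hx0 : x 0 ∈ X) (hy0 : y 0 ∈ Y)
    -- the implicit scheme (i)-(v)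
    (hi : ∀ k, x (k + 1) - x k = α k • (v (k + 1) - x (k + 1)))
    (hii : ∀ k, x (k + 1) ∈ X ∧ ∀ z ∈ X,
      f z + ⟪lbar k, A z⟫ ≥
        f (x (k + 1)) + ⟪lbar k, A (x (k + 1))⟫
          + ⟪μf • (x (k + 1) - v (k + 1)) - (γ k / α k) • (v (k + 1) - v k),
              z - x (k + 1)⟫
          + μf / 2 * ‖z - x (k + 1)‖ ^ 2)
    (hiii : ∀ k, θ k • (l (k + 1) - l k) = α k • (A (v (k + 1)) + B (w (k + 1)) - b))
    (hiv : ∀ k, y (k + 1) ∈ Y ∧ ∀ z ∈ Y,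
      g z + ⟪lbar k, B z⟫ ≥
        g (y (k + 1)) + ⟪lbar k, B (y (k + 1))⟫
          + ⟪μg • (y (k + 1) - w (k + 1)) - (β k / α k) • (w (k + 1) - w k),
              z - y (k + 1)⟫
          + μg / 2 * ‖z - y (k + 1)‖ ^ 2)
    (hv : ∀ k, y (k + 1) - y k = α k • (w (k + 1) - y (k + 1)))
    -- multiplier choice and step-size rule
    (hlbar : ∀ k, lbar k = l k + (α k / θ k) • (A (v k) + B (w (k + 1)) - b))
    (hstep : ∀ k, α k ^ 2 * ‖A‖ ^ 2 = γ k * θ k)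
    -- saddle point
    (xs : EuclideanSpace ℝ (Fin m)) (ys : EuclideanSpace ℝ (Fin n))
    (ls : EuclideanSpace ℝ (Fin r))
    (hxs : xs ∈ X) (hys : ys ∈ Y) (hfeas : A xs + B ys = b)
    (hsaddle : ∀ x' ∈ X, ∀ y' ∈ Y,
      f x' + g y' + ⟪ls, A x' + B y' - b⟫ ≥ f xs + g ys)
    -- Lyapunov function and constants
    (E : ℕ → ℝ)
    (hE : ∀ k, E k = f (x k) + g (y k) + ⟪ls, A (x k) + B (y k) - b⟫ - f xs - g ys
      + γ k / 2 * ‖v k - xs‖ ^ 2 + β k / 2 * ‖w k - ys‖ ^ 2 + θ k / 2 * ‖l k - ls‖ ^ 2)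
    (R0 : ℝ)
    (hR0 : R0 = Real.sqrt (2 * E 0) + ‖l 0 - ls‖ + ‖A (x 0) + B (y 0) - b‖)
    (hA : 0 < ‖A‖)
    (Q : ℝ) (hQ : Q = ‖A‖ + Real.sqrt (γ 0)) :
    ∀ k : ℕ,
      E (k + 1) - E k ≤ -(α k) * E (k + 1) ∧
      E k ≤ θ k * E 0 ∧
      ‖A (x k) + B (y k) - b‖ ≤ θ k * R0 ∧
      f (x k) + g (y k) + ⟪ls, A (x k) + B (y k) - b⟫ - f xs - g ys ≤ θ k * E 0 ∧
      |f (x k) + g (y k) - f xs - g ys| ≤ θ k * (E 0 + ‖ls‖ * R0) ∧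
      θ k ≤ min (Q / (Q + Real.sqrt (γ 0) * (k : ℝ)))
                (4 * Q ^ 2 / (2 * Q + Real.sqrt μf * (k : ℝ)) ^ 2) :=
  semi_implicit_choice_lw_convergence_general X Y A B b f g μf μg hμf hμg α θ γ β hα hθ0 hγ0pos
    hβ0pos hθrec hγrec hβrec hγinit x v y w l lbar hx0 hy0 hi hii hiii hiv hv hlbar hstep xs ys ls
    hxs hys hfeas hsaddle E hE R0 hR0 Q hQ
end

section
/- Suppose the implicit scheme (conditions (i)–(v)) holds for all k ∈ ℕ with the fully implicit multiplier choice λ̄_{k+1} = λ_{k+1}, arbitrary step sizes α_k > 0, parameter recursions θ₀ = 1, θ_{k+1} = θ_k/(1+α_k), γ₀ > 0, γ_{k+1} = (γ_k + α_kμ_f)/(1+α_k), β₀ > 0, β_{k+1} = (β_k + α_kμ_g)/(1+α_k), and let (x*, y*, λ*) be a saddle point. Then E_{k+1} − E_k ≤ −α_k E_{k+1} for every k; consequently E_k ≤ θ_k E₀ where θ_k = ∏_{i=0}^{k−1} 1/(1+α_i), and if moreover α_k ≥ α_min > 0 for all k, then E_k ≤ (1+α_min)^{−k} E₀. -/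
open Real
open scoped RealInnerProductSpace

private lemma polar1 {r : ℕ} (u w s : EuclideanSpace ℝ (Fin r)) :
    ⟪u - w, u - s⟫ = (‖u - s‖^2 + ‖u - w‖^2 - ‖w - s‖^2)/2 := by
  have h1 : u - w = (u - s) - (w - s) := by abel
  have h2 := norm_sub_sq_real (u - s) (w - s)
  rw [h1, inner_sub_left, real_inner_self_eq_norm_sq, real_inner_comm]
  linarith

private lemma polar2 {r : ℕ} (p q s : EuclideanSpace ℝ (Fin r)) :
    ‖s - p‖^2 = ‖q - s‖^2 - 2*⟪p - q, s - q⟫ + ‖p - q‖^2 := by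
  have h1 : s - p = (s - q) - (p - q) := by abel
  have h2 := norm_sub_sq_real (s - q) (p - q)
  have h4 : ‖s - q‖ = ‖q - s‖ := norm_sub_rev _ _
  rw [h1, h2, h4, real_inner_comm]

set_option maxHeartbeats 4000000 in
/-- Contraction and linear convergence for the fully implicit multiplier choice
`λ̄ₖ₊₁ = λₖ₊₁` with arbitrary positive step sizes. -/
theorem fully_implicit_choice_contraction
    {m n r : ℕ}
    (X : Set (EuclideanSpace ℝ (Fin m))) (Y : Set (EuclideanSpace ℝ (Fin n)))
    (hXconv : Convex ℝ X) (hXclosed : IsClosed X)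
    (hYconv : Convex ℝ Y) (hYclosed : IsClosed Y)
    (A : EuclideanSpace ℝ (Fin m) →L[ℝ] EuclideanSpace ℝ (Fin r))
    (B : EuclideanSpace ℝ (Fin n) →L[ℝ] EuclideanSpace ℝ (Fin r))
    (b : EuclideanSpace ℝ (Fin r))
    (f : EuclideanSpace ℝ (Fin m) → ℝ) (g : EuclideanSpace ℝ (Fin n) → ℝ)
    (hfconv : ConvexOn ℝ Set.univ f) (hgconv : ConvexOn ℝ Set.univ g)
    (μf μg : ℝ) (hμf : 0 ≤ μf) (hμg : 0 ≤ μg)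
    -- parameter sequences
    (α θ γ β : ℕ → ℝ) (hα : ∀ k, 0 < α k)
    (hθ0 : θ 0 = 1) (hγ0pos : 0 < γ 0) (hβ0pos : 0 < β 0)
    (hθrec : ∀ k, θ (k + 1) = θ k / (1 + α k))
    (hγrec : ∀ k, γ (k + 1) = (γ k + α k * μf) / (1 + α k))
    (hβrec : ∀ k, β (k + 1) = (β k + α k * μg) / (1 + α k))
    -- iterates
    (x v : ℕ → EuclideanSpace ℝ (Fin m)) (y w : ℕ → EuclideanSpace ℝ (Fin n))
    (l lbar : ℕ → EuclideanSpace ℝ (Fin r))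
    (hx0 : x 0 ∈ X) (hy0 : y 0 ∈ Y)
    -- the implicit scheme (i)-(v)
    (hi : ∀ k, x (k + 1) - x k = α k • (v (k + 1) - x (k + 1)))
    (hii : ∀ k, x (k + 1) ∈ X ∧ ∀ z ∈ X,
      f z + ⟪lbar k, A z⟫ ≥
        f (x (k + 1)) + ⟪lbar k, A (x (k + 1))⟫
          + ⟪μf • (x (k + 1) - v (k + 1)) - (γ k / α k) • (v (k + 1) - v k),
              z - x (k + 1)⟫
          + μf / 2 * ‖z - x (k + 1)‖ ^ 2)
    (hiii : ∀ k, θ k • (l (k + 1) - l k) = α k • (A (v (k + 1)) + B (w (k + 1)) - b))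
    (hiv : ∀ k, y (k + 1) ∈ Y ∧ ∀ z ∈ Y,
      g z + ⟪lbar k, B z⟫ ≥
        g (y (k + 1)) + ⟪lbar k, B (y (k + 1))⟫
          + ⟪μg • (y (k + 1) - w (k + 1)) - (β k / α k) • (w (k + 1) - w k),
              z - y (k + 1)⟫
          + μg / 2 * ‖z - y (k + 1)‖ ^ 2)
    (hv : ∀ k, y (k + 1) - y k = α k • (w (k + 1) - y (k + 1)))
    -- multiplier choice and step-size rule
    (hlbar : ∀ k, lbar k = l (k + 1))
    -- saddle point
    (xs : EuclideanSpace ℝ (Fin m)) (ys : EuclideanSpace ℝ (Fin n))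
    (ls : EuclideanSpace ℝ (Fin r))
    (hxs : xs ∈ X) (hys : ys ∈ Y) (hfeas : A xs + B ys = b)
    (hsaddle : ∀ x' ∈ X, ∀ y' ∈ Y,
      f x' + g y' + ⟪ls, A x' + B y' - b⟫ ≥ f xs + g ys)
    -- Lyapunov function and constants
    (E : ℕ → ℝ)
    (hE : ∀ k, E k = f (x k) + g (y k) + ⟪ls, A (x k) + B (y k) - b⟫ - f xs - g ys
      + γ k / 2 * ‖v k - xs‖ ^ 2 + β k / 2 * ‖w k - ys‖ ^ 2 + θ k / 2 * ‖l k - ls‖ ^ 2)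
 :
    (∀ k : ℕ, E (k + 1) - E k ≤ -(α k) * E (k + 1)) ∧
    (∀ k : ℕ, θ k = ∏ i ∈ Finset.range k, (1 + α i)⁻¹) ∧
    (∀ k : ℕ, E k ≤ (∏ i ∈ Finset.range k, (1 + α i)⁻¹) * E 0) ∧
    (∀ αmin : ℝ, 0 < αmin → (∀ k, αmin ≤ α k) →
      ∀ k : ℕ, E k ≤ ((1 + αmin) ^ k)⁻¹ * E 0) := by
  have h1α : ∀ k, (0:ℝ) < 1 + α k := fun k => by linarith [hα k]
  have hxmem : ∀ k, x k ∈ X := fun k => Nat.casesOn k hx0 (fun j => (hii j).1)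
  have hymem : ∀ k, y k ∈ Y := fun k => Nat.casesOn k hy0 (fun j => (hiv j).1)
  have hθpos : ∀ k, 0 < θ k := by
    intro k; induction k with
    | zero => rw [hθ0]; norm_num
    | succ j ih => rw [hθrec j]; exact div_pos ih (h1α j)
  -- the key one-step contraction
  have key : ∀ k, (1 + α k) * E (k + 1) ≤ E k := by
    intro k
    have hapos := hα k
    obtain ⟨hx1, hf⟩ := hii k
    obtain ⟨hy1, hg⟩ := hiv k
    have hf0 := hf (x k) (hxmem k)
    have hfs := hf xs hxs
    have hg0 := hg (y k) (hymem k)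
    have hgs := hg ys hys
    rw [hlbar k] at hf0 hfs hg0 hgs
    -- vector identities from (i), (v)
    have hvx : (1 + α k) • x (k+1) = x k + α k • v (k+1) := by
      linear_combination (norm := module) hi k
    have hvy : (1 + α k) • y (k+1) = y k + α k • w (k+1) := by
      linear_combination (norm := module) hv k
    -- (H5) linear terms in l (k+1)
    have h5 : (1 + α k) * ⟪l (k+1), A (x (k+1))⟫
        = ⟪l (k+1), A (x k)⟫ + α k * ⟪l (k+1), A (v (k+1))⟫ := by
      have h := congrArg (fun z : EuclideanSpace ℝ (Fin m) => (⟪l (k+1), A z⟫ : ℝ)) hvx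
      simp only [map_smul, map_add, inner_add_right, inner_smul_right] at h
      linarith [h]
    have h5g : (1 + α k) * ⟪l (k+1), B (y (k+1))⟫
        = ⟪l (k+1), B (y k)⟫ + α k * ⟪l (k+1), B (w (k+1))⟫ := by
      have h := congrArg (fun z : EuclideanSpace ℝ (Fin n) => (⟪l (k+1), B z⟫ : ℝ)) hvy
      simp only [map_smul, map_add, inner_add_right, inner_smul_right] at h
      linarith [h]
    -- (H6) the P-terms
    have hvid2 : (x k - x (k+1)) + α k • (xs - x (k+1)) = α k • (xs - v (k+1)) := by
      linear_combination (norm := module) -hi k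
    have h6 : ⟪μf • (x (k + 1) - v (k + 1)) - (γ k / α k) • (v (k + 1) - v k), x k - x (k+1)⟫
        + α k * ⟪μf • (x (k + 1) - v (k + 1)) - (γ k / α k) • (v (k + 1) - v k), xs - x (k+1)⟫
        = α k * (μf * ⟪x (k+1) - v (k+1), xs - v (k+1)⟫)
          - γ k * ⟪v (k+1) - v k, xs - v (k+1)⟫ := by
      have h := congrArg
        (fun z : EuclideanSpace ℝ (Fin m) =>
          (⟪μf • (x (k + 1) - v (k + 1)) - (γ k / α k) • (v (k + 1) - v k), z⟫ : ℝ)) hvid2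
      simp only [inner_add_right, inner_smul_right] at h
      rw [h]
      have h2 : (⟪μf • (x (k + 1) - v (k + 1)) - (γ k / α k) • (v (k + 1) - v k),
          xs - v (k+1)⟫ : ℝ)
          = μf * ⟪x (k+1) - v (k+1), xs - v (k+1)⟫
            - (γ k / α k) * ⟪v (k+1) - v k, xs - v (k+1)⟫ := by
        simp only [inner_sub_left, real_inner_smul_left]
      rw [h2]
      field_simp
    have hwid2 : (y k - y (k+1)) + α k • (ys - y (k+1)) = α k • (ys - w (k+1)) := by
      linear_combination (norm := module) -hv k
    have h6g : ⟪μg • (y (k + 1) - w (k + 1)) - (β k / α k) • (w (k + 1) - w k), y k - y (k+1)⟫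
        + α k * ⟪μg • (y (k + 1) - w (k + 1)) - (β k / α k) • (w (k + 1) - w k), ys - y (k+1)⟫
        = α k * (μg * ⟪y (k+1) - w (k+1), ys - w (k+1)⟫)
          - β k * ⟪w (k+1) - w k, ys - w (k+1)⟫ := by
      have h := congrArg
        (fun z : EuclideanSpace ℝ (Fin n) =>
          (⟪μg • (y (k + 1) - w (k + 1)) - (β k / α k) • (w (k + 1) - w k), z⟫ : ℝ)) hwid2
      simp only [inner_add_right, inner_smul_right] at h
      rw [h]
      have h2 : (⟪μg • (y (k + 1) - w (k + 1)) - (β k / α k) • (w (k + 1) - w k),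
          ys - w (k+1)⟫ : ℝ)
          = μg * ⟪y (k+1) - w (k+1), ys - w (k+1)⟫
            - (β k / α k) * ⟪w (k+1) - w k, ys - w (k+1)⟫ := by
        simp only [inner_sub_left, real_inner_smul_left]
      rw [h2]
      field_simp
    -- (H9) linear terms in ls
    have hAx : (1 + α k) • A (x (k+1)) = A (x k) + α k • A (v (k+1)) := by
      rw [← map_smul, hvx, map_add, map_smul]
    have hBy : (1 + α k) • B (y (k+1)) = B (y k) + α k • B (w (k+1)) := by
      rw [← map_smul, hvy, map_add, map_smul]
    have hABv : (1 + α k) • (A (x (k+1)) + B (y (k+1)) - b) - (A (x k) + B (y k) - b)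
        = α k • (A (v (k+1)) + B (w (k+1)) - b) := by
      linear_combination (norm := module) hAx + hBy
    have h9 : (1 + α k) * ⟪ls, A (x (k+1)) + B (y (k+1)) - b⟫
        - ⟪ls, A (x k) + B (y k) - b⟫
        = α k * ⟪ls, A (v (k+1)) + B (w (k+1)) - b⟫ := by
      have h := congrArg (fun z : EuclideanSpace ℝ (Fin r) => (⟪ls, z⟫ : ℝ)) hABv
      simp only [inner_sub_right, inner_add_right, inner_smul_right] at h ⊢
      linarith [h]
    -- (H10) dual update tested against l (k+1) - ls
    have h10 : θ k * ⟪l (k+1) - l k, l (k+1) - ls⟫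
        = α k * ⟪A (v (k+1)) + B (w (k+1)) - b, l (k+1) - ls⟫ := by
      have h := congrArg (fun z : EuclideanSpace ℝ (Fin r) => (⟪z, l (k+1) - ls⟫ : ℝ)) (hiii k)
      simp only [real_inner_smul_left] at h
      linarith [h]
    -- (H11)
    have h11 : (⟪A (v (k+1)) + B (w (k+1)) - b, l (k+1) - ls⟫ : ℝ)
        = ⟪l (k+1), A (v (k+1))⟫ + ⟪l (k+1), B (w (k+1))⟫ - ⟪l (k+1), b⟫
          - ⟪ls, A (v (k+1)) + B (w (k+1)) - b⟫ := by
      simp only [inner_sub_left, inner_add_left, inner_sub_right, inner_add_right,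
        real_inner_comm (A (v (k+1))), real_inner_comm (B (w (k+1))), real_inner_comm b]
      try ring
    have h11a : α k * ⟪A (v (k+1)) + B (w (k+1)) - b, l (k+1) - ls⟫
        = α k * ⟪l (k+1), A (v (k+1))⟫ + α k * ⟪l (k+1), B (w (k+1))⟫ - α k * ⟪l (k+1), b⟫
          - α k * ⟪ls, A (v (k+1)) + B (w (k+1)) - b⟫ := by
      linear_combination (α k) * h11
    -- (H12)
    have h12 : (⟪l (k+1), A xs⟫ : ℝ) + ⟪l (k+1), B ys⟫ = ⟪l (k+1), b⟫ := by
      have h := congrArg (fun z : EuclideanSpace ℝ (Fin r) => (⟪l (k+1), z⟫ : ℝ)) hfeas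
      simp only [inner_add_right] at h
      linarith [h]
    have h12a : α k * ⟪l (k+1), A xs⟫ + α k * ⟪l (k+1), B ys⟫ = α k * ⟪l (k+1), b⟫ := by
      linear_combination (α k) * h12
    -- polarization identities, pre-scaled
    have h13θ : θ k * ⟪l (k+1) - l k, l (k+1) - ls⟫
        = θ k * ((‖l (k+1) - ls‖^2 + ‖l (k+1) - l k‖^2 - ‖l k - ls‖^2)/2) := by
      linear_combination (θ k) * polar1 (l (k+1)) (l k) ls
    have h14x : ⟪v (k+1) - v k, xs - v (k+1)⟫
        = -⟪v (k+1) - v k, v (k+1) - xs⟫ := by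
      rw [show xs - v (k+1) = -(v (k+1) - xs) from by abel, inner_neg_right]
    have h14γ : γ k * ⟪v (k+1) - v k, xs - v (k+1)⟫
        = -(γ k * ((‖v (k+1) - xs‖^2 + ‖v (k+1) - v k‖^2 - ‖v k - xs‖^2)/2)) := by
      rw [h14x, polar1 (v (k+1)) (v k) xs]; ring
    have h14y : ⟪w (k+1) - w k, ys - w (k+1)⟫
        = -⟪w (k+1) - w k, w (k+1) - ys⟫ := by
      rw [show ys - w (k+1) = -(w (k+1) - ys) from by abel, inner_neg_right]
    have h14β : β k * ⟪w (k+1) - w k, ys - w (k+1)⟫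
        = -(β k * ((‖w (k+1) - ys‖^2 + ‖w (k+1) - w k‖^2 - ‖w k - ys‖^2)/2)) := by
      rw [h14y, polar1 (w (k+1)) (w k) ys]; ring
    have h15a : α k * μf * ‖xs - x (k+1)‖^2
        = α k * μf * (‖v (k+1) - xs‖^2 - 2*⟪x (k+1) - v (k+1), xs - v (k+1)⟫
            + ‖x (k+1) - v (k+1)‖^2) := by
      linear_combination (α k * μf) * polar2 (x (k+1)) (v (k+1)) xs
    have h15b : α k * μg * ‖ys - y (k+1)‖^2
        = α k * μg * (‖w (k+1) - ys‖^2 - 2*⟪y (k+1) - w (k+1), ys - w (k+1)⟫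
            + ‖y (k+1) - w (k+1)‖^2) := by
      linear_combination (α k * μg) * polar2 (y (k+1)) (w (k+1)) ys
    -- parameter recursions, pre-scaled
    have hγ1 : (1 + α k) * γ (k+1) = γ k + α k * μf := by
      rw [hγrec k, mul_comm, div_mul_cancel₀ _ (h1α k).ne']
    have hβ1 : (1 + α k) * β (k+1) = β k + α k * μg := by
      rw [hβrec k, mul_comm, div_mul_cancel₀ _ (h1α k).ne']
    have hθ1 : (1 + α k) * θ (k+1) = θ k := by
      rw [hθrec k, mul_comm, div_mul_cancel₀ _ (h1α k).ne']
    have hγ1' : (1 + α k) * γ (k+1) * ‖v (k+1) - xs‖^2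
        = (γ k + α k * μf) * ‖v (k+1) - xs‖^2 := by
      rw [hγ1]
    have hβ1' : (1 + α k) * β (k+1) * ‖w (k+1) - ys‖^2
        = (β k + α k * μg) * ‖w (k+1) - ys‖^2 := by
      rw [hβ1]
    have hθ1' : (1 + α k) * θ (k+1) * ‖l (k+1) - ls‖^2 = θ k * ‖l (k+1) - ls‖^2 := by
      rw [hθ1]
    -- scaled copies of the strong-convexity inequalities at the saddle point
    have hfsa := mul_le_mul_of_nonneg_left hfs.le hapos.le
    have hgsa := mul_le_mul_of_nonneg_left hgs.le hapos.le
    -- nonnegativity facts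
    have hγpos : ∀ j, 0 < γ j := by
      intro j; induction j with
      | zero => exact hγ0pos
      | succ i ih =>
        rw [hγrec i]
        exact div_pos (by linarith [mul_nonneg (hα i).le hμf]) (h1α i)
    have hβpos : ∀ j, 0 < β j := by
      intro j; induction j with
      | zero => exact hβ0pos
      | succ i ih =>
        rw [hβrec i]
        exact div_pos (by linarith [mul_nonneg (hα i).le hμg]) (h1α i)
    have n1 : 0 ≤ θ k * ‖l (k+1) - l k‖^2 :=
      mul_nonneg (hθpos k).le (sq_nonneg _)
    have n2 : 0 ≤ γ k * ‖v (k+1) - v k‖^2 :=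
      mul_nonneg (hγpos k).le (sq_nonneg _)
    have n3 : 0 ≤ α k * μf * ‖x (k+1) - v (k+1)‖^2 :=
      mul_nonneg (mul_nonneg hapos.le hμf) (sq_nonneg _)
    have n4 : 0 ≤ μf * ‖x k - x (k+1)‖^2 := mul_nonneg hμf (sq_nonneg _)
    have n5 : 0 ≤ β k * ‖w (k+1) - w k‖^2 :=
      mul_nonneg (hβpos k).le (sq_nonneg _)
    have n6 : 0 ≤ α k * μg * ‖y (k+1) - w (k+1)‖^2 :=
      mul_nonneg (mul_nonneg hapos.le hμg) (sq_nonneg _)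
    have n7 : 0 ≤ μg * ‖y k - y (k+1)‖^2 := mul_nonneg hμg (sq_nonneg _)
    rw [hE (k+1), hE k]
    linarith [hf0, hfsa, hg0, hgsa, h5, h5g, h6, h6g, h9, h10, h11a, h12a, h13θ,
      h14γ, h14β, h15a, h15b, hγ1', hβ1', hθ1', n1, n2, n3, n4, n5, n6, n7]
  -- part 2: closed form for θ
  have part2 : ∀ k : ℕ, θ k = ∏ i ∈ Finset.range k, (1 + α i)⁻¹ := by
    intro k; induction k with
    | zero => simpa using hθ0
    | succ j ih =>
      rw [Finset.prod_range_succ, ← ih, hθrec j, div_eq_mul_inv]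
  -- part 3 in θ form
  have part3θ : ∀ k : ℕ, E k ≤ θ k * E 0 := by
    intro k; induction k with
    | zero => rw [hθ0]; norm_num
    | succ j ih =>
      have hk := key j
      have h := hθrec j
      rw [h, div_mul_eq_mul_div, le_div_iff₀ (h1α j)]
      nlinarith [hk, ih, h1α j]
  have hE0 : 0 ≤ E 0 := by
    have hs := hsaddle (x 0) (hxmem 0) (y 0) (hymem 0)
    have n1 : 0 ≤ γ 0 / 2 * ‖v 0 - xs‖^2 :=
      mul_nonneg (by linarith) (sq_nonneg _)
    have n2 : 0 ≤ β 0 / 2 * ‖w 0 - ys‖^2 :=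
      mul_nonneg (by linarith) (sq_nonneg _)
    have n3 : 0 ≤ θ 0 / 2 * ‖l 0 - ls‖^2 :=
      mul_nonneg (by rw [hθ0]; norm_num) (sq_nonneg _)
    rw [hE 0]
    linarith
  refine ⟨?_, part2, ?_, ?_⟩
  · intro k
    have hk := key k
    nlinarith [hk]
  · intro k
    have := part3θ k
    rwa [part2 k] at this
  · intro αmin hαmin hαge k
    have hθle : θ k ≤ ((1 + αmin) ^ k)⁻¹ := by
      rw [part2 k, ← inv_pow]
      calc ∏ i ∈ Finset.range k, (1 + α i)⁻¹
          ≤ ∏ i ∈ Finset.range k, (1 + αmin)⁻¹ := by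
            apply Finset.prod_le_prod
            · intro i _; exact inv_nonneg.mpr (by linarith [hα i])
            · intro i _
              apply inv_anti₀ (by linarith)
              linarith [hαge i]
        _ = ((1 + αmin)⁻¹) ^ k := by rw [Finset.prod_const, Finset.card_range]
    calc E k ≤ θ k * E 0 := part3θ k
      _ ≤ ((1 + αmin) ^ k)⁻¹ * E 0 := mul_le_mul_of_nonneg_right hθle hE0
end

section
/- Fix k ∈ ℕ and α_k > 0, and let θ_{k+1} = θ_k/(1+α_k), γ_{k+1} = (γ_k + α_k μ_f)/(1+α_k), β_{k+1} = (β_k + α_k μ_g)/(1+α_k) with θ_k, γ_k, β_k > 0 and μ_f, μ_g ≥ 0. Suppose one step of the corrected scheme holds with x_k, v_k ∈ X and y_k ∈ Y, and let (x*, y*, λ*) be a saddle point. Then u_k, x_{k+1}, v_{k+1} ∈ X, and E_{k+1} − E_k ≤ −α_k E_{k+1} + ((L_f α_k² θ_{k+1} − γ_k θ_k)/(2θ_k))‖v_{k+1} − v_k‖² + (θ_k/2)‖λ_{k+1} − λ̄_{k+1}‖² − (β_k/2)‖w_{k+1} − w_k‖², where E_j = f₁(x_j) + f₂(x_j) + g(y_j)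 + ⟪λ*, Ax_j + By_j − b⟫ − f₁(x*) − f₂(x*) − g(y*) + (γ_j/2)‖v_j − x*‖² + (β_j/2)‖w_j − y*‖² + (θ_j/2)‖λ_j − λ*‖² for j = k, k+1. -/
open Real
open scoped RealInnerProductSpace

private lemma three_point {E : Type*} [NormedAddCommGroup E] [InnerProductSpace ℝ E] (a b c : E) :
    ⟪a - b, a - c⟫ = (‖a - b‖^2 + ‖a - c‖^2 - ‖b - c‖^2)/2 := by
  simp only [← real_inner_self_eq_norm_sq, inner_sub_left, inner_sub_right,
    real_inner_comm b a, real_inner_comm c a, real_inner_comm c b]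
  ring

set_option maxHeartbeats 1000000 in
/-- One-iteration estimate (Lemma 4.1) for the corrected semi-implicit scheme
with composite objective `f = f₁ + f₂`, `f₁` smooth. -/
theorem corrected_scheme_one_step_estimate
    {m n r : ℕ}
    (X : Set (EuclideanSpace ℝ (Fin m))) (Y : Set (EuclideanSpace ℝ (Fin n)))
    (hXconv : Convex ℝ X) (hXclosed : IsClosed X)
    (hYconv : Convex ℝ Y) (hYclosed : IsClosed Y)
    (A : EuclideanSpace ℝ (Fin m) →L[ℝ] EuclideanSpace ℝ (Fin r))
    (B : EuclideanSpace ℝ (Fin n) →L[ℝ] EuclideanSpace ℝ (Fin r))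
    (b : EuclideanSpace ℝ (Fin r))
    (f₁ f₂ : EuclideanSpace ℝ (Fin m) → ℝ) (g : EuclideanSpace ℝ (Fin n) → ℝ)
    (hf₁conv : ConvexOn ℝ Set.univ f₁) (hf₂conv : ConvexOn ℝ Set.univ f₂)
    (hgconv : ConvexOn ℝ Set.univ g)
    (μf μg Lf : ℝ) (hμf : 0 ≤ μf) (hμg : 0 ≤ μg) (hμfLf : μf ≤ Lf)
    (f₁' : EuclideanSpace ℝ (Fin m) → EuclideanSpace ℝ (Fin m))
    (hf₁' : ∀ z, HasGradientAt f₁ (f₁' z) z)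
    (hf₁bounds : ∀ x₁ ∈ X, ∀ x₂ ∈ X,
      μf / 2 * ‖x₁ - x₂‖ ^ 2 ≤ f₁ x₁ - f₁ x₂ - ⟪f₁' x₂, x₁ - x₂⟫ ∧
      f₁ x₁ - f₁ x₂ - ⟪f₁' x₂, x₁ - x₂⟫ ≤ Lf / 2 * ‖x₁ - x₂‖ ^ 2)
    -- parameters of the step
    (αk θk γk βk θk1 γk1 βk1 : ℝ)
    (hαk : 0 < αk) (hθk : 0 < θk) (hγk : 0 < γk) (hβk : 0 < βk)
    (hθk1 : θk1 = θk / (1 + αk))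
    (hγk1 : γk1 = (γk + αk * μf) / (1 + αk))
    (hβk1 : βk1 = (βk + αk * μg) / (1 + αk))
    -- the iterates of one step of the corrected scheme
    (xk xk1 vk vk1 uk : EuclideanSpace ℝ (Fin m))
    (yk yk1 wk wk1 : EuclideanSpace ℝ (Fin n))
    (lk lk1 lbar : EuclideanSpace ℝ (Fin r))
    (hxk : xk ∈ X) (hvk : vk ∈ X) (hyk : yk ∈ Y) (hyk1 : yk1 ∈ Y)
    (huk : uk = (1 + αk)⁻¹ • (xk + αk • vk))
    -- (i)
    (hi : vk1 ∈ X ∧ ∃ s : EuclideanSpace ℝ (Fin m),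
      (γk / αk) • (vk1 - vk) = μf • (uk - vk1) - f₁' uk - A.adjoint lbar - s ∧
      ∀ z ∈ X, f₂ z ≥ f₂ vk1 + ⟪s, z - vk1⟫)
    -- (ii)
    (hii : xk1 - xk = αk • (vk1 - xk1))
    -- (iii)
    (hiii : θk • (lk1 - lk) = αk • (A vk1 + B wk1 - b))
    -- (iv)
    (hiv : ∀ z ∈ Y,
      g z + ⟪lbar, B z⟫ ≥
        g yk1 + ⟪lbar, B yk1⟫
          + ⟪μg • (yk1 - wk1) - (βk / αk) • (wk1 - wk), z - yk1⟫
          + μg / 2 * ‖z - yk1‖ ^ 2)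
    -- (v)
    (hv : yk1 - yk = αk • (wk1 - yk1))
    -- saddle point
    (xs : EuclideanSpace ℝ (Fin m)) (ys : EuclideanSpace ℝ (Fin n))
    (ls : EuclideanSpace ℝ (Fin r))
    (hxs : xs ∈ X) (hys : ys ∈ Y) (hfeas : A xs + B ys = b)
    (hsaddle : ∀ x ∈ X, ∀ y ∈ Y,
      f₁ x + f₂ x + g y + ⟪ls, A x + B y - b⟫ ≥ f₁ xs + f₂ xs + g ys)
    -- Lyapunov values
    (Ek Ek1 : ℝ)
    (hEk : Ek = f₁ xk + f₂ xk + g yk + ⟪ls, A xk + B yk - b⟫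
      - f₁ xs - f₂ xs - g ys
      + γk / 2 * ‖vk - xs‖ ^ 2 + βk / 2 * ‖wk - ys‖ ^ 2 + θk / 2 * ‖lk - ls‖ ^ 2)
    (hEk1 : Ek1 = f₁ xk1 + f₂ xk1 + g yk1 + ⟪ls, A xk1 + B yk1 - b⟫
      - f₁ xs - f₂ xs - g ys
      + γk1 / 2 * ‖vk1 - xs‖ ^ 2 + βk1 / 2 * ‖wk1 - ys‖ ^ 2 + θk1 / 2 * ‖lk1 - ls‖ ^ 2) :
    uk ∈ X ∧ xk1 ∈ X ∧ vk1 ∈ X ∧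
    Ek1 - Ek ≤ -αk * Ek1
      + (Lf * αk ^ 2 * θk1 - γk * θk) / (2 * θk) * ‖vk1 - vk‖ ^ 2
      + θk / 2 * ‖lk1 - lbar‖ ^ 2 - βk / 2 * ‖wk1 - wk‖ ^ 2 := by

  have h1a : (0:ℝ) < 1 + αk := by linarith
  set c : ℝ := (1 + αk)⁻¹ * αk with hcdef
  have hc : (1 + αk) * c = αk := by rw [hcdef]; field_simp
  have hc0 : 0 ≤ c := by positivity
  -- convex combinations
  have hcomb : ∀ p q : EuclideanSpace ℝ (Fin m), p ∈ X → q ∈ X →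
      (1 + αk)⁻¹ • (p + αk • q) ∈ X := by
    intro p q hp hq
    have h := hXconv hp hq (a := (1+αk)⁻¹) (b := c) (by positivity) hc0
      (by rw [hcdef]; field_simp)
    have heq : (1+αk)⁻¹ • (p + αk • q) = (1+αk)⁻¹ • p + c • q := by
      rw [smul_add, smul_smul]
    rwa [heq]
  have hukX : uk ∈ X := huk ▸ hcomb xk vk hxk hvk
  obtain ⟨hv1X, s, hseq, hsub⟩ := hi
  -- vector identities
  have V2 : (1 + αk) • xk1 = xk + αk • vk1 := by
    linear_combination (norm := module) hii
  have V1 : (1 + αk) • uk = xk + αk • vk := by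
    rw [huk, smul_smul, mul_inv_cancel₀ h1a.ne', one_smul]
  have hx1e : xk1 = (1+αk)⁻¹ • (xk + αk • vk1) := by
    rw [← V2, smul_smul, inv_mul_cancel₀ h1a.ne', one_smul]
  have hx1X : xk1 ∈ X := hx1e ▸ hcomb xk vk1 hxk hv1X
  refine ⟨hukX, hx1X, hv1X, ?_⟩

  have V3 : xk1 - uk = c • (vk1 - vk) := by
    refine smul_right_injective _ h1a.ne' ?_
    show (1 + αk) • (xk1 - uk) = (1 + αk) • (c • (vk1 - vk))
    rw [smul_smul, hc, smul_sub (1+αk), V2, V1]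
    rw [smul_sub]
    abel
  have V4 : (xk - uk) + αk • (xs - uk) = αk • (xs - vk) := by
    linear_combination (norm := module) -V1
  have V5 : (1 + αk) • yk1 = yk + αk • wk1 := by
    linear_combination (norm := module) hv
  have V6 : (yk - yk1) + αk • (ys - yk1) = αk • (ys - wk1) := by
    linear_combination (norm := module) -hv
  -- scalar facts for the primal part
  have e1 : ⟪f₁' uk, xk1 - uk⟫ = c * ⟪f₁' uk, vk1 - vk⟫ := by
    rw [V3, real_inner_smul_right]
  have e2 : ‖xk1 - uk‖^2 = c^2 * ‖vk1 - vk‖^2 := by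
    rw [V3, norm_smul, mul_pow, Real.norm_eq_abs, sq_abs]
  have s1 : f₁ xk1 ≤ f₁ uk + c * ⟪f₁' uk, vk1 - vk⟫ + Lf/2 * c^2 * ‖vk1 - vk‖^2 := by
    have h := (hf₁bounds xk1 hx1X uk hukX).2
    rw [e1, e2] at h; linarith
  have s1' := mul_le_mul_of_nonneg_left s1 h1a.le
  have s2 : f₁ uk + ⟪f₁' uk, xk - uk⟫ ≤ f₁ xk := by
    have h := (hf₁bounds xk hxk uk hukX).1
    have hnn : 0 ≤ μf/2 * ‖xk - uk‖^2 := by positivity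
    linarith
  have s3 : f₁ uk + ⟪f₁' uk, xs - uk⟫ + μf/2 * ‖uk - xs‖^2 ≤ f₁ xs := by
    have h := (hf₁bounds xs hxs uk hukX).1
    rw [norm_sub_rev] at h; linarith
  have s3' := mul_le_mul_of_nonneg_left s3 hαk.le
  have s4 : ⟪f₁' uk, xk - uk⟫ + αk * ⟪f₁' uk, xs - uk⟫ = αk * ⟪f₁' uk, xs - vk⟫ := by
    have h := congrArg (fun z => ⟪f₁' uk, z⟫) V4
    simp only [inner_add_right, real_inner_smul_right] at h
    exact h
  have s5 : (1 + αk) * f₂ xk1 ≤ f₂ xk + αk * f₂ vk1 := by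
    have hxe : (1+αk)⁻¹ • xk + c • vk1 = xk1 := by rw [hx1e, smul_add, smul_smul]
    have hcv := hf₂conv.2 (Set.mem_univ xk) (Set.mem_univ vk1)
      (inv_nonneg.2 h1a.le) hc0 (by rw [hcdef]; field_simp)
    rw [hxe] at hcv
    simp only [smul_eq_mul] at hcv
    have h2 := mul_le_mul_of_nonneg_left hcv h1a.le
    have h3 : (1+αk) * ((1+αk)⁻¹ * f₂ xk + c * f₂ vk1) = f₂ xk + αk * f₂ vk1 := by
      rw [hcdef]; field_simp
    linarith
  have s6 : αk * (f₂ vk1 + ⟪s, xs - vk1⟫) ≤ αk * f₂ xs :=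
    mul_le_mul_of_nonneg_left (hsub xs hxs) hαk.le
  have s8 : αk * ⟪s, xs - vk1⟫ = -(αk * ⟪s, vk1 - xs⟫) := by
    have h : ⟪s, xs - vk1⟫ = -⟪s, vk1 - xs⟫ := by
      rw [show xs - vk1 = -(vk1 - xs) by abel, inner_neg_right]
    rw [h]; ring
  have s9 : αk * ⟪f₁' uk, vk1 - xs⟫ = αk * ⟪f₁' uk, vk1 - vk⟫ - αk * ⟪f₁' uk, xs - vk⟫ := by
    have h : ⟪f₁' uk, vk1 - xs⟫ = ⟪f₁' uk, vk1 - vk⟫ - ⟪f₁' uk, xs - vk⟫ := by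
      rw [← inner_sub_right]; congr 1; abel
    rw [h]; ring
  have s7 : γk * ⟪vk1 - vk, vk1 - xs⟫ = αk * (μf * ⟪uk - vk1, vk1 - xs⟫)
      - αk * ⟪f₁' uk, vk1 - xs⟫ - αk * ⟪lbar, A vk1⟫ + αk * ⟪lbar, A xs⟫
      - αk * ⟪s, vk1 - xs⟫ := by
    have h := congrArg (fun z => ⟪z, vk1 - xs⟫) hseq
    simp only [inner_sub_left, inner_sub_right, inner_add_left, inner_add_right,
      real_inner_smul_left, real_inner_smul_right, map_sub,
      ContinuousLinearMap.adjoint_inner_left] at h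
    simp only [inner_sub_left, inner_sub_right, inner_add_left, inner_add_right,
      real_inner_smul_left, real_inner_smul_right]
    rw [div_mul_eq_mul_div, div_mul_eq_mul_div, div_sub_div_same, div_eq_iff hαk.ne'] at h
    linear_combination h
  have T1' : γk * ⟪vk1 - vk, vk1 - xs⟫
      = γk * ((‖vk1 - vk‖^2 + ‖vk1 - xs‖^2 - ‖vk - xs‖^2)/2) := by
    linear_combination γk * three_point vk1 vk xs
  have T2' : αk * (μf * ⟪uk - vk1, vk1 - xs⟫)
      = αk * (μf * (-((‖vk1 - uk‖^2 + ‖vk1 - xs‖^2 - ‖uk - xs‖^2)/2))) := by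
    have hneg : ⟪uk - vk1, vk1 - xs⟫ = -⟪vk1 - uk, vk1 - xs⟫ := by
      rw [show uk - vk1 = -(vk1 - uk) by abel, inner_neg_left]
    rw [hneg, three_point]
  have pos1 : 0 ≤ αk * (μf * (‖vk1 - uk‖^2 / 2)) := by positivity
  have HP : (1+αk) * (f₁ xk1 + f₂ xk1) + (γk + αk*μf)/2 * ‖vk1 - xs‖^2 ≤
      f₁ xk + f₂ xk + γk/2 * ‖vk - xs‖^2 + αk * (f₁ xs + f₂ xs)
      - αk * ⟪lbar, A vk1⟫ + αk * ⟪lbar, A xs⟫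
      + (Lf/2*(αk*c) - γk/2) * ‖vk1 - vk‖^2 := by
    have g1' : (1+αk) * (c * ⟪f₁' uk, vk1 - vk⟫) = αk * ⟪f₁' uk, vk1 - vk⟫ := by
      linear_combination ⟪f₁' uk, vk1 - vk⟫ * hc
    have g2' : (1+αk) * (Lf/2 * c^2 * ‖vk1 - vk‖^2) = Lf/2*(αk*c) * ‖vk1 - vk‖^2 := by
      linear_combination (Lf/2 * c * ‖vk1 - vk‖^2) * hc
    linarith [s1', s2, s3', s4, s5, s6, s7, s8, s9, T1', T2', pos1, g1', g2']

  -- dual (g) part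
  have d1 := hiv yk hyk
  have d2 := hiv ys hys
  have d2' := mul_le_mul_of_nonneg_left d2 hαk.le
  -- combine the q-inner-product terms
  have q4 : ⟪μg • (yk1 - wk1) - (βk / αk) • (wk1 - wk), yk - yk1⟫
      + αk * ⟪μg • (yk1 - wk1) - (βk / αk) • (wk1 - wk), ys - yk1⟫
      = αk * ⟪μg • (yk1 - wk1) - (βk / αk) • (wk1 - wk), ys - wk1⟫ := by
    have h := congrArg (fun z => ⟪μg • (yk1 - wk1) - (βk / αk) • (wk1 - wk), z⟫) V6
    simp only [inner_add_right, real_inner_smul_right] at h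
    exact h
  have q5 : αk * ⟪μg • (yk1 - wk1) - (βk / αk) • (wk1 - wk), ys - wk1⟫
      = αk * (μg * ⟪yk1 - wk1, ys - wk1⟫) - βk * ⟪wk1 - wk, ys - wk1⟫ := by
    have h : ⟪μg • (yk1 - wk1) - (βk / αk) • (wk1 - wk), ys - wk1⟫
        = μg * ⟪yk1 - wk1, ys - wk1⟫ - βk / αk * ⟪wk1 - wk, ys - wk1⟫ := by
      simp only [inner_sub_left, real_inner_smul_left]
    rw [h]
    field_simp
  have T3' : βk * ⟪wk1 - wk, ys - wk1⟫
      = -(βk * ((‖wk1 - wk‖^2 + ‖wk1 - ys‖^2 - ‖wk - ys‖^2)/2)) := by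
    have hneg : ⟪wk1 - wk, ys - wk1⟫ = -⟪wk1 - wk, wk1 - ys⟫ := by
      rw [show ys - wk1 = -(wk1 - ys) by abel, inner_neg_right]
    rw [hneg, three_point]
    ring
  have T4' : αk * (μg * ⟪yk1 - wk1, ys - wk1⟫)
      = αk * (μg * ((‖wk1 - yk1‖^2 + ‖wk1 - ys‖^2 - ‖yk1 - ys‖^2)/2)) := by
    have hneg : ⟪yk1 - wk1, ys - wk1⟫ = ⟪wk1 - yk1, wk1 - ys⟫ := by
      rw [show yk1 - wk1 = -(wk1 - yk1) by abel, show ys - wk1 = -(wk1 - ys) by abel,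
        inner_neg_neg]
    rw [hneg, three_point]
  have eBy : (1 + αk) * ⟪lbar, B yk1⟫ = ⟪lbar, B yk⟫ + αk * ⟪lbar, B wk1⟫ := by
    have h := congrArg (fun z => ⟪lbar, B z⟫) V5
    simp only [map_add, map_smul, inner_add_right, inner_smul_right,
      real_inner_smul_right] at h
    linarith [h]
  have dny : 0 ≤ μg / 2 * ‖yk - yk1‖^2 := by positivity
  have dnys : αk * (μg / 2 * ‖ys - yk1‖^2) = αk * (μg / 2 * ‖yk1 - ys‖^2) := by
    rw [norm_sub_rev]
  have pos2 : 0 ≤ αk * (μg * (‖wk1 - yk1‖^2 / 2)) := by positivity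
  have HD : (1+αk) * g yk1 + (βk + αk*μg)/2 * ‖wk1 - ys‖^2 ≤
      g yk + βk/2 * ‖wk - ys‖^2 + αk * g ys
      + αk * ⟪lbar, B ys⟫ - αk * ⟪lbar, B wk1⟫ - βk/2 * ‖wk1 - wk‖^2 := by
    linarith [d1, d2', q4, q5, T3', T4', eBy, dny, dnys, pos2]

  -- multiplier part
  have L1 : θk * ⟪lk1 - lk, lk1 - ls⟫ - θk * ⟪lk1 - lk, lk1 - lbar⟫
      = θk * ⟪lk1 - lk, lbar - ls⟫ := by
    have h : ⟪lk1 - lk, lk1 - ls⟫ - ⟪lk1 - lk, lk1 - lbar⟫ = ⟪lk1 - lk, lbar - ls⟫ := by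
      rw [← inner_sub_right]; congr 1; abel
    linear_combination θk * h
  have L2 : θk * ⟪lk1 - lk, lbar - ls⟫
      = αk * ⟪lbar, A vk1⟫ + αk * ⟪lbar, B wk1⟫ - αk * ⟪lbar, b⟫
      - αk * ⟪ls, A vk1⟫ - αk * ⟪ls, B wk1⟫ + αk * ⟪ls, b⟫ := by
    have h := congrArg (fun z => ⟪z, lbar - ls⟫) hiii
    simp only [real_inner_smul_left, inner_sub_left, inner_add_left, inner_sub_right] at h
    simp only [real_inner_smul_left, inner_sub_left, inner_add_left, inner_sub_right]
    linear_combination h + αk * real_inner_comm lbar (A vk1) + αk * real_inner_comm lbar (B wk1)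
      - αk * real_inner_comm lbar b - αk * real_inner_comm ls (A vk1)
      - αk * real_inner_comm ls (B wk1) + αk * real_inner_comm ls b
  have T5' : θk * ⟪lk1 - lk, lk1 - ls⟫
      = θk * ((‖lk1 - lk‖^2 + ‖lk1 - ls‖^2 - ‖lk - ls‖^2)/2) := by
    linear_combination θk * three_point lk1 lk ls
  have T6' : θk * ⟪lk1 - lk, lk1 - lbar⟫
      = θk * ((‖lk1 - lk‖^2 + ‖lk1 - lbar‖^2 - ‖lk - lbar‖^2)/2) := by
    linear_combination θk * three_point lk1 lk lbar
  have pos3 : 0 ≤ θk/2 * ‖lk - lbar‖^2 := by positivity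
  have HL : θk/2 * ‖lk1 - ls‖^2 - θk/2 * ‖lk - ls‖^2
      + αk * ⟪ls, A vk1⟫ + αk * ⟪ls, B wk1⟫ - αk * ⟪ls, b⟫
      - αk * ⟪lbar, A vk1⟫ - αk * ⟪lbar, B wk1⟫ + αk * ⟪lbar, b⟫
      ≤ θk/2 * ‖lk1 - lbar‖^2 := by
    linarith [L1, L2, T5', T6', pos3]
  -- Lagrangian linear-term bookkeeping
  have ex0 : ⟪ls, A xk + B yk - b⟫ = ⟪ls, A xk⟫ + ⟪ls, B yk⟫ - ⟪ls, b⟫ := by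
    rw [inner_sub_right, inner_add_right]
  have ex1 : ⟪ls, A xk1 + B yk1 - b⟫ = ⟪ls, A xk1⟫ + ⟪ls, B yk1⟫ - ⟪ls, b⟫ := by
    rw [inner_sub_right, inner_add_right]
  have ex1' : αk * ⟪ls, A xk1 + B yk1 - b⟫
      = αk * (⟪ls, A xk1⟫ + ⟪ls, B yk1⟫ - ⟪ls, b⟫) := by
    linear_combination αk * ex1
  have hax : (1 + αk) * ⟪ls, A xk1⟫ = ⟪ls, A xk⟫ + αk * ⟪ls, A vk1⟫ := by
    have h := congrArg (fun z => ⟪ls, A z⟫) V2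
    simp only [map_add, map_smul, inner_add_right, inner_smul_right,
      real_inner_smul_right] at h
    linarith [h]
  have hby : (1 + αk) * ⟪ls, B yk1⟫ = ⟪ls, B yk⟫ + αk * ⟪ls, B wk1⟫ := by
    have h := congrArg (fun z => ⟪ls, B z⟫) V5
    simp only [map_add, map_smul, inner_add_right, inner_smul_right,
      real_inner_smul_right] at h
    linarith [h]
  have hfl : αk * ⟪lbar, A xs⟫ + αk * ⟪lbar, B ys⟫ = αk * ⟪lbar, b⟫ := by
    have h : ⟪lbar, A xs⟫ + ⟪lbar, B ys⟫ = ⟪lbar, b⟫ := by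
      rw [← inner_add_right, hfeas]
    linear_combination αk * h
  -- coefficient bookkeeping
  have hgl1 : (1+αk) * (γk1/2 * ‖vk1 - xs‖^2) = (γk + αk*μf)/2 * ‖vk1 - xs‖^2 := by
    rw [hγk1]; field_simp
  have hgl2 : (1+αk) * (βk1/2 * ‖wk1 - ys‖^2) = (βk + αk*μg)/2 * ‖wk1 - ys‖^2 := by
    rw [hβk1]; field_simp
  have hgl3 : (1+αk) * (θk1/2 * ‖lk1 - ls‖^2) = θk/2 * ‖lk1 - ls‖^2 := by
    rw [hθk1]; field_simp
  have hgl4 : (Lf * αk^2 * θk1 - γk*θk)/(2*θk) * ‖vk1 - vk‖^2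
      = (Lf/2*(αk*c) - γk/2) * ‖vk1 - vk‖^2 := by
    rw [hθk1, hcdef]; field_simp
  subst hEk hEk1
  linarith [HP, HD, HL, ex0, ex1, ex1', hax, hby, hfl, hgl1, hgl2, hgl3, hgl4]
end
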